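/- arXiv:2208.03675 — 7 statements merged into one kernel-verified Lean document; each statement's English description precedes it below -/
import Mathlib

section
/- Let μ and ν be probability measures on a measurable space E and let φ : E → H be a measurable map such that ∫‖φ‖ dμ < ∞, ∫‖φ‖ dν < ∞, and the function (x, x′) ↦ ⟪φ(x), φ(x′)⟫ is integrable with respect to each of the product measures μ⊗μ, ν⊗ν and μ⊗ν. Then the squared maximum mean discrepancy satisfies ‖∫ φ dμ − ∫ φ dν‖² = ∫∫ k(x, x′) dμ(x) dμ(x′) + ∫∫ k(y, y′) dν(y) dν(y′) − 2 ∫∫ k(x, y) dμ(x) dν(y), where k(x, y) := ⟪φ(x), φ(y)⟫ and the vector-valued integrals are Bochner integrals in H. -/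
open MeasureTheory
open scoped InnerProductSpace

lemma double_integral_inner_eq
    {E H : Type*} [MeasurableSpace E]
    [NormedAddCommGroup H] [InnerProductSpace ℝ H] [CompleteSpace H]
    (σ ρ : Measure E)
    (φ : E → H) (hφσ : Integrable φ σ) (hφρ : Integrable φ ρ) :
    (∫ x, ∫ y, ⟪φ x, φ y⟫_ℝ ∂ρ ∂σ) = ⟪∫ x, φ x ∂σ, ∫ y, φ y ∂ρ⟫_ℝ := by
  have h1 : ∀ x, (∫ y, ⟪φ x, φ y⟫_ℝ ∂ρ) = ⟪φ x, ∫ y, φ y ∂ρ⟫_ℝ := fun x =>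
    integral_inner hφρ (φ x)
  simp_rw [h1]
  have h2 : ∀ x, ⟪φ x, ∫ y, φ y ∂ρ⟫_ℝ = ⟪(∫ y, φ y ∂ρ), φ x⟫_ℝ := fun x =>
    real_inner_comm _ _
  simp_rw [h2, integral_inner hφσ, real_inner_comm]

/-- Squared maximum mean discrepancy between two probability measures expressed via the
kernel `k(x, y) = ⟪φ x, φ y⟫`. -/
theorem mmd_sq_eq_kernel_integrals
    {E H : Type*} [MeasurableSpace E]
    [NormedAddCommGroup H] [InnerProductSpace ℝ H] [CompleteSpace H]
    (μ ν : Measure E) [IsProbabilityMeasure μ] [IsProbabilityMeasure ν]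
    (φ : E → H)
    (hφμ : Integrable φ μ) (hφν : Integrable φ ν)
    (hμμ : Integrable (fun p : E × E => ⟪φ p.1, φ p.2⟫_ℝ) (μ.prod μ))
    (hνν : Integrable (fun p : E × E => ⟪φ p.1, φ p.2⟫_ℝ) (ν.prod ν))
    (hμν : Integrable (fun p : E × E => ⟪φ p.1, φ p.2⟫_ℝ) (μ.prod ν)) :
    ‖(∫ x, φ x ∂μ) - ∫ y, φ y ∂ν‖ ^ 2 =
      (∫ x, ∫ x', ⟪φ x, φ x'⟫_ℝ ∂μ ∂μ) + (∫ y, ∫ y', ⟪φ y, φ y'⟫_ℝ ∂ν ∂ν)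
        - 2 * ∫ x, ∫ y, ⟪φ x, φ y⟫_ℝ ∂ν ∂μ := by
  rw [double_integral_inner_eq μ μ φ hφμ hφμ, double_integral_inner_eq ν ν φ hφν hφν,
    double_integral_inner_eq μ ν φ hφμ hφν]
  set a := ∫ x, φ x ∂μ
  set b := ∫ y, φ y ∂ν
  rw [@norm_sub_sq_real, ← real_inner_self_eq_norm_sq, ← real_inner_self_eq_norm_sq]
  ring
end

section
/- (Lemma 1.) Let E be a measurable space, φ : E → H a measurable map, and φ_1, …, φ_m : E → H measurable maps satisfying the domination condition ‖φ_j(x) − φ_j(y)‖ ≤ ‖φ(x) − φ(y)‖ for all j ∈ {1, …, m} and all x, y ∈ E. Let μ and η be probability measures on E such that ∫‖φ_j‖² dμ < ∞ and ∫‖φ_j‖² dη < ∞ for each j. Then for every choice of centers c = (c_1, …, c_m) ∈ H^m, |√W((φ_j), c, μ) − √W((φ_j), c, η)| ≤ γ_φ(μ, η), where the left-hand side is the (finite, real) absolute difference viewed in [0, ∞]. -/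
open MeasureTheory
open scoped ENNReal

/-- A coupling of `(μ, η)`: a probability measure on `E × E` whose marginals are `μ`, `η`. -/
def IsCoupling {E : Type*} [MeasurableSpace E]
    (π : Measure (E × E)) (μ η : Measure E) : Prop :=
  IsProbabilityMeasure π ∧ π.map Prod.fst = μ ∧ π.map Prod.snd = η

/-- The kernel Wasserstein-type distance `γ_φ(μ, η)`: square root of the infimum over
couplings `π` of `(μ, η)` of `∫ ‖φ(x) − φ(y)‖² dπ(x, y)`, valued in `[0, ∞]`. -/
noncomputable def gammaK {E H : Type*} [MeasurableSpace E] [NormedAddCommGroup H]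
    (φ : E → H) (μ η : Measure E) : ℝ≥0∞ :=
  (⨅ π : {π : Measure (E × E) // IsCoupling π μ η},
      ∫⁻ p, ENNReal.ofReal (‖φ p.1 - φ p.2‖ ^ 2) ∂π.1) ^ (1 / 2 : ℝ)

/-- Clustering risk `W((φ_j), c, μ) = ∫ min_{1 ≤ j ≤ m} ‖φ_j(x) − c_j‖² dμ(x)`. -/
noncomputable def clusterRisk {E H : Type*} [MeasurableSpace E] [NormedAddCommGroup H]
    {m : ℕ} (φs : Fin m → E → H) (c : Fin m → H) (μ : Measure E) : ℝ :=
  ∫ x, (⨅ j : Fin m, ‖φs j x - c j‖ ^ 2) ∂μ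

section Aux

variable {E H : Type*} [MeasurableSpace E]
    [NormedAddCommGroup H]
    [MeasurableSpace H] [BorelSpace H]
    {m : ℕ}

/-- Pointwise: the inf of squares is the square of the inf. -/
lemma iInf_sq_eq (hm : 0 < m) (φs : Fin m → E → H) (c : Fin m → H) (x : E) :
    (⨅ j : Fin m, ‖φs j x - c j‖ ^ 2) = (⨅ j : Fin m, ‖φs j x - c j‖) ^ 2 := by
  haveI : Nonempty (Fin m) := ⟨⟨0, hm⟩⟩
  have hbdd : BddBelow (Set.range fun j : Fin m => ‖φs j x - c j‖) :=
    Set.Finite.bddBelow (Set.finite_range _)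
  have hbdd2 : BddBelow (Set.range fun j : Fin m => ‖φs j x - c j‖ ^ 2) :=
    Set.Finite.bddBelow (Set.finite_range _)
  have hnn : 0 ≤ ⨅ j : Fin m, ‖φs j x - c j‖ := le_ciInf fun j => norm_nonneg _
  obtain ⟨j0, hj0⟩ := exists_eq_ciInf_of_finite (f := fun j : Fin m => ‖φs j x - c j‖)
  refine le_antisymm ?_ ?_
  · calc (⨅ j : Fin m, ‖φs j x - c j‖ ^ 2) ≤ ‖φs j0 x - c j0‖ ^ 2 := ciInf_le hbdd2 j0
      _ = (⨅ j : Fin m, ‖φs j x - c j‖) ^ 2 := by rw [hj0]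
  · exact le_ciInf fun j => pow_le_pow_left₀ hnn (ciInf_le hbdd j) 2

/-- The min-distance function is measurable. -/
lemma g_measurable (φs : Fin m → E → H) (hφs : ∀ j, Measurable (φs j)) (c : Fin m → H) :
    Measurable fun x => ⨅ j : Fin m, ‖φs j x - c j‖ :=
  Measurable.iInf fun j =>
    ((continuous_id.sub continuous_const).norm.measurable).comp (hφs j)

end Aux

/-- Lemma 1: under the domination condition `‖φ_j(x) − φ_j(y)‖ ≤ ‖φ(x) − φ(y)‖`, the square
roots of the clustering risks of two probability measures differ by at most `γ_φ(μ, η)`. -/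
theorem abs_sub_sqrt_clusterRisk_le_gammaK
    {E H : Type*} [MeasurableSpace E]
    [NormedAddCommGroup H] [InnerProductSpace ℝ H] [CompleteSpace H]
    [MeasurableSpace H] [BorelSpace H]
    {m : ℕ} (hm : 0 < m)
    (φ : E → H) (hφ : Measurable φ)
    (φs : Fin m → E → H) (hφs : ∀ j, Measurable (φs j))
    (hdom : ∀ (j : Fin m) (x y : E), ‖φs j x - φs j y‖ ≤ ‖φ x - φ y‖)
    (μ η : Measure E) [IsProbabilityMeasure μ] [IsProbabilityMeasure η]
    (hμint : ∀ j, Integrable (fun x => ‖φs j x‖ ^ 2) μ)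
    (hηint : ∀ j, Integrable (fun x => ‖φs j x‖ ^ 2) η)
    (c : Fin m → H) :
    ENNReal.ofReal
        |Real.sqrt (clusterRisk φs c μ) - Real.sqrt (clusterRisk φs c η)| ≤
      gammaK φ μ η := by
  haveI : Nonempty (Fin m) := ⟨⟨0, hm⟩⟩
  set j0 : Fin m := ⟨0, hm⟩ with hj0def
  set g : E → ℝ := fun x => ⨅ j : Fin m, ‖φs j x - c j‖ with hgdef
  have hg_nonneg : ∀ x, 0 ≤ g x := fun x => le_ciInf fun j => norm_nonneg _
  have hg_meas : Measurable g := g_measurable φs hφs c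
  have hbdd : ∀ x, BddBelow (Set.range fun j : Fin m => ‖φs j x - c j‖) := fun x =>
    Set.Finite.bddBelow (Set.finite_range _)
  -- Lipschitz-type bound
  have hkey : ∀ x y, g x ≤ g y + ‖φ x - φ y‖ := by
    intro x y
    rw [← sub_le_iff_le_add]
    refine le_ciInf fun j => ?_
    rw [sub_le_iff_le_add]
    calc g x ≤ ‖φs j x - c j‖ := ciInf_le (hbdd x) j
      _ ≤ ‖φs j x - φs j y‖ + ‖φs j y - c j‖ := norm_sub_le_norm_sub_add_norm_sub _ _ _
      _ ≤ ‖φ x - φ y‖ + ‖φs j y - c j‖ := by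
          gcongr; exact hdom j x y
      _ = ‖φs j y - c j‖ + ‖φ x - φ y‖ := by ring
  have hlip : ∀ x y, |g x - g y| ≤ ‖φ x - φ y‖ := by
    intro x y
    rw [abs_sub_le_iff]
    constructor
    · have := hkey x y; linarith
    · have := hkey y x
      rw [norm_sub_rev] at this; linarith
  -- integrability of g²
  have hg_sq_int : ∀ (ν : Measure E), IsProbabilityMeasure ν →
      (∀ j, Integrable (fun x => ‖φs j x‖ ^ 2) ν) →
      Integrable (fun x => g x ^ 2) ν := by
    intro ν hν hint
    have hb : Integrable (fun x => 2 * ‖φs j0 x‖ ^ 2 + 2 * ‖c j0‖ ^ 2) ν :=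
      ((hint j0).const_mul 2).add (integrable_const _)
    refine hb.mono' ((hg_meas.pow_const 2).aestronglyMeasurable) ?_
    refine Filter.Eventually.of_forall fun x => ?_
    have h1 : g x ≤ ‖φs j0 x - c j0‖ := ciInf_le (hbdd x) j0
    have h2 : ‖φs j0 x - c j0‖ ≤ ‖φs j0 x‖ + ‖c j0‖ := norm_sub_le _ _
    have h3 : g x ^ 2 ≤ (‖φs j0 x‖ + ‖c j0‖) ^ 2 :=
      pow_le_pow_left₀ (hg_nonneg x) (h1.trans h2) 2
    rw [Real.norm_eq_abs, abs_of_nonneg (sq_nonneg _)]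
    nlinarith [sq_nonneg (‖φs j0 x‖ - ‖c j0‖), h3]
  -- sqrt of clusterRisk equals toReal of eLpNorm
  have hsqrt : ∀ (ν : Measure E), IsProbabilityMeasure ν →
      Integrable (fun x => g x ^ 2) ν →
      Real.sqrt (clusterRisk φs c ν) = (eLpNorm g 2 ν).toReal := by
    intro ν hν hint
    have h1 : clusterRisk φs c ν = ∫ x, g x ^ 2 ∂ν := by
      unfold clusterRisk
      exact integral_congr_ae (Filter.Eventually.of_forall fun x => iInf_sq_eq hm φs c x)
    have h2 : ∫ x, g x ^ 2 ∂ν = (∫⁻ x, ENNReal.ofReal (g x ^ 2) ∂ν).toReal :=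
      integral_eq_lintegral_of_nonneg_ae
        (Filter.Eventually.of_forall fun x => sq_nonneg _)
        ((hg_meas.pow_const 2).aestronglyMeasurable)
    have h3 : ∫⁻ x, ENNReal.ofReal (g x ^ 2) ∂ν
        = ∫⁻ x, ((‖g x‖₊ : ℝ≥0∞)) ^ (2 : ℝ) ∂ν := by
      refine lintegral_congr fun x => ?_
      rw [← enorm_eq_nnnorm, Real.enorm_eq_ofReal (hg_nonneg x),
        ENNReal.ofReal_rpow_of_nonneg (hg_nonneg x) (by norm_num)]
      norm_num [Real.rpow_natCast (g x) 2]
    have h4 : eLpNorm g 2 ν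
        = (∫⁻ x, ((‖g x‖₊ : ℝ≥0∞)) ^ (2 : ℝ) ∂ν) ^ (1 / 2 : ℝ) := by
      rw [eLpNorm_eq_lintegral_rpow_enorm_toReal (by norm_num) (by norm_num)]
      norm_num
      rfl
    have h5 : (∫⁻ x, ((‖g x‖₊ : ℝ≥0∞)) ^ (2 : ℝ) ∂ν)
        = (eLpNorm g 2 ν) ^ (2 : ℝ) := by
      rw [h4, ← ENNReal.rpow_mul]
      norm_num
    rw [h1, h2, h3, h5, ← ENNReal.toReal_rpow,
      show (2:ℝ) = ((2:ℕ):ℝ) by norm_num, Real.rpow_natCast]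
    exact Real.sqrt_sq ENNReal.toReal_nonneg
  have hμg : Integrable (fun x => g x ^ 2) μ := hg_sq_int μ inferInstance hμint
  have hηg : Integrable (fun x => g x ^ 2) η := hg_sq_int η inferInstance hηint
  have hμmem : MemLp g 2 μ :=
    (memLp_two_iff_integrable_sq hg_meas.aestronglyMeasurable).mpr hμg
  have hηmem : MemLp g 2 η :=
    (memLp_two_iff_integrable_sq hg_meas.aestronglyMeasurable).mpr hηg
  -- main per-coupling bound
  have key : ∀ π : {π : Measure (E × E) // IsCoupling π μ η},
      ENNReal.ofReal
        |Real.sqrt (clusterRisk φs c μ) - Real.sqrt (clusterRisk φs c η)| ≤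
      (∫⁻ p, ENNReal.ofReal (‖φ p.1 - φ p.2‖ ^ 2) ∂π.1) ^ (1 / 2 : ℝ) := by
    rintro ⟨π, hprob, hfst, hsnd⟩
    haveI : IsProbabilityMeasure π := hprob
    set C : ℝ≥0∞ := ∫⁻ p, ENNReal.ofReal (‖φ p.1 - φ p.2‖ ^ 2) ∂π with hCdef
    -- eLpNorms over π
    have hFmeas : AEStronglyMeasurable (fun p : E × E => g p.1) π :=
      (hg_meas.comp measurable_fst).aestronglyMeasurable
    have hGmeas : AEStronglyMeasurable (fun p : E × E => g p.2) π :=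
      (hg_meas.comp measurable_snd).aestronglyMeasurable
    have hSF : eLpNorm (fun p : E × E => g p.1) 2 π = eLpNorm g 2 μ := by
      rw [← hfst,
        eLpNorm_map_measure (hfst ▸ hg_meas.aestronglyMeasurable) measurable_fst.aemeasurable]
      rfl
    have hSG : eLpNorm (fun p : E × E => g p.2) 2 π = eLpNorm g 2 η := by
      rw [← hsnd,
        eLpNorm_map_measure (hsnd ▸ hg_meas.aestronglyMeasurable) measurable_snd.aemeasurable]
      rfl
    set SD : ℝ≥0∞ := eLpNorm (fun p : E × E => g p.1 - g p.2) 2 π with hSDdef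
    have hSDmeas : AEStronglyMeasurable (fun p : E × E => g p.1 - g p.2) π :=
      hFmeas.sub hGmeas
    have hSD_le : SD ≤ C ^ (1 / 2 : ℝ) := by
      rw [hSDdef, eLpNorm_eq_lintegral_rpow_enorm_toReal (by norm_num) (by norm_num)]
      have htr : ((2 : ℝ≥0∞)).toReal = (2 : ℝ) := by norm_num
      rw [htr]
      refine ENNReal.rpow_le_rpow ?_ (by norm_num)
      refine lintegral_mono fun p => ?_
      have h1 : (‖g p.1 - g p.2‖₊ : ℝ≥0∞) ≤ ENNReal.ofReal ‖φ p.1 - φ p.2‖ := by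
        rw [← enorm_eq_nnnorm, Real.enorm_eq_ofReal_abs]
        exact ENNReal.ofReal_le_ofReal (hlip p.1 p.2)
      calc (‖g p.1 - g p.2‖₊ : ℝ≥0∞) ^ (2 : ℝ)
          ≤ (ENNReal.ofReal ‖φ p.1 - φ p.2‖) ^ (2 : ℝ) :=
            ENNReal.rpow_le_rpow h1 (by norm_num)
        _ = ENNReal.ofReal (‖φ p.1 - φ p.2‖ ^ 2) := by
            rw [ENNReal.ofReal_rpow_of_nonneg (norm_nonneg _) (by norm_num)]
            norm_num [Real.rpow_natCast]
    -- triangle inequalities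
    have htri1 : eLpNorm g 2 μ ≤ SD + eLpNorm g 2 η := by
      rw [← hSF, ← hSG]
      have : (fun p : E × E => g p.1)
          = (fun p : E × E => g p.1 - g p.2) + fun p : E × E => g p.2 := by
        funext p; simp
      rw [this]
      exact eLpNorm_add_le hSDmeas hGmeas (by norm_num)
    have htri2 : eLpNorm g 2 η ≤ SD + eLpNorm g 2 μ := by
      rw [← hSF, ← hSG]
      have h0 : (fun p : E × E => g p.2)
          = (fun p : E × E => g p.2 - g p.1) + fun p : E × E => g p.1 := by
        funext p; simp
      rw [h0]
      refine le_trans (eLpNorm_add_le (hGmeas.sub hFmeas) hFmeas (by norm_num)) ?_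
      have : eLpNorm (fun p : E × E => g p.2 - g p.1) 2 π = SD := by
        rw [hSDdef, ← eLpNorm_neg]
        congr 1; funext p; simp
      rw [this]
    by_cases hSDtop : SD = ⊤
    · rw [hSDtop] at hSD_le
      exact le_trans le_top (top_le_iff.mp hSD_le).ge
    -- finite case
    have hμfin : eLpNorm g 2 μ ≠ ⊤ := hμmem.eLpNorm_ne_top
    have hηfin : eLpNorm g 2 η ≠ ⊤ := hηmem.eLpNorm_ne_top
    have hx1 : (eLpNorm g 2 μ).toReal ≤ SD.toReal + (eLpNorm g 2 η).toReal := by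
      rw [← ENNReal.toReal_add hSDtop hηfin]
      exact ENNReal.toReal_mono (ENNReal.add_ne_top.mpr ⟨hSDtop, hηfin⟩) htri1
    have hx2 : (eLpNorm g 2 η).toReal ≤ SD.toReal + (eLpNorm g 2 μ).toReal := by
      rw [← ENNReal.toReal_add hSDtop hμfin]
      exact ENNReal.toReal_mono (ENNReal.add_ne_top.mpr ⟨hSDtop, hμfin⟩) htri2
    rw [hsqrt μ inferInstance hμg, hsqrt η inferInstance hηg]
    have habs : |(eLpNorm g 2 μ).toReal - (eLpNorm g 2 η).toReal| ≤ SD.toReal := by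
      rw [abs_sub_le_iff]; constructor <;> linarith
    calc ENNReal.ofReal |(eLpNorm g 2 μ).toReal - (eLpNorm g 2 η).toReal|
        ≤ ENNReal.ofReal SD.toReal := ENNReal.ofReal_le_ofReal habs
      _ = SD := ENNReal.ofReal_toReal hSDtop
      _ ≤ C ^ (1 / 2 : ℝ) := hSD_le
  -- pass to the infimum
  rw [gammaK]
  set L : ℝ≥0∞ := ENNReal.ofReal
    |Real.sqrt (clusterRisk φs c μ) - Real.sqrt (clusterRisk φs c η)| with hLdef
  have hsq : L ^ (2 : ℝ) ≤ ⨅ π : {π : Measure (E × E) // IsCoupling π μ η},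
      ∫⁻ p, ENNReal.ofReal (‖φ p.1 - φ p.2‖ ^ 2) ∂π.1 := by
    refine le_iInf fun π => ?_
    calc L ^ (2 : ℝ)
        ≤ ((∫⁻ p, ENNReal.ofReal (‖φ p.1 - φ p.2‖ ^ 2) ∂π.1) ^ (1 / 2 : ℝ)) ^ (2 : ℝ) :=
          ENNReal.rpow_le_rpow (key π) (by norm_num)
      _ = ∫⁻ p, ENNReal.ofReal (‖φ p.1 - φ p.2‖ ^ 2) ∂π.1 := by
          rw [← ENNReal.rpow_mul]; norm_num
  calc L = (L ^ (2 : ℝ)) ^ (1 / 2 : ℝ) := by rw [← ENNReal.rpow_mul]; norm_num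
    _ ≤ _ := ENNReal.rpow_le_rpow hsq (by norm_num)
end

section
/- (Lemma 2.) Let E be a measurable space, φ : E → H measurable, Λ a nonempty finite type, and for each a ∈ Λ let φ^a_1, …, φ^a_m : E → H be measurable maps satisfying ‖φ^a_j(x) − φ^a_j(y)‖ ≤ ‖φ(x) − φ(y)‖ for all j, x, y. Let μ and ν be probability measures on E with ∫‖φ^a_j‖² dμ < ∞ and ∫‖φ^a_j‖² dν < ∞ for all a, j. Define the optimal clustering risk W*(λ) = inf_{a ∈ Λ} inf_{c ∈ H^m} W((φ^a_j), c, λ) for a probability measure λ. Suppose δ ≥ 0 and (a*, c*) ∈ Λ × H^m is a δ-minimizer of the risk for ν, i.e., W((φ^{a*}_j), c*, ν) ≤ W*(ν) + δ. Then √W((φ^{a*}_j), c*, μ) ≤ √W*(μ) + 2 γ_φ(μ, ν) + √δ, where the inequality is understood in [0, ∞]. -/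
open MeasureTheory
open scoped ENNReal

/-- Optimal clustering risk `W*(λ) = inf_{a ∈ Λ} inf_{c ∈ H^m} W((φ^a_j), c, λ)`. -/
noncomputable def optRisk {E H : Type*} [MeasurableSpace E] [NormedAddCommGroup H]
    {m : ℕ} {Λ : Type*} (φs : Λ → Fin m → E → H) (μ : Measure E) : ℝ :=
  ⨅ a : Λ, ⨅ c : Fin m → H, clusterRisk (φs a) c μ


set_option linter.unusedSectionVars false
namespace AuxKMeans

lemma ofReal_sq (r : ℝ) (hr : 0 ≤ r) :
    ENNReal.ofReal (r ^ 2) = ENNReal.ofReal r ^ (2 : ℝ) := by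
  rw [ENNReal.ofReal_pow hr, ← ENNReal.rpow_natCast]
  norm_num

lemma sqrt_add_le (a b : ℝ) (ha : 0 ≤ a) (hb : 0 ≤ b) :
    Real.sqrt (a + b) ≤ Real.sqrt a + Real.sqrt b := by
  have h1 : a + b ≤ (Real.sqrt a + Real.sqrt b) ^ 2 := by
    have h2 := Real.sq_sqrt ha
    have h3 := Real.sq_sqrt hb
    have h4 := Real.sqrt_nonneg a
    have h5 := Real.sqrt_nonneg b
    nlinarith
  calc Real.sqrt (a + b) ≤ Real.sqrt ((Real.sqrt a + Real.sqrt b) ^ 2) :=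
        Real.sqrt_le_sqrt h1
    _ = _ := Real.sqrt_sq (by positivity)

variable {E H : Type*} [MeasurableSpace E] [NormedAddCommGroup H]
  [MeasurableSpace H] [OpensMeasurableSpace H]

noncomputable def Fc {m : ℕ} (φs : Fin m → E → H) (c : Fin m → H) (x : E) : ℝ≥0∞ :=
  ⨅ j, ENNReal.ofReal ‖φs j x - c j‖

lemma Fc_meas {m : ℕ} {φs : Fin m → E → H} (hφs : ∀ j, Measurable (φs j)) (c : Fin m → H) :
    Measurable (Fc φs c) :=
  Measurable.iInf fun j =>
    ENNReal.measurable_ofReal.comp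
      (((continuous_id.sub continuous_const).norm.measurable).comp (hφs j))

lemma exists_min_fin {m : ℕ} (hm : 0 < m) (f : Fin m → ℝ) : ∃ j0, ∀ j, f j0 ≤ f j := by
  haveI : Nonempty (Fin m) := ⟨⟨0, hm⟩⟩
  exact Finite.exists_min f

lemma integrand_nonneg {m : ℕ} (φs : Fin m → E → H) (c : Fin m → H) (x : E) :
    0 ≤ ⨅ j, ‖φs j x - c j‖ ^ 2 :=
  Real.iInf_nonneg fun _ => sq_nonneg _

lemma ofReal_inf_sq {m : ℕ} (hm : 0 < m) (φs : Fin m → E → H) (c : Fin m → H) (x : E) :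
    ENNReal.ofReal (⨅ j, ‖φs j x - c j‖ ^ 2) = Fc φs c x ^ (2 : ℝ) := by
  obtain ⟨j0, hj0⟩ := exists_min_fin hm (fun j => ‖φs j x - c j‖)
  have hbdd : BddBelow (Set.range fun j => ‖φs j x - c j‖ ^ 2) := by
    refine ⟨0, ?_⟩; rintro y ⟨j, rfl⟩; positivity
  have h1 : (⨅ j, ‖φs j x - c j‖ ^ 2) = ‖φs j0 x - c j0‖ ^ 2 := by
    haveI : Nonempty (Fin m) := ⟨⟨0, hm⟩⟩
    refine le_antisymm (ciInf_le hbdd j0) (le_ciInf fun j => ?_)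
    exact pow_le_pow_left₀ (norm_nonneg _) (hj0 j) 2
  have h2 : Fc φs c x = ENNReal.ofReal ‖φs j0 x - c j0‖ :=
    le_antisymm (iInf_le _ j0) (le_iInf fun j => ENNReal.ofReal_le_ofReal (hj0 j))
  rw [h1, h2, ofReal_sq _ (norm_nonneg _)]

lemma Fc_lip {m : ℕ} (hm : 0 < m) (φ : E → H) (φs : Fin m → E → H)
    (hdom : ∀ j x y, ‖φs j x - φs j y‖ ≤ ‖φ x - φ y‖) (c : Fin m → H) (x y : E) :
    Fc φs c x ≤ Fc φs c y + ENNReal.ofReal ‖φ x - φ y‖ := by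
  obtain ⟨j0, hj0⟩ := exists_min_fin hm (fun j => ‖φs j y - c j‖)
  have h2 : Fc φs c y = ENNReal.ofReal ‖φs j0 y - c j0‖ :=
    le_antisymm (iInf_le _ j0) (le_iInf fun j => ENNReal.ofReal_le_ofReal (hj0 j))
  have h3 : ‖φs j0 x - c j0‖ ≤ ‖φs j0 y - c j0‖ + ‖φ x - φ y‖ := by
    have h4 : ‖φs j0 x - c j0‖ ≤ ‖φs j0 x - φs j0 y‖ + ‖φs j0 y - c j0‖ := by
      have h5 := norm_add_le (φs j0 x - φs j0 y) (φs j0 y - c j0)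
      rwa [sub_add_sub_cancel] at h5
    have h6 := hdom j0 x y; linarith
  calc Fc φs c x ≤ ENNReal.ofReal ‖φs j0 x - c j0‖ := iInf_le _ j0
    _ ≤ ENNReal.ofReal (‖φs j0 y - c j0‖ + ‖φ x - φ y‖) := ENNReal.ofReal_le_ofReal h3
    _ = Fc φs c y + ENNReal.ofReal ‖φ x - φ y‖ := by
        rw [ENNReal.ofReal_add (norm_nonneg _) (norm_nonneg _), h2]

lemma risk_integrable {m : ℕ} (hm : 0 < m) {φs : Fin m → E → H} (hφs : ∀ j, Measurable (φs j))
    (c : Fin m → H) (lam : Measure E) [IsProbabilityMeasure lam]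
    (hint : ∀ j, Integrable (fun x => ‖φs j x‖ ^ 2) lam) :
    Integrable (fun x => ⨅ j, ‖φs j x - c j‖ ^ 2) lam := by
  have heq : (fun x => ⨅ j, ‖φs j x - c j‖ ^ 2)
      = fun x => (Fc φs c x ^ (2 : ℝ)).toReal := by
    funext x
    rw [← ofReal_inf_sq hm φs c x, ENNReal.toReal_ofReal (integrand_nonneg φs c x)]
  set j0 : Fin m := ⟨0, hm⟩
  have hmeas : AEStronglyMeasurable (fun x => ⨅ j, ‖φs j x - c j‖ ^ 2) lam := by
    rw [heq]
    exact (ENNReal.measurable_toReal.comp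
      (ENNReal.continuous_rpow_const.measurable.comp (Fc_meas hφs c))).aestronglyMeasurable
  refine Integrable.mono' (g := fun x => 2 * ‖φs j0 x‖ ^ 2 + 2 * ‖c j0‖ ^ 2)
    (((hint j0).const_mul 2).add (integrable_const _)) hmeas (ae_of_all _ fun x => ?_)
  have hbdd : BddBelow (Set.range fun j => ‖φs j x - c j‖ ^ 2) := by
    refine ⟨0, ?_⟩; rintro y ⟨j, rfl⟩; positivity
  have h1 : (⨅ j, ‖φs j x - c j‖ ^ 2) ≤ ‖φs j0 x - c j0‖ ^ 2 := ciInf_le hbdd j0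
  have h2 : ‖φs j0 x - c j0‖ ≤ ‖φs j0 x‖ + ‖c j0‖ := norm_sub_le _ _
  have h0 := integrand_nonneg φs c x
  rw [Real.norm_eq_abs, abs_of_nonneg h0]
  have h2' : ‖φs j0 x - c j0‖ ^ 2 ≤ (‖φs j0 x‖ + ‖c j0‖) ^ 2 :=
    pow_le_pow_left₀ (norm_nonneg _) h2 2
  nlinarith [sq_nonneg (‖φs j0 x‖ - ‖c j0‖)]

lemma sqrt_risk_eq {m : ℕ} (hm : 0 < m) (φs : Fin m → E → H) (c : Fin m → H)
    (lam : Measure E)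
    (hint : Integrable (fun x => ⨅ j, ‖φs j x - c j‖ ^ 2) lam) :
    ENNReal.ofReal (Real.sqrt (clusterRisk φs c lam))
      = (∫⁻ x, Fc φs c x ^ (2 : ℝ) ∂lam) ^ (1 / 2 : ℝ) := by
  have h0 : 0 ≤ clusterRisk φs c lam :=
    integral_nonneg fun x => integrand_nonneg φs c x
  rw [Real.sqrt_eq_rpow, ← ENNReal.ofReal_rpow_of_nonneg h0 (by norm_num)]
  congr 1
  rw [clusterRisk, ofReal_integral_eq_lintegral_ofReal hint
    (ae_of_all _ fun x => integrand_nonneg φs c x)]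
  exact lintegral_congr fun x => ofReal_inf_sq hm φs c x

lemma step (φ : E → H) (π : Measure (E × E)) (α β : Measure E)
    (F : E → ℝ≥0∞) (hF : Measurable F)
    (pr qr : E × E → E) (hpr : Measurable pr) (hqr : Measurable qr)
    (hα : π.map pr = α) (hβ : π.map qr = β)
    (hlip : ∀ p : E × E, F (pr p) ≤ F (qr p) + ENNReal.ofReal ‖φ p.1 - φ p.2‖) :
    (∫⁻ x, F x ^ (2 : ℝ) ∂α) ^ (1 / 2 : ℝ)
      ≤ (∫⁻ x, F x ^ (2 : ℝ) ∂β) ^ (1 / 2 : ℝ)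
        + (∫⁻ p, ENNReal.ofReal (‖φ p.1 - φ p.2‖ ^ 2) ∂π) ^ (1 / 2 : ℝ) := by
  have hF2 : Measurable fun x => F x ^ (2 : ℝ) :=
    ENNReal.continuous_rpow_const.measurable.comp hF
  rw [← hα, ← hβ, lintegral_map hF2 hpr, lintegral_map hF2 hqr]
  set D : E × E → ℝ≥0∞ := fun p => F (pr p) - F (qr p) with hD
  have hDmeas : Measurable D := (hF.comp hpr).sub (hF.comp hqr)
  have key1 : (∫⁻ p, F (pr p) ^ (2 : ℝ) ∂π) ^ (1 / 2 : ℝ)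
      ≤ (∫⁻ p, ((fun p => F (qr p)) + D) p ^ (2 : ℝ) ∂π) ^ (1 / 2 : ℝ) := by
    refine ENNReal.rpow_le_rpow (lintegral_mono fun p => ?_) (by norm_num)
    exact ENNReal.rpow_le_rpow le_add_tsub (by norm_num)
  have key2 := ENNReal.lintegral_Lp_add_le (μ := π) (p := (2 : ℝ))
    ((hF.comp hqr).aemeasurable) hDmeas.aemeasurable one_le_two
  have key3 : (∫⁻ p, D p ^ (2 : ℝ) ∂π) ^ (1 / 2 : ℝ)
      ≤ (∫⁻ p, ENNReal.ofReal (‖φ p.1 - φ p.2‖ ^ 2) ∂π) ^ (1 / 2 : ℝ) := by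
    refine ENNReal.rpow_le_rpow (lintegral_mono fun p => ?_) (by norm_num)
    rw [ofReal_sq _ (norm_nonneg _)]
    refine ENNReal.rpow_le_rpow ?_ (by norm_num)
    exact tsub_le_iff_right.mpr ((hlip p).trans_eq (add_comm _ _))
  exact key1.trans (key2.trans (add_le_add_right key3 _))

end AuxKMeans


/-- Lemma 2: a `δ`-minimizer of the clustering risk for `ν` is nearly optimal for `μ`:
`√W((φ^{a*}_j), c*, μ) ≤ √W*(μ) + 2 γ_φ(μ, ν) + √δ` in `[0, ∞]`. -/
theorem sqrt_clusterRisk_delta_minimizer_le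
    {E H : Type*} [MeasurableSpace E]
    [NormedAddCommGroup H] [InnerProductSpace ℝ H] [CompleteSpace H]
    [MeasurableSpace H] [BorelSpace H]
    {m : ℕ} (hm : 0 < m) {Λ : Type*} [Fintype Λ] [Nonempty Λ]
    (φ : E → H) (hφ : Measurable φ)
    (φs : Λ → Fin m → E → H) (hφs : ∀ a j, Measurable (φs a j))
    (hdom : ∀ (a : Λ) (j : Fin m) (x y : E), ‖φs a j x - φs a j y‖ ≤ ‖φ x - φ y‖)
    (μ ν : Measure E) [IsProbabilityMeasure μ] [IsProbabilityMeasure ν]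
    (hμint : ∀ a j, Integrable (fun x => ‖φs a j x‖ ^ 2) μ)
    (hνint : ∀ a j, Integrable (fun x => ‖φs a j x‖ ^ 2) ν)
    (δ : ℝ) (hδ : 0 ≤ δ) (astar : Λ) (cstar : Fin m → H)
    (hmin : clusterRisk (φs astar) cstar ν ≤ optRisk φs ν + δ) :
    ENNReal.ofReal (Real.sqrt (clusterRisk (φs astar) cstar μ)) ≤
      ENNReal.ofReal (Real.sqrt (optRisk φs μ)) + 2 * gammaK φ μ ν
        + ENNReal.ofReal (Real.sqrt δ) := by
  classical
  have hrisk_nonneg : ∀ (a : Λ) (c : Fin m → H) (lam : Measure E),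
      0 ≤ clusterRisk (φs a) c lam :=
    fun a c lam => integral_nonneg fun x => AuxKMeans.integrand_nonneg (φs a) c x
  have hopt_nonneg : ∀ lam : Measure E, 0 ≤ optRisk φs lam :=
    fun lam => Real.iInf_nonneg fun a => Real.iInf_nonneg fun c => hrisk_nonneg a c lam
  have hopt_le : ∀ (a : Λ) (c : Fin m → H) (lam : Measure E),
      optRisk φs lam ≤ clusterRisk (φs a) c lam := by
    intro a c lam
    have hb1 : BddBelow (Set.range fun a : Λ => ⨅ c : Fin m → H, clusterRisk (φs a) c lam) := by
      refine ⟨0, ?_⟩; rintro y ⟨a', rfl⟩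
      exact Real.iInf_nonneg fun c' => hrisk_nonneg a' c' lam
    have hb2 : BddBelow (Set.range fun c : Fin m → H => clusterRisk (φs a) c lam) := by
      refine ⟨0, ?_⟩; rintro y ⟨c', rfl⟩; exact hrisk_nonneg a c' lam
    exact le_trans (ciInf_le hb1 a) (ciInf_le hb2 c)
  have hμI : ∀ (a : Λ) (c : Fin m → H),
      Integrable (fun x => ⨅ j, ‖φs a j x - c j‖ ^ 2) μ :=
    fun a c => AuxKMeans.risk_integrable hm (hφs a) c μ (hμint a)
  have hνI : ∀ (a : Λ) (c : Fin m → H),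
      Integrable (fun x => ⨅ j, ‖φs a j x - c j‖ ^ 2) ν :=
    fun a c => AuxKMeans.risk_integrable hm (hφs a) c ν (hνint a)
  have hSμ : ∀ (a : Λ) (c : Fin m → H),
      ENNReal.ofReal (Real.sqrt (clusterRisk (φs a) c μ))
        = (∫⁻ x, AuxKMeans.Fc (φs a) c x ^ (2 : ℝ) ∂μ) ^ (1 / 2 : ℝ) :=
    fun a c => AuxKMeans.sqrt_risk_eq hm (φs a) c μ (hμI a c)
  have hSν : ∀ (a : Λ) (c : Fin m → H),
      ENNReal.ofReal (Real.sqrt (clusterRisk (φs a) c ν))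
        = (∫⁻ x, AuxKMeans.Fc (φs a) c x ^ (2 : ℝ) ∂ν) ^ (1 / 2 : ℝ) :=
    fun a c => AuxKMeans.sqrt_risk_eq hm (φs a) c ν (hνI a c)
  have key : ∀ π : Measure (E × E), IsCoupling π μ ν →
      ENNReal.ofReal (Real.sqrt (clusterRisk (φs astar) cstar μ)) ≤
        ENNReal.ofReal (Real.sqrt (optRisk φs μ))
          + 2 * ((∫⁻ p, ENNReal.ofReal (‖φ p.1 - φ p.2‖ ^ 2) ∂π) ^ (1 / 2 : ℝ))
          + ENNReal.ofReal (Real.sqrt δ) := by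
    rintro π ⟨hprob, hfst, hsnd⟩
    haveI := hprob
    set G := (∫⁻ p, ENNReal.ofReal (‖φ p.1 - φ p.2‖ ^ 2) ∂π) ^ (1 / 2 : ℝ) with hGdef
    have hstep1 : ∀ (a : Λ) (c : Fin m → H),
        ENNReal.ofReal (Real.sqrt (clusterRisk (φs a) c μ))
          ≤ ENNReal.ofReal (Real.sqrt (clusterRisk (φs a) c ν)) + G := by
      intro a c
      rw [hSμ a c, hSν a c]
      exact AuxKMeans.step φ π μ ν _ (AuxKMeans.Fc_meas (hφs a) c)
        Prod.fst Prod.snd measurable_fst measurable_snd hfst hsnd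
        (fun p => AuxKMeans.Fc_lip hm φ (φs a) (hdom a) c p.1 p.2)
    have hstep2 : ∀ (a : Λ) (c : Fin m → H),
        ENNReal.ofReal (Real.sqrt (clusterRisk (φs a) c ν))
          ≤ ENNReal.ofReal (Real.sqrt (clusterRisk (φs a) c μ)) + G := by
      intro a c
      rw [hSμ a c, hSν a c]
      refine AuxKMeans.step φ π ν μ _ (AuxKMeans.Fc_meas (hφs a) c)
        Prod.snd Prod.fst measurable_snd measurable_fst hsnd hfst (fun p => ?_)
      have h := AuxKMeans.Fc_lip hm φ (φs a) (hdom a) c p.2 p.1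
      rwa [norm_sub_rev] at h
    have hA : ENNReal.ofReal (Real.sqrt (clusterRisk (φs astar) cstar ν))
        ≤ ENNReal.ofReal (Real.sqrt (optRisk φs ν)) + ENNReal.ofReal (Real.sqrt δ) := by
      calc ENNReal.ofReal (Real.sqrt (clusterRisk (φs astar) cstar ν))
          ≤ ENNReal.ofReal (Real.sqrt (optRisk φs ν + δ)) :=
            ENNReal.ofReal_le_ofReal (Real.sqrt_le_sqrt hmin)
        _ ≤ ENNReal.ofReal (Real.sqrt (optRisk φs ν) + Real.sqrt δ) :=
            ENNReal.ofReal_le_ofReal (AuxKMeans.sqrt_add_le _ _ (hopt_nonneg ν) hδ)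
        _ = _ := ENNReal.ofReal_add (Real.sqrt_nonneg _) (Real.sqrt_nonneg _)
    have hB : ENNReal.ofReal (Real.sqrt (optRisk φs ν))
        ≤ ENNReal.ofReal (Real.sqrt (optRisk φs μ)) + G := by
      refine ENNReal.le_of_forall_pos_le_add fun ε hε _ => ?_
      have hε' : (0 : ℝ) < (ε : ℝ) := by exact_mod_cast hε
      have h0 : (⨅ a : Λ, ⨅ c : Fin m → H, clusterRisk (φs a) c μ)
          < optRisk φs μ + (ε : ℝ) ^ 2 :=
        lt_add_of_pos_right _ (pow_pos hε' 2)
      obtain ⟨a, ha⟩ := exists_lt_of_ciInf_lt h0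
      obtain ⟨c, hc⟩ := exists_lt_of_ciInf_lt ha
      have h4 : Real.sqrt (clusterRisk (φs a) c μ) ≤ Real.sqrt (optRisk φs μ) + (ε : ℝ) := by
        calc Real.sqrt (clusterRisk (φs a) c μ)
            ≤ Real.sqrt (optRisk φs μ + (ε : ℝ) ^ 2) := Real.sqrt_le_sqrt hc.le
          _ ≤ Real.sqrt (optRisk φs μ) + Real.sqrt ((ε : ℝ) ^ 2) :=
              AuxKMeans.sqrt_add_le _ _ (hopt_nonneg μ) (sq_nonneg _)
          _ = _ := by rw [Real.sqrt_sq ε.coe_nonneg]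
      calc ENNReal.ofReal (Real.sqrt (optRisk φs ν))
          ≤ ENNReal.ofReal (Real.sqrt (clusterRisk (φs a) c ν)) :=
            ENNReal.ofReal_le_ofReal (Real.sqrt_le_sqrt (hopt_le a c ν))
        _ ≤ ENNReal.ofReal (Real.sqrt (clusterRisk (φs a) c μ)) + G := hstep2 a c
        _ ≤ ENNReal.ofReal (Real.sqrt (optRisk φs μ) + (ε : ℝ)) + G :=
            add_le_add_left (ENNReal.ofReal_le_ofReal h4) _
        _ = (ENNReal.ofReal (Real.sqrt (optRisk φs μ)) + G) + (ε : ℝ≥0∞) := by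
            rw [ENNReal.ofReal_add (Real.sqrt_nonneg _) ε.coe_nonneg,
              ENNReal.ofReal_coe_nnreal]
            ring
    calc ENNReal.ofReal (Real.sqrt (clusterRisk (φs astar) cstar μ))
        ≤ ENNReal.ofReal (Real.sqrt (clusterRisk (φs astar) cstar ν)) + G :=
          hstep1 astar cstar
      _ ≤ (ENNReal.ofReal (Real.sqrt (optRisk φs ν)) + ENNReal.ofReal (Real.sqrt δ)) + G :=
          add_le_add_left hA _
      _ ≤ ((ENNReal.ofReal (Real.sqrt (optRisk φs μ)) + G) + ENNReal.ofReal (Real.sqrt δ)) + G :=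
          add_le_add_left (add_le_add_left hB _) _
      _ = ENNReal.ofReal (Real.sqrt (optRisk φs μ)) + 2 * G + ENNReal.ofReal (Real.sqrt δ) := by
          ring
  rw [gammaK]
  by_cases hne : Nonempty {π : Measure (E × E) // IsCoupling π μ ν}
  · have hTs : (⨅ π : {π : Measure (E × E) // IsCoupling π μ ν},
          ∫⁻ p, ENNReal.ofReal (‖φ p.1 - φ p.2‖ ^ 2) ∂π.1) ^ (1 / 2 : ℝ)
        = ⨅ π : {π : Measure (E × E) // IsCoupling π μ ν},
            (∫⁻ p, ENNReal.ofReal (‖φ p.1 - φ p.2‖ ^ 2) ∂π.1) ^ (1 / 2 : ℝ) := by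
      refine le_antisymm
        (le_iInf fun π => ENNReal.rpow_le_rpow (iInf_le _ π) (by norm_num)) ?_
      have h1 : (⨅ π : {π : Measure (E × E) // IsCoupling π μ ν},
            (∫⁻ p, ENNReal.ofReal (‖φ p.1 - φ p.2‖ ^ 2) ∂π.1) ^ (1 / 2 : ℝ)) ^ (2 : ℝ)
          ≤ ⨅ π : {π : Measure (E × E) // IsCoupling π μ ν},
              ∫⁻ p, ENNReal.ofReal (‖φ p.1 - φ p.2‖ ^ 2) ∂π.1 := by
        refine le_iInf fun π => ?_
        calc _ ≤ ((∫⁻ p, ENNReal.ofReal (‖φ p.1 - φ p.2‖ ^ 2) ∂π.1) ^ (1 / 2 : ℝ)) ^ (2 : ℝ) :=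
              ENNReal.rpow_le_rpow (iInf_le _ π) (by norm_num)
          _ = ∫⁻ p, ENNReal.ofReal (‖φ p.1 - φ p.2‖ ^ 2) ∂π.1 := by
              rw [← ENNReal.rpow_mul]; norm_num
      calc (⨅ π : {π : Measure (E × E) // IsCoupling π μ ν},
            (∫⁻ p, ENNReal.ofReal (‖φ p.1 - φ p.2‖ ^ 2) ∂π.1) ^ (1 / 2 : ℝ))
          = ((⨅ π : {π : Measure (E × E) // IsCoupling π μ ν},
              (∫⁻ p, ENNReal.ofReal (‖φ p.1 - φ p.2‖ ^ 2) ∂π.1) ^ (1 / 2 : ℝ)) ^ (2 : ℝ))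
                ^ (1 / 2 : ℝ) := by
            rw [← ENNReal.rpow_mul]; norm_num
        _ ≤ _ := ENNReal.rpow_le_rpow h1 (by norm_num)
    rw [hTs]
    have hmul : (2 : ℝ≥0∞) * ⨅ π : {π : Measure (E × E) // IsCoupling π μ ν},
          (∫⁻ p, ENNReal.ofReal (‖φ p.1 - φ p.2‖ ^ 2) ∂π.1) ^ (1 / 2 : ℝ)
        = ⨅ π : {π : Measure (E × E) // IsCoupling π μ ν},
            2 * (∫⁻ p, ENNReal.ofReal (‖φ p.1 - φ p.2‖ ^ 2) ∂π.1) ^ (1 / 2 : ℝ) :=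
      ENNReal.mul_iInf (fun h _ => absurd h (by norm_num))
    rw [hmul, ENNReal.add_iInf, ENNReal.iInf_add]
    exact le_iInf fun π => key π.1 π.2
  · haveI : IsEmpty {π : Measure (E × E) // IsCoupling π μ ν} := not_nonempty_iff.mp hne
    rw [iInf_of_empty, ENNReal.top_rpow_of_pos (by norm_num)]
    have h2 : (2 : ℝ≥0∞) * ⊤ = ⊤ := ENNReal.mul_top (by norm_num)
    rw [h2]
    simp
end

section
/- (Deterministic core of Theorem 3.) Let E be a measurable space, φ : E → H measurable, Λ a nonempty finite type, and for each a ∈ Λ let φ^a_1, …, φ^a_m : E → H be measurable maps satisfying ‖φ^a_j(x) − φ^a_j(y)‖ ≤ ‖φ(x) − φ(y)‖ for all j, x, y. Let μ be a probability measure and (ν_n)_{n∈ℕ} a sequence of probability measures on E, all with ∫‖φ^a_j‖² < ∞ for every a, j. Define W*(λ) = inf_{a ∈ Λ} inf_{c ∈ H^m} W((φ^a_j), c, λ). Suppose δ_n ≥ 0 with δ_n → 0, γ_φ(μ, ν_n) → 0 in [0, ∞], and (a_n, c_n) ∈ Λ × H^m satisfy W((φ^{a_n}_j), c_n, ν_n)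 ≤ W*(ν_n) + δ_n for every n. Then W((φ^{a_n}_j), c_n, μ) → W*(μ) as n → ∞. -/
open MeasureTheory Filter
open scoped ENNReal

section Aux

variable {E H : Type*} [MeasurableSpace E] [NormedAddCommGroup H]

/-- Pointwise minimum of the distances to the centers, in `ℝ≥0∞`. -/
noncomputable def gfun {m : ℕ} (φs : Fin m → E → H) (c : Fin m → H) (x : E) : ℝ≥0∞ :=
  ⨅ j, (‖φs j x - c j‖₊ : ℝ≥0∞)

lemma ofReal_sq_norm (v : H) :
    ENNReal.ofReal (‖v‖ ^ 2) = (‖v‖₊ : ℝ≥0∞) ^ (2 : ℝ) := by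
  rw [show (2:ℝ) = ((2:ℕ):ℝ) by norm_num, ENNReal.rpow_natCast,
    ENNReal.ofReal_pow (norm_nonneg v), ofReal_norm, enorm_eq_nnnorm]

lemma measurable_rpow2 {f : E → ℝ≥0∞} (hf : Measurable f) :
    Measurable fun x => f x ^ (2:ℝ) := by
  have h : (fun x => f x ^ (2:ℝ)) = fun x => f x ^ (2:ℕ) := funext fun x => by
    rw [show (2:ℝ) = ((2:ℕ):ℝ) by norm_num, ENNReal.rpow_natCast]
  rw [h]; exact hf.pow_const 2

lemma iInf_rpow_half {ι : Sort*} (f : ι → ℝ≥0∞) :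
    (⨅ i, f i) ^ (1/2:ℝ) = ⨅ i, f i ^ (1/2:ℝ) := by
  refine le_antisymm (le_iInf fun i => ENNReal.rpow_le_rpow (iInf_le f i) (by norm_num)) ?_
  have h2 : (⨅ i, f i ^ (1/2:ℝ)) ^ (2:ℝ) ≤ ⨅ i, f i := le_iInf fun i => by
    calc (⨅ i, f i ^ (1/2:ℝ)) ^ (2:ℝ) ≤ (f i ^ (1/2:ℝ)) ^ (2:ℝ) :=
          ENNReal.rpow_le_rpow (iInf_le _ i) (by norm_num)
      _ = f i := by rw [← ENNReal.rpow_mul]; norm_num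
  calc (⨅ i, f i ^ (1/2:ℝ)) = ((⨅ i, f i ^ (1/2:ℝ)) ^ (2:ℝ)) ^ (1/2:ℝ) := by
        rw [← ENNReal.rpow_mul]; norm_num
    _ ≤ (⨅ i, f i) ^ (1/2:ℝ) := ENNReal.rpow_le_rpow h2 (by norm_num)

variable [MeasurableSpace H] [OpensMeasurableSpace H]

lemma gfun_meas {m : ℕ} {φs : Fin m → E → H} (hφs : ∀ j, Measurable (φs j))
    (c : Fin m → H) : Measurable (gfun φs c) :=
  Measurable.iInf fun j =>
    (((continuous_nnnorm.comp (continuous_id.sub continuous_const)).measurable.comp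
      (hφs j))).coe_nnreal_ennreal

lemma ofReal_iInf_sq {m : ℕ} (hm : 0 < m) (φs : Fin m → E → H) (c : Fin m → H) (x : E) :
    ENNReal.ofReal (⨅ j : Fin m, ‖φs j x - c j‖ ^ 2) = gfun φs c x ^ (2:ℝ) := by
  haveI : Nonempty (Fin m) := ⟨⟨0, hm⟩⟩
  obtain ⟨j0, -, hj0⟩ := Finset.exists_min_image Finset.univ
    (fun j : Fin m => ‖φs j x - c j‖) ⟨⟨0, hm⟩, Finset.mem_univ _⟩
  have h1 : (⨅ j : Fin m, ‖φs j x - c j‖ ^ 2) = ‖φs j0 x - c j0‖ ^ 2 := by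
    refine le_antisymm (ciInf_le ⟨0, ?_⟩ j0) (le_ciInf fun j => ?_)
    · rintro _ ⟨j, rfl⟩; positivity
    · exact pow_le_pow_left₀ (norm_nonneg _) (hj0 j (Finset.mem_univ j)) 2
  have h2 : gfun φs c x = (‖φs j0 x - c j0‖₊ : ℝ≥0∞) := by
    refine le_antisymm (iInf_le _ j0) (le_iInf fun j => ?_)
    exact_mod_cast hj0 j (Finset.mem_univ j)
  rw [h1, h2, ofReal_sq_norm]

lemma clusterRisk_eq_toReal {m : ℕ} (hm : 0 < m) {φs : Fin m → E → H}
    (hφs : ∀ j, Measurable (φs j)) (c : Fin m → H) (lam : Measure E) :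
    clusterRisk φs c lam = (∫⁻ x, gfun φs c x ^ (2:ℝ) ∂lam).toReal := by
  haveI : Nonempty (Fin m) := ⟨⟨0, hm⟩⟩
  have hnn : ∀ x, 0 ≤ ⨅ j : Fin m, ‖φs j x - c j‖ ^ 2 := fun x =>
    Real.iInf_nonneg fun j => by positivity
  have hfun : (fun x => ⨅ j : Fin m, ‖φs j x - c j‖ ^ 2)
      = fun x => (gfun φs c x ^ (2:ℝ)).toReal := funext fun x => by
    rw [← ofReal_iInf_sq hm φs c x, ENNReal.toReal_ofReal (hnn x)]
  have hmeas : AEStronglyMeasurable (fun x => ⨅ j : Fin m, ‖φs j x - c j‖ ^ 2) lam := by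
    rw [hfun]
    exact (measurable_rpow2 (gfun_meas hφs c)).ennreal_toReal.aestronglyMeasurable
  rw [clusterRisk, integral_eq_lintegral_of_nonneg_ae (ae_of_all _ hnn) hmeas]
  congr 1
  exact lintegral_congr fun x => ofReal_iInf_sq hm φs c x

lemma lintegral_gfun_sq_ne_top {m : ℕ} (hm : 0 < m) {φs : Fin m → E → H}
    (hφs : ∀ j, Measurable (φs j)) (c : Fin m → H) (lam : Measure E)
    [IsProbabilityMeasure lam] (hint : ∀ j, Integrable (fun x => ‖φs j x‖ ^ 2) lam) :
    ∫⁻ x, gfun φs c x ^ (2:ℝ) ∂lam ≠ ⊤ := by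
  set j0 : Fin m := ⟨0, hm⟩
  set A : E → ℝ≥0∞ := fun x => (‖φs j0 x‖₊ : ℝ≥0∞) with hA_def
  set B : E → ℝ≥0∞ := fun _ => (‖c j0‖₊ : ℝ≥0∞) with hB_def
  have hA : Measurable A := (hφs j0).nnnorm.coe_nnreal_ennreal
  have hAB : ∀ x, gfun φs c x ≤ (A + B) x := by
    intro x
    refine (iInf_le _ j0).trans ?_
    simp only [Pi.add_apply, hA_def, hB_def]
    exact_mod_cast nnnorm_sub_le (φs j0 x) (c j0)
  have hA2 : ∫⁻ x, A x ^ (2:ℝ) ∂lam ≠ ⊤ := by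
    have h : ∫⁻ x, (‖‖φs j0 x‖ ^ 2‖₊ : ℝ≥0∞) ∂lam < ⊤ := (hint j0).2
    refine ne_top_of_le_ne_top h.ne (le_of_eq (lintegral_congr fun x => ?_))
    rw [hA_def, ← ofReal_sq_norm, ← Real.enorm_eq_ofReal (by positivity), enorm_eq_nnnorm]
  have hB2 : ∫⁻ x, B x ^ (2:ℝ) ∂lam ≠ ⊤ := by
    rw [hB_def]
    simp only [lintegral_const]
    exact ENNReal.mul_ne_top
      (ENNReal.rpow_lt_top_of_nonneg (by norm_num) ENNReal.coe_ne_top).ne (measure_ne_top _ _)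
  have hmink := ENNReal.lintegral_Lp_add_le (p := (2:ℝ)) (μ := lam)
    hA.aemeasurable (measurable_const (a := (‖c j0‖₊ : ℝ≥0∞))).aemeasurable (by norm_num)
  have hmono : (∫⁻ x, gfun φs c x ^ (2:ℝ) ∂lam) ^ (1/2:ℝ)
      ≤ (∫⁻ x, (A + B) x ^ (2:ℝ) ∂lam) ^ (1/2:ℝ) :=
    ENNReal.rpow_le_rpow
      (lintegral_mono fun x => ENNReal.rpow_le_rpow (hAB x) (by norm_num)) (by norm_num)
  have hfin : (∫⁻ x, gfun φs c x ^ (2:ℝ) ∂lam) ^ (1/2:ℝ) < ⊤ := by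
    refine lt_of_le_of_lt (hmono.trans hmink) (ENNReal.add_lt_top.2 ⟨?_, ?_⟩)
    · exact ENNReal.rpow_lt_top_of_nonneg (by norm_num) hA2
    · exact ENNReal.rpow_lt_top_of_nonneg (by norm_num) hB2
  intro htop
  rw [htop, ENNReal.top_rpow_of_pos (by norm_num)] at hfin
  exact lt_irrefl _ hfin

lemma transport {m : ℕ} {φ : E → H} (hφ : Measurable φ) {φs : Fin m → E → H}
    (hφs : ∀ j, Measurable (φs j))
    (hdom : ∀ (j : Fin m) (x y : E), ‖φs j x - φs j y‖ ≤ ‖φ x - φ y‖)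
    (c : Fin m → H) {μ ν : Measure E} {π : Measure (E × E)} (hπ : IsCoupling π μ ν) :
    (∫⁻ x, gfun φs c x ^ (2:ℝ) ∂μ) ^ (1/2:ℝ)
      ≤ (∫⁻ x, gfun φs c x ^ (2:ℝ) ∂ν) ^ (1/2:ℝ)
        + (∫⁻ p, ENNReal.ofReal (‖φ p.1 - φ p.2‖ ^ 2) ∂π) ^ (1/2:ℝ) := by
  obtain ⟨hprob, hfst, hsnd⟩ := hπ
  have hg : Measurable (gfun φs c) := gfun_meas hφs c
  set F : E × E → ℝ≥0∞ := fun p => gfun φs c p.2 with hF_def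
  set G : E × E → ℝ≥0∞ := fun p => gfun φs c p.1 with hG_def
  have hFmeas : Measurable F := hg.comp measurable_snd
  have hGmeas : Measurable G := hg.comp measurable_fst
  set D : E × E → ℝ≥0∞ := fun p => G p - F p with hD_def
  have hDmeas : Measurable D := hGmeas.sub hFmeas
  have hFD : ∀ p : E × E, G p ≤ F p + (‖φ p.1 - φ p.2‖₊ : ℝ≥0∞) := by
    intro p
    have key : ∀ j : Fin m, (‖φs j p.1 - c j‖₊ : ℝ≥0∞)
        ≤ (‖φs j p.2 - c j‖₊ : ℝ≥0∞) + (‖φ p.1 - φ p.2‖₊ : ℝ≥0∞) := by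
      intro j
      have h3 := norm_add_le (φs j p.1 - φs j p.2) (φs j p.2 - c j)
      rw [sub_add_sub_cancel] at h3
      have hr : ‖φs j p.1 - c j‖ ≤ ‖φs j p.2 - c j‖ + ‖φ p.1 - φ p.2‖ := by
        have h4 := hdom j p.1 p.2
        linarith
      exact_mod_cast hr
    calc G p ≤ ⨅ j : Fin m, ((‖φs j p.2 - c j‖₊ : ℝ≥0∞) + (‖φ p.1 - φ p.2‖₊ : ℝ≥0∞)) :=
          le_iInf fun j => (iInf_le _ j).trans (key j)
      _ = F p + (‖φ p.1 - φ p.2‖₊ : ℝ≥0∞) := ENNReal.iInf_add.symm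
  have hpt : ∀ p : E × E, G p ≤ (F + D) p := fun p => le_add_tsub
  have hDle : ∀ p : E × E, D p ≤ (‖φ p.1 - φ p.2‖₊ : ℝ≥0∞) := fun p =>
    tsub_le_iff_left.2 (hFD p)
  calc (∫⁻ x, gfun φs c x ^ (2:ℝ) ∂μ) ^ (1/2:ℝ)
      = (∫⁻ p, G p ^ (2:ℝ) ∂π) ^ (1/2:ℝ) := by
        rw [← hfst, lintegral_map (measurable_rpow2 hg) measurable_fst]
    _ ≤ (∫⁻ p, (F + D) p ^ (2:ℝ) ∂π) ^ (1/2:ℝ) :=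
        ENNReal.rpow_le_rpow
          (lintegral_mono fun p => ENNReal.rpow_le_rpow (hpt p) (by norm_num)) (by norm_num)
    _ ≤ (∫⁻ p, F p ^ (2:ℝ) ∂π) ^ (1/2:ℝ) + (∫⁻ p, D p ^ (2:ℝ) ∂π) ^ (1/2:ℝ) :=
        ENNReal.lintegral_Lp_add_le hFmeas.aemeasurable hDmeas.aemeasurable (by norm_num)
    _ ≤ (∫⁻ x, gfun φs c x ^ (2:ℝ) ∂ν) ^ (1/2:ℝ)
        + (∫⁻ p, ENNReal.ofReal (‖φ p.1 - φ p.2‖ ^ 2) ∂π) ^ (1/2:ℝ) := by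
        refine add_le_add
          (le_of_eq (by rw [← hsnd, lintegral_map (measurable_rpow2 hg) measurable_snd]))
          (ENNReal.rpow_le_rpow (lintegral_mono fun p => ?_) (by norm_num))
        rw [ofReal_sq_norm]
        exact ENNReal.rpow_le_rpow (hDle p) (by norm_num)

lemma transport' {m : ℕ} {φ : E → H} (hφ : Measurable φ) {φs : Fin m → E → H}
    (hφs : ∀ j, Measurable (φs j))
    (hdom : ∀ (j : Fin m) (x y : E), ‖φs j x - φs j y‖ ≤ ‖φ x - φ y‖)
    (c : Fin m → H) {μ ν : Measure E} {π : Measure (E × E)} (hπ : IsCoupling π μ ν) :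
    (∫⁻ x, gfun φs c x ^ (2:ℝ) ∂ν) ^ (1/2:ℝ)
      ≤ (∫⁻ x, gfun φs c x ^ (2:ℝ) ∂μ) ^ (1/2:ℝ)
        + (∫⁻ p, ENNReal.ofReal (‖φ p.1 - φ p.2‖ ^ 2) ∂π) ^ (1/2:ℝ) := by
  obtain ⟨hprob, hfst, hsnd⟩ := hπ
  have hg : Measurable (gfun φs c) := gfun_meas hφs c
  set F : E × E → ℝ≥0∞ := fun p => gfun φs c p.1 with hF_def
  set G : E × E → ℝ≥0∞ := fun p => gfun φs c p.2 with hG_def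
  have hFmeas : Measurable F := hg.comp measurable_fst
  have hGmeas : Measurable G := hg.comp measurable_snd
  set D : E × E → ℝ≥0∞ := fun p => G p - F p with hD_def
  have hDmeas : Measurable D := hGmeas.sub hFmeas
  have hFD : ∀ p : E × E, G p ≤ F p + (‖φ p.1 - φ p.2‖₊ : ℝ≥0∞) := by
    intro p
    have key : ∀ j : Fin m, (‖φs j p.2 - c j‖₊ : ℝ≥0∞)
        ≤ (‖φs j p.1 - c j‖₊ : ℝ≥0∞) + (‖φ p.1 - φ p.2‖₊ : ℝ≥0∞) := by
      intro j
      have h3 := norm_add_le (φs j p.2 - φs j p.1) (φs j p.1 - c j)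
      rw [sub_add_sub_cancel] at h3
      have h4 := hdom j p.1 p.2
      rw [norm_sub_rev (φs j p.1)] at h4
      have hr : ‖φs j p.2 - c j‖ ≤ ‖φs j p.1 - c j‖ + ‖φ p.1 - φ p.2‖ := by linarith
      exact_mod_cast hr
    calc G p ≤ ⨅ j : Fin m, ((‖φs j p.1 - c j‖₊ : ℝ≥0∞) + (‖φ p.1 - φ p.2‖₊ : ℝ≥0∞)) :=
          le_iInf fun j => (iInf_le _ j).trans (key j)
      _ = F p + (‖φ p.1 - φ p.2‖₊ : ℝ≥0∞) := ENNReal.iInf_add.symm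
  have hpt : ∀ p : E × E, G p ≤ (F + D) p := fun p => le_add_tsub
  have hDle : ∀ p : E × E, D p ≤ (‖φ p.1 - φ p.2‖₊ : ℝ≥0∞) := fun p =>
    tsub_le_iff_left.2 (hFD p)
  calc (∫⁻ x, gfun φs c x ^ (2:ℝ) ∂ν) ^ (1/2:ℝ)
      = (∫⁻ p, G p ^ (2:ℝ) ∂π) ^ (1/2:ℝ) := by
        rw [← hsnd, lintegral_map (measurable_rpow2 hg) measurable_snd]
    _ ≤ (∫⁻ p, (F + D) p ^ (2:ℝ) ∂π) ^ (1/2:ℝ) :=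
        ENNReal.rpow_le_rpow
          (lintegral_mono fun p => ENNReal.rpow_le_rpow (hpt p) (by norm_num)) (by norm_num)
    _ ≤ (∫⁻ p, F p ^ (2:ℝ) ∂π) ^ (1/2:ℝ) + (∫⁻ p, D p ^ (2:ℝ) ∂π) ^ (1/2:ℝ) :=
        ENNReal.lintegral_Lp_add_le hFmeas.aemeasurable hDmeas.aemeasurable (by norm_num)
    _ ≤ (∫⁻ x, gfun φs c x ^ (2:ℝ) ∂μ) ^ (1/2:ℝ)
        + (∫⁻ p, ENNReal.ofReal (‖φ p.1 - φ p.2‖ ^ 2) ∂π) ^ (1/2:ℝ) := by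
        refine add_le_add
          (le_of_eq (by rw [← hfst, lintegral_map (measurable_rpow2 hg) measurable_fst]))
          (ENNReal.rpow_le_rpow (lintegral_mono fun p => ?_) (by norm_num))
        rw [ofReal_sq_norm]
        exact ENNReal.rpow_le_rpow (hDle p) (by norm_num)

lemma lintegral_sq_le_add_gammaK {m : ℕ} {φ : E → H} (hφ : Measurable φ)
    {φs : Fin m → E → H} (hφs : ∀ j, Measurable (φs j))
    (hdom : ∀ (j : Fin m) (x y : E), ‖φs j x - φs j y‖ ≤ ‖φ x - φ y‖)
    (c : Fin m → H) (μ ν : Measure E) :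
    (∫⁻ x, gfun φs c x ^ (2:ℝ) ∂μ) ^ (1/2:ℝ)
      ≤ (∫⁻ x, gfun φs c x ^ (2:ℝ) ∂ν) ^ (1/2:ℝ) + gammaK φ μ ν := by
  rw [gammaK, iInf_rpow_half, ENNReal.add_iInf]
  exact le_iInf fun π => transport hφ hφs hdom c π.2

lemma lintegral_sq_le_add_gammaK' {m : ℕ} {φ : E → H} (hφ : Measurable φ)
    {φs : Fin m → E → H} (hφs : ∀ j, Measurable (φs j))
    (hdom : ∀ (j : Fin m) (x y : E), ‖φs j x - φs j y‖ ≤ ‖φ x - φ y‖)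
    (c : Fin m → H) (μ ν : Measure E) :
    (∫⁻ x, gfun φs c x ^ (2:ℝ) ∂ν) ^ (1/2:ℝ)
      ≤ (∫⁻ x, gfun φs c x ^ (2:ℝ) ∂μ) ^ (1/2:ℝ) + gammaK φ μ ν := by
  rw [gammaK, iInf_rpow_half, ENNReal.add_iInf]
  exact le_iInf fun π => transport' hφ hφs hdom c π.2

/-- Real-valued square root of the clustering risk. -/
noncomputable def sqw {m : ℕ} (φs : Fin m → E → H) (c : Fin m → H) (lam : Measure E) : ℝ :=
  ((∫⁻ x, gfun φs c x ^ (2:ℝ) ∂lam) ^ (1/2:ℝ)).toReal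

lemma sqw_nonneg {m : ℕ} (φs : Fin m → E → H) (c : Fin m → H) (lam : Measure E) :
    0 ≤ sqw φs c lam := ENNReal.toReal_nonneg

lemma clusterRisk_eq_sq_sqw {m : ℕ} (hm : 0 < m) {φs : Fin m → E → H}
    (hφs : ∀ j, Measurable (φs j)) (c : Fin m → H) (lam : Measure E)
    (hfin : ∫⁻ x, gfun φs c x ^ (2:ℝ) ∂lam ≠ ⊤) :
    clusterRisk φs c lam = sqw φs c lam ^ 2 := by
  rw [clusterRisk_eq_toReal hm hφs c lam, sqw]
  set t := ∫⁻ x, gfun φs c x ^ (2:ℝ) ∂lam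
  have ht : (0:ℝ) ≤ t.toReal := ENNReal.toReal_nonneg
  rw [← ENNReal.toReal_rpow, ← Real.rpow_natCast (ENNReal.toReal t ^ (1/2:ℝ)) 2,
    ← Real.rpow_mul ht]
  norm_num

lemma sqw_le_add {m : ℕ} {φ : E → H} (hφ : Measurable φ)
    {φs : Fin m → E → H} (hφs : ∀ j, Measurable (φs j))
    (hdom : ∀ (j : Fin m) (x y : E), ‖φs j x - φs j y‖ ≤ ‖φ x - φ y‖)
    (c : Fin m → H) {μ ν : Measure E} (hγ : gammaK φ μ ν ≠ ⊤)
    (hν_fin : ∫⁻ x, gfun φs c x ^ (2:ℝ) ∂ν ≠ ⊤) :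
    sqw φs c μ ≤ sqw φs c ν + (gammaK φ μ ν).toReal := by
  have h := lintegral_sq_le_add_gammaK hφ hφs hdom c μ ν
  have hνr : (∫⁻ x, gfun φs c x ^ (2:ℝ) ∂ν) ^ (1/2:ℝ) ≠ ⊤ :=
    (ENNReal.rpow_lt_top_of_nonneg (by norm_num) hν_fin).ne
  calc sqw φs c μ
      ≤ ((∫⁻ x, gfun φs c x ^ (2:ℝ) ∂ν) ^ (1/2:ℝ) + gammaK φ μ ν).toReal :=
        ENNReal.toReal_mono (ENNReal.add_ne_top.2 ⟨hνr, hγ⟩) h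
    _ = sqw φs c ν + (gammaK φ μ ν).toReal := ENNReal.toReal_add hνr hγ

lemma sqw_le_add' {m : ℕ} {φ : E → H} (hφ : Measurable φ)
    {φs : Fin m → E → H} (hφs : ∀ j, Measurable (φs j))
    (hdom : ∀ (j : Fin m) (x y : E), ‖φs j x - φs j y‖ ≤ ‖φ x - φ y‖)
    (c : Fin m → H) {μ ν : Measure E} (hγ : gammaK φ μ ν ≠ ⊤)
    (hμ_fin : ∫⁻ x, gfun φs c x ^ (2:ℝ) ∂μ ≠ ⊤) :
    sqw φs c ν ≤ sqw φs c μ + (gammaK φ μ ν).toReal := by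
  have h := lintegral_sq_le_add_gammaK' hφ hφs hdom c μ ν
  have hμr : (∫⁻ x, gfun φs c x ^ (2:ℝ) ∂μ) ^ (1/2:ℝ) ≠ ⊤ :=
    (ENNReal.rpow_lt_top_of_nonneg (by norm_num) hμ_fin).ne
  calc sqw φs c ν
      ≤ ((∫⁻ x, gfun φs c x ^ (2:ℝ) ∂μ) ^ (1/2:ℝ) + gammaK φ μ ν).toReal :=
        ENNReal.toReal_mono (ENNReal.add_ne_top.2 ⟨hμr, hγ⟩) h
    _ = sqw φs c μ + (gammaK φ μ ν).toReal := ENNReal.toReal_add hμr hγ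

end Aux

/-- Deterministic core of the consistency theorem: if `δ_n → 0`, `γ_φ(μ, ν_n) → 0`, and
`(a_n, c_n)` are `δ_n`-minimizers of the clustering risk for `ν_n`, then their clustering
risk for `μ` converges to the optimal risk `W*(μ)`. -/
theorem clusterRisk_delta_minimizers_tendsto_optRisk
    {E H : Type*} [MeasurableSpace E]
    [NormedAddCommGroup H] [InnerProductSpace ℝ H] [CompleteSpace H]
    [MeasurableSpace H] [BorelSpace H]
    {m : ℕ} (hm : 0 < m) {Λ : Type*} [Fintype Λ] [Nonempty Λ]
    (φ : E → H) (hφ : Measurable φ)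
    (φs : Λ → Fin m → E → H) (hφs : ∀ a j, Measurable (φs a j))
    (hdom : ∀ (a : Λ) (j : Fin m) (x y : E), ‖φs a j x - φs a j y‖ ≤ ‖φ x - φ y‖)
    (μ : Measure E) [IsProbabilityMeasure μ]
    (ν : ℕ → Measure E) (hν : ∀ n, IsProbabilityMeasure (ν n))
    (hμint : ∀ a j, Integrable (fun x => ‖φs a j x‖ ^ 2) μ)
    (hνint : ∀ n a j, Integrable (fun x => ‖φs a j x‖ ^ 2) (ν n))
    (δ : ℕ → ℝ) (hδ0 : ∀ n, 0 ≤ δ n) (hδ : Tendsto δ atTop (nhds 0))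
    (hγ : Tendsto (fun n => gammaK φ μ (ν n)) atTop (nhds 0))
    (a : ℕ → Λ) (c : ℕ → Fin m → H)
    (hmin : ∀ n, clusterRisk (φs (a n)) (c n) (ν n) ≤ optRisk φs (ν n) + δ n) :
    Tendsto (fun n => clusterRisk (φs (a n)) (c n) μ) atTop (nhds (optRisk φs μ)) := by
  haveI : Nonempty (Fin m) := ⟨⟨0, hm⟩⟩
  have hCR_nonneg : ∀ (b : Λ) (d : Fin m → H) (lam : Measure E),
      0 ≤ clusterRisk (φs b) d lam := fun b d lam =>
    integral_nonneg fun x => Real.iInf_nonneg fun j => by positivity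
  have hinner_nonneg : ∀ (b : Λ) (lam : Measure E),
      (0:ℝ) ≤ ⨅ d : Fin m → H, clusterRisk (φs b) d lam := fun b lam =>
    Real.iInf_nonneg fun d => hCR_nonneg b d lam
  have hopt_le : ∀ (b : Λ) (d : Fin m → H) (lam : Measure E),
      optRisk φs lam ≤ clusterRisk (φs b) d lam := by
    intro b d lam
    refine le_trans (ciInf_le ⟨0, ?_⟩ b) (ciInf_le ⟨0, ?_⟩ d)
    · rintro _ ⟨b', rfl⟩; exact hinner_nonneg b' lam
    · rintro _ ⟨d', rfl⟩; exact hCR_nonneg b d' lam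
  have hopt_nonneg : 0 ≤ optRisk φs μ := Real.iInf_nonneg fun b => hinner_nonneg b μ
  have hup : ∀ ε : ℝ, 0 < ε →
      ∀ᶠ n in atTop, clusterRisk (φs (a n)) (c n) μ ≤ optRisk φs μ + ε := by
    intro ε hε
    have h0 : (⨅ b : Λ, ⨅ d : Fin m → H, clusterRisk (φs b) d μ) < optRisk φs μ + ε/2 := by
      show optRisk φs μ < optRisk φs μ + ε/2
      linarith
    obtain ⟨b0, hb⟩ := exists_lt_of_ciInf_lt h0
    obtain ⟨d0, hd⟩ := exists_lt_of_ciInf_lt hb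
    set s : ℝ := Real.sqrt (optRisk φs μ + ε/2) with hs
    have hs0 : 0 ≤ s := Real.sqrt_nonneg _
    have hs2 : s ^ 2 = optRisk φs μ + ε/2 := Real.sq_sqrt (by linarith)
    have hμfinb : ∫⁻ x, gfun (φs b0) d0 x ^ (2:ℝ) ∂μ ≠ ⊤ :=
      lintegral_gfun_sq_ne_top hm (hφs b0) d0 μ (hμint b0)
    have hsqwb : sqw (φs b0) d0 μ ≤ s := by
      have h1 : sqw (φs b0) d0 μ ^ 2 ≤ s ^ 2 := by
        rw [hs2, ← clusterRisk_eq_sq_sqw hm (hφs b0) d0 μ hμfinb]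
        exact hd.le
      exact le_of_pow_le_pow_left₀ two_ne_zero hs0 h1
    set t₀ : ℝ := min 1 (ε/2 / (2*s+1)) with ht₀
    have ht₀pos : 0 < t₀ := lt_min one_pos (by positivity)
    have hev1 : ∀ᶠ n in atTop, gammaK φ μ (ν n) < ENNReal.ofReal (t₀/4) :=
      hγ.eventually_lt_const (ENNReal.ofReal_pos.2 (by positivity))
    have hev2 : ∀ᶠ n in atTop, δ n < (t₀/2)^2 := hδ.eventually_lt_const (by positivity)
    filter_upwards [hev1, hev2] with n h1n h2n
    haveI := hν n
    set γ' : ℝ := (gammaK φ μ (ν n)).toReal with hγ'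
    have hγne : gammaK φ μ (ν n) ≠ ⊤ := h1n.ne_top
    have hγ'0 : 0 ≤ γ' := ENNReal.toReal_nonneg
    have hγ'le : γ' ≤ t₀/4 := ENNReal.toReal_le_of_le_ofReal (by positivity) h1n.le
    have hνfina : ∫⁻ x, gfun (φs (a n)) (c n) x ^ (2:ℝ) ∂(ν n) ≠ ⊤ :=
      lintegral_gfun_sq_ne_top hm (hφs (a n)) (c n) (ν n) (hνint n (a n))
    have hνfinb : ∫⁻ x, gfun (φs b0) d0 x ^ (2:ℝ) ∂(ν n) ≠ ⊤ :=
      lintegral_gfun_sq_ne_top hm (hφs b0) d0 (ν n) (hνint n b0)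
    have hμfina : ∫⁻ x, gfun (φs (a n)) (c n) x ^ (2:ℝ) ∂μ ≠ ⊤ :=
      lintegral_gfun_sq_ne_top hm (hφs (a n)) (c n) μ (hμint (a n))
    have e1 : sqw (φs (a n)) (c n) μ ≤ sqw (φs (a n)) (c n) (ν n) + γ' :=
      sqw_le_add hφ (hφs (a n)) (hdom (a n)) (c n) hγne hνfina
    have e3 : sqw (φs b0) d0 (ν n) ≤ s + γ' := by
      have h := sqw_le_add' hφ (hφs b0) (hdom b0) d0 hγne hμfinb
      linarith
    have e2 : sqw (φs (a n)) (c n) (ν n) ^ 2 ≤ (s + γ') ^ 2 + δ n := by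
      calc sqw (φs (a n)) (c n) (ν n) ^ 2
          = clusterRisk (φs (a n)) (c n) (ν n) :=
            (clusterRisk_eq_sq_sqw hm (hφs (a n)) (c n) (ν n) hνfina).symm
        _ ≤ optRisk φs (ν n) + δ n := hmin n
        _ ≤ clusterRisk (φs b0) d0 (ν n) + δ n := by
            linarith [hopt_le b0 d0 (ν n)]
        _ = sqw (φs b0) d0 (ν n) ^ 2 + δ n := by
            rw [clusterRisk_eq_sq_sqw hm (hφs b0) d0 (ν n) hνfinb]
        _ ≤ (s + γ') ^ 2 + δ n := by
            have := pow_le_pow_left₀ (sqw_nonneg (φs b0) d0 (ν n)) e3 2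
            linarith
    have e4 : sqw (φs (a n)) (c n) (ν n) ≤ s + γ' + t₀/2 := by
      refine le_of_pow_le_pow_left₀ two_ne_zero (by linarith) ?_
      nlinarith [e2, h2n.le, mul_nonneg (add_nonneg hs0 hγ'0) ht₀pos.le]
    have e5 : sqw (φs (a n)) (c n) μ ≤ s + t₀ := by linarith
    rw [clusterRisk_eq_sq_sqw hm (hφs (a n)) (c n) μ hμfina]
    have h6 : sqw (φs (a n)) (c n) μ ^ 2 ≤ (s + t₀) ^ 2 :=
      pow_le_pow_left₀ (sqw_nonneg _ _ _) e5 2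
    have h7 : t₀ * (2*s+1) ≤ ε/2 := by
      have hle : t₀ ≤ ε/2/(2*s+1) := min_le_right _ _
      have h2s : (0:ℝ) < 2*s+1 := by linarith
      calc t₀ * (2*s+1) ≤ (ε/2/(2*s+1)) * (2*s+1) :=
            mul_le_mul_of_nonneg_right hle h2s.le
        _ = ε/2 := div_mul_cancel₀ _ h2s.ne'
    have ht₀1 : t₀ ≤ 1 := min_le_left _ _
    have h8 : t₀ ^ 2 ≤ t₀ := by nlinarith
    nlinarith [h6, h7, h8, hs2]
  rw [Metric.tendsto_atTop]
  intro ε hε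
  obtain ⟨N, hN⟩ := eventually_atTop.1 (hup (ε/2) (by linarith))
  refine ⟨N, fun n hn => ?_⟩
  have h1 := hN n hn
  have h2 := hopt_le (a n) (c n) μ
  rw [Real.dist_eq, abs_of_nonneg (by linarith)]
  linarith
end

section
/- Let E be a measurable space, H a real Hilbert space with its Borel σ-algebra, and φ : E → H a measurable embedding (injective, measurable, carrying measurable sets to measurable sets). Let μ, η be probability measures on E and suppose π* is a coupling of (μ, η) attaining the infimum over couplings π of ∫ ‖φ(x) − φ(y)‖² dπ. Then the pushforward (φ, φ)♯π* (under the map (x, y) ↦ (φ(x), φ(y))) is a coupling of (φ♯μ, φ♯η) attaining the infimum over couplings π_k of (φ♯μ, φ♯η) of ∫ ‖u − v‖² dπ_k. -/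
open MeasureTheory
open scoped ENNReal

/-- If `π*` is an optimal coupling of `(μ, η)` for the cost `‖φ(x) − φ(y)‖²` and `φ` is a
measurable embedding, then the push-forward `(φ, φ)♯π*` is an optimal coupling of the
push-forward measures `(φ♯μ, φ♯η)` for the cost `‖u − v‖²`. -/
theorem pushforward_optimal_coupling
    {E H : Type*} [MeasurableSpace E]
    [NormedAddCommGroup H] [InnerProductSpace ℝ H] [CompleteSpace H]
    [MeasurableSpace H] [BorelSpace H]
    (φ : E → H) (hφ : MeasurableEmbedding φ)
    (μ η : Measure E) [IsProbabilityMeasure μ] [IsProbabilityMeasure η]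
    (πstar : Measure (E × E)) (hπstar : IsCoupling πstar μ η)
    (hopt : ∀ π : Measure (E × E), IsCoupling π μ η →
      (∫⁻ p, ENNReal.ofReal (‖φ p.1 - φ p.2‖ ^ 2) ∂πstar) ≤
        ∫⁻ p, ENNReal.ofReal (‖φ p.1 - φ p.2‖ ^ 2) ∂π) :
    IsCoupling (πstar.map (Prod.map φ φ)) (μ.map φ) (η.map φ) ∧
      ∀ πk : Measure (H × H), IsCoupling πk (μ.map φ) (η.map φ) →
        (∫⁻ q : H × H, ENNReal.ofReal (‖q.1 - q.2‖ ^ 2) ∂(πstar.map (Prod.map φ φ))) ≤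
          ∫⁻ q : H × H, ENNReal.ofReal (‖q.1 - q.2‖ ^ 2) ∂πk := by
  obtain ⟨hprob, hfst, hsnd⟩ := hπstar
  have hφφ : MeasurableEmbedding (Prod.map φ φ) := hφ.prodMap hφ
  -- marginals of the pushforward
  have hfst' : (πstar.map (Prod.map φ φ)).map Prod.fst = μ.map φ := by
    rw [Measure.map_map measurable_fst hφφ.measurable]
    have : (Prod.fst ∘ Prod.map φ φ : E × E → H) = φ ∘ Prod.fst := rfl
    rw [this, ← Measure.map_map hφ.measurable measurable_fst, hfst]
  have hsnd' : (πstar.map (Prod.map φ φ)).map Prod.snd = η.map φ := by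
    rw [Measure.map_map measurable_snd hφφ.measurable]
    have : (Prod.snd ∘ Prod.map φ φ : E × E → H) = φ ∘ Prod.snd := rfl
    rw [this, ← Measure.map_map hφ.measurable measurable_snd, hsnd]
  have hcoupling : IsCoupling (πstar.map (Prod.map φ φ)) (μ.map φ) (η.map φ) :=
    ⟨Measure.isProbabilityMeasure_map hφφ.measurable.aemeasurable, hfst', hsnd'⟩
  refine ⟨hcoupling, fun πk hπk => ?_⟩
  obtain ⟨hkprob, hkfst, hksnd⟩ := hπk
  -- πk is concentrated on (range φ) ×ˢ (range φ) = range (Prod.map φ φ)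
  have hr : MeasurableSet (Set.range φ) := hφ.measurableSet_range
  have hnull : πk (Set.range (Prod.map φ φ))ᶜ = 0 := by
    have hsub : (Set.range (Prod.map φ φ))ᶜ ⊆
        (Prod.fst ⁻¹' (Set.range φ)ᶜ) ∪ (Prod.snd ⁻¹' (Set.range φ)ᶜ) := by
      intro q hq
      rw [Set.range_prodMap] at hq
      by_contra h
      simp only [Set.mem_union, Set.mem_preimage, Set.mem_compl_iff, not_or, not_not] at h
      exact hq ⟨h.1, h.2⟩
    refine le_antisymm (le_trans (measure_mono hsub) ?_) zero_le
    refine le_trans (measure_union_le _ _) ?_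
    have h1 : πk (Prod.fst ⁻¹' (Set.range φ)ᶜ) = 0 := by
      have := congrArg (fun ν : Measure H => ν (Set.range φ)ᶜ) hkfst
      simp only [Measure.map_apply measurable_fst hr.compl,
        Measure.map_apply hφ.measurable hr.compl] at this
      rw [this]
      simp [Set.preimage_compl]
    have h2 : πk (Prod.snd ⁻¹' (Set.range φ)ᶜ) = 0 := by
      have := congrArg (fun ν : Measure H => ν (Set.range φ)ᶜ) hksnd
      simp only [Measure.map_apply measurable_snd hr.compl,
        Measure.map_apply hφ.measurable hr.compl] at this
      rw [this]
      simp [Set.preimage_compl]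
    rw [h1, h2, add_zero]
  -- pull back πk to a coupling of (μ, η)
  set π : Measure (E × E) := πk.comap (Prod.map φ φ) with hπdef
  have hmapπ : π.map (Prod.map φ φ) = πk := by
    rw [hπdef, hφφ.map_comap]
    exact Measure.restrict_eq_self_of_ae_mem (MeasureTheory.ae_iff.mpr hnull)
  have hπprob : IsProbabilityMeasure π := by
    constructor
    have := congrArg (fun ν : Measure (H × H) => ν Set.univ) hmapπ
    simp only [Measure.map_apply hφφ.measurable MeasurableSet.univ, Set.preimage_univ] at this
    rw [this, measure_univ]
  have hπfst : π.map Prod.fst = μ := by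
    have h1 : (π.map (Prod.map φ φ)).map Prod.fst = μ.map φ := by rw [hmapπ, hkfst]
    rw [Measure.map_map measurable_fst hφφ.measurable] at h1
    have h2 : (Prod.fst ∘ Prod.map φ φ : E × E → H) = φ ∘ Prod.fst := rfl
    rw [h2, ← Measure.map_map hφ.measurable measurable_fst] at h1
    have := congrArg (Measure.comap φ) h1
    rwa [hφ.comap_map, hφ.comap_map] at this
  have hπsnd : π.map Prod.snd = η := by
    have h1 : (π.map (Prod.map φ φ)).map Prod.snd = η.map φ := by rw [hmapπ, hksnd]
    rw [Measure.map_map measurable_snd hφφ.measurable] at h1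
    have h2 : (Prod.snd ∘ Prod.map φ φ : E × E → H) = φ ∘ Prod.snd := rfl
    rw [h2, ← Measure.map_map hφ.measurable measurable_snd] at h1
    have := congrArg (Measure.comap φ) h1
    rwa [hφ.comap_map, hφ.comap_map] at this
  -- conclude by transferring the integrals
  calc (∫⁻ q : H × H, ENNReal.ofReal (‖q.1 - q.2‖ ^ 2) ∂(πstar.map (Prod.map φ φ)))
      = ∫⁻ p, ENNReal.ofReal (‖φ p.1 - φ p.2‖ ^ 2) ∂πstar := by
        rw [hφφ.lintegral_map]; rfl
    _ ≤ ∫⁻ p, ENNReal.ofReal (‖φ p.1 - φ p.2‖ ^ 2) ∂π :=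
        hopt π ⟨hπprob, hπfst, hπsnd⟩
    _ = ∫⁻ q : H × H, ENNReal.ofReal (‖q.1 - q.2‖ ^ 2) ∂πk := by
        rw [← hmapπ, hφφ.lintegral_map]; rfl
end

section
/- (Lemma 3, part 1.) Let E be a complete separable metric space equipped with its Borel σ-algebra, H a real Hilbert space, and φ : E → H a continuous map. Let μ be a Borel probability measure on E with ∫ ‖φ(x)‖² dμ(x) < ∞, and let X_0, X_1, X_2, … be independent and identically distributed random elements with values in E, defined on a probability space (Ω, 𝔽, P), each with law μ. For ω ∈ Ω and n ≥ 1 let μ_n^ω = (1/n) Σ_{i=0}^{n−1} δ_{X_i(ω)} denote the empirical measure. Then for P-almost every ω, γ_φ(μ, μ_n^ω) → 0 in [0, ∞] as n → ∞. -/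
open MeasureTheory Filter ProbabilityTheory Set
open scoped ENNReal Topology

/-- The empirical measure `μ_n^ω = (1/n) Σ_{i<n} δ_{X_i(ω)}`. -/
noncomputable def empMeasure {E Ω : Type*} [MeasurableSpace E]
    (X : ℕ → Ω → E) (n : ℕ) (ω : Ω) : Measure E :=
  (n : ℝ≥0∞)⁻¹ • ∑ i ∈ Finset.range n, Measure.dirac (X i ω)

lemma slln_comp {E : Type*} [MeasurableSpace E]
    {Ω : Type*} [MeasurableSpace Ω] (P : Measure Ω) [IsProbabilityMeasure P]
    (X : ℕ → Ω → E) (hXm : ∀ i, Measurable (X i))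
    (hindep : ProbabilityTheory.iIndepFun
      X P)
    (μ : Measure E)
    (hident : ∀ i, P.map (X i) = μ)
    (f : E → ℝ) (hf : Measurable f) (hfi : Integrable f μ) :
    ∀ᵐ ω ∂P, Tendsto (fun n : ℕ => (n : ℝ)⁻¹ • ∑ i ∈ Finset.range n, f (X i ω))
      atTop (𝓝 (∫ x, f x ∂μ)) := by
  have hint : Integrable (f ∘ X 0) P := by
    rw [← integrable_map_measure (by rw [hident 0]; exact hfi.aestronglyMeasurable)
      (hXm 0).aemeasurable, hident 0]
    exact hfi
  have hindep' : Pairwise (Function.onFun (IndepFun · · P) (fun i => f ∘ X i)) := by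
    intro i j hij
    exact (hindep.indepFun hij).comp hf hf
  have hident' : ∀ i, IdentDistrib (f ∘ X i) (f ∘ X 0) P P := by
    intro i
    refine ⟨(hf.comp (hXm i)).aemeasurable, (hf.comp (hXm 0)).aemeasurable, ?_⟩
    rw [← Measure.map_map hf (hXm i), ← Measure.map_map hf (hXm 0), hident i, hident 0]
  have h := strong_law_ae (fun i => f ∘ X i) hint hindep' hident'
  have hEq : P[f ∘ X 0] = ∫ x, f x ∂μ := by
    rw [← hident 0, integral_map (hXm 0).aemeasurable
      (by rw [hident 0]; exact hfi.aestronglyMeasurable)]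
    rfl
  rw [hEq] at h
  exact h

lemma coupling_cost_bound {E : Type*} [MeasurableSpace E]
    (μ ν : Measure E) [IsProbabilityMeasure μ] [IsProbabilityMeasure ν]
    (c : E × E → ℝ≥0∞) (hc : Measurable c)
    (g : E → ℝ≥0∞) (hg : Measurable g)
    (hcg : ∀ p : E × E, c p ≤ 2 * g p.1 + 2 * g p.2)
    (K : ℕ) (B : ℕ → Set E) (hBm : ∀ j, MeasurableSet (B j))
    (hBd : Pairwise (Function.onFun Disjoint B))
    (hBu : (⋃ j ∈ Finset.range K, B j) = Set.univ)
    (m : ℕ → ℝ≥0∞) (hma : ∀ j, m j ≤ μ (B j)) (hmb : ∀ j, m j ≤ ν (B j))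
    (D : ℕ → ℝ≥0∞) (hD : ∀ j, ∀ x ∈ B j, ∀ y ∈ B j, c (x, y) ≤ D j) :
    ∃ π : Measure (E × E), IsCoupling π μ ν ∧
      ∫⁻ p, c p ∂π ≤ (∑ j ∈ Finset.range K, m j * D j)
        + 2 * ∑ j ∈ Finset.range K,
            ((μ (B j) - m j) * ((μ (B j))⁻¹ * ∫⁻ x in B j, g x ∂μ))
        + 2 * ∑ j ∈ Finset.range K,
            ((ν (B j) - m j) * ((ν (B j))⁻¹ * ∫⁻ x in B j, g x ∂ν)) := by
  classical
  set a : ℕ → ℝ≥0∞ := fun j => μ (B j) with ha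
  set b : ℕ → ℝ≥0∞ := fun j => ν (B j) with hb
  set μI : ℕ → Measure E := fun j => if a j = 0 then μ else (a j)⁻¹ • μ.restrict (B j) with hμI
  set νI : ℕ → Measure E := fun j => if b j = 0 then ν else (b j)⁻¹ • ν.restrict (B j) with hνI
  have hBd' : PairwiseDisjoint (↑(Finset.range K) : Set ℕ) B := fun i _ j _ hij => hBd hij
  have haK : ∑ j ∈ Finset.range K, a j = 1 := by
    rw [← measure_biUnion_finset hBd' (fun j _ => hBm j), hBu, measure_univ]
  have hbK : ∑ j ∈ Finset.range K, b j = 1 := by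
    rw [← measure_biUnion_finset hBd' (fun j _ => hBm j), hBu, measure_univ]
  have hμIprob : ∀ j, IsProbabilityMeasure (μI j) := by
    intro j
    simp only [hμI]
    split_ifs with h
    · infer_instance
    · exact ⟨by simp [Measure.smul_apply, Measure.restrict_apply_univ]; exact
        ENNReal.inv_mul_cancel h (measure_ne_top μ _)⟩
  have hνIprob : ∀ j, IsProbabilityMeasure (νI j) := by
    intro j
    simp only [hνI]
    split_ifs with h
    · infer_instance
    · exact ⟨by simp [Measure.smul_apply, Measure.restrict_apply_univ]; exact
        ENNReal.inv_mul_cancel h (measure_ne_top ν _)⟩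
  have hμIsmul : ∀ j, a j • μI j = μ.restrict (B j) := by
    intro j
    simp only [hμI]
    split_ifs with h
    · rw [h, zero_smul, eq_comm, Measure.restrict_eq_zero]; exact h
    · rw [smul_smul, ENNReal.mul_inv_cancel h (measure_ne_top μ _), one_smul]
  have hνIsmul : ∀ j, b j • νI j = ν.restrict (B j) := by
    intro j
    simp only [hνI]
    split_ifs with h
    · rw [h, zero_smul, eq_comm, Measure.restrict_eq_zero]; exact h
    · rw [smul_smul, ENNReal.mul_inv_cancel h (measure_ne_top ν _), one_smul]
  set ρ : Measure E := ∑ j ∈ Finset.range K, (a j - m j) • μI j with hρ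
  set σ : Measure E := ∑ j ∈ Finset.range K, (b j - m j) • νI j with hσ
  set r : ℝ≥0∞ := 1 - ∑ j ∈ Finset.range K, m j with hr
  have hmK : ∑ j ∈ Finset.range K, m j ≤ 1 := by
    rw [← haK]; exact Finset.sum_le_sum (fun j _ => hma j)
  have hsum_split : ∀ (x : ℕ → ℝ≥0∞) (hx : ∀ j, m j ≤ x j)
      (hxK : ∑ j ∈ Finset.range K, x j = 1),
      ∑ j ∈ Finset.range K, (x j - m j) = r := by
    intro x hx hxK
    have : ∑ j ∈ Finset.range K, (x j - m j) + ∑ j ∈ Finset.range K, m j = 1 := by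
      rw [← Finset.sum_add_distrib, ← hxK]
      exact Finset.sum_congr rfl (fun j _ => tsub_add_cancel_of_le (hx j))
    rw [hr, eq_comm]
    exact ENNReal.sub_eq_of_eq_add_rev (ne_top_of_le_ne_top ENNReal.one_ne_top hmK) (by rw [add_comm]; exact this.symm)
  have hρuniv : ρ univ = r := by
    rw [hρ]
    have : ∀ j ∈ Finset.range K, ((a j - m j) • μI j) univ = a j - m j := by
      intro j _
      haveI := hμIprob j
      simp [Measure.smul_apply]
    rw [Measure.finset_sum_apply, Finset.sum_congr rfl this]
    exact hsum_split a hma haK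
  have hσuniv : σ univ = r := by
    rw [hσ]
    have : ∀ j ∈ Finset.range K, ((b j - m j) • νI j) univ = b j - m j := by
      intro j _
      haveI := hνIprob j
      simp [Measure.smul_apply]
    rw [Measure.finset_sum_apply, Finset.sum_congr rfl this]
    exact hsum_split b hmb hbK
  have hrle : r ≤ 1 := tsub_le_self
  haveI hρfin : IsFiniteMeasure ρ := ⟨by rw [hρuniv]; exact hrle.trans_lt ENNReal.one_lt_top⟩
  haveI hσfin : IsFiniteMeasure σ := ⟨by rw [hσuniv]; exact hrle.trans_lt ENNReal.one_lt_top⟩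
  have hrne : r ≠ ⊤ := ne_top_of_le_ne_top ENNReal.one_ne_top hrle
  have hcancel : ∀ t : ℝ≥0∞, t ≤ r → r⁻¹ * (t * r) = t := by
    intro t ht
    rcases eq_or_ne r 0 with h0 | h0
    · rw [h0] at ht ⊢
      simp [le_zero_iff.mp ht]
    · rw [mul_comm t r, ← mul_assoc, ENNReal.inv_mul_cancel h0 hrne, one_mul]
  set π : Measure (E × E) :=
    (∑ j ∈ Finset.range K, m j • ((μI j).prod (νI j))) + r⁻¹ • ρ.prod σ with hπ
  have hsplit : ∀ (θ : Measure E) (x : ℕ → ℝ≥0∞) (κ : ℕ → Measure E)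
      (hxs : ∀ j, x j • κ j = θ.restrict (B j))
      (s : Set E), MeasurableSet s →
      (∑ j ∈ Finset.range K, x j * κ j s) = θ s := by
    intro θ x κ hxs s hs
    have h2 : ∀ j ∈ Finset.range K, x j * κ j s = θ (s ∩ B j) := by
      intro j _
      have := congrArg (fun (τ : Measure E) => τ s) (hxs j)
      simp only [Measure.smul_apply, smul_eq_mul] at this
      rw [this, Measure.restrict_apply hs]
    rw [Finset.sum_congr rfl h2]
    have hd2 : PairwiseDisjoint (↑(Finset.range K) : Set ℕ) (fun j => s ∩ B j) := by
      intro i hi j hj hij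
      exact ((hBd hij).mono inter_subset_right inter_subset_right)
    rw [← measure_biUnion_finset hd2 (fun j _ => hs.inter (hBm j)), ← inter_iUnion₂, hBu,
      inter_univ]
  have hmapfst : π.map Prod.fst = μ := by
    ext s hs
    rw [Measure.map_apply measurable_fst hs]
    have hpre : (Prod.fst ⁻¹' s : Set (E × E)) = s ×ˢ univ := by ext p; simp
    rw [hpre, hπ, Measure.add_apply, Measure.smul_apply, Measure.finset_sum_apply, smul_eq_mul]
    have h1 : ∀ j ∈ Finset.range K, (m j • ((μI j).prod (νI j))) (s ×ˢ univ)
        = m j * μI j s := by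
      intro j _
      haveI := hνIprob j
      rw [Measure.smul_apply, smul_eq_mul, Measure.prod_prod, measure_univ, mul_one]
    have h2 : (ρ.prod σ) (s ×ˢ univ) = ρ s * r := by
      rw [Measure.prod_prod, hσuniv]
    have h3 : ρ s = ∑ j ∈ Finset.range K, (a j - m j) * μI j s := by
      rw [hρ, Measure.finset_sum_apply]
      exact Finset.sum_congr rfl (fun j _ => by rw [Measure.smul_apply, smul_eq_mul])
    have hρs : ρ s ≤ r := by rw [← hρuniv]; exact measure_mono (subset_univ s)
    rw [Finset.sum_congr rfl h1, h2, hcancel _ hρs, h3, ← Finset.sum_add_distrib]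
    have h4 : ∀ j ∈ Finset.range K, m j * μI j s + (a j - m j) * μI j s = a j * μI j s := by
      intro j _
      rw [← add_mul, add_tsub_cancel_of_le (hma j)]
    rw [Finset.sum_congr rfl h4]
    exact hsplit μ a μI hμIsmul s hs
  have hmapsnd : π.map Prod.snd = ν := by
    ext s hs
    rw [Measure.map_apply measurable_snd hs]
    have hpre : (Prod.snd ⁻¹' s : Set (E × E)) = univ ×ˢ s := by ext p; simp
    rw [hpre, hπ, Measure.add_apply, Measure.smul_apply, Measure.finset_sum_apply, smul_eq_mul]
    have h1 : ∀ j ∈ Finset.range K, (m j • ((μI j).prod (νI j))) (univ ×ˢ s)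
        = m j * νI j s := by
      intro j _
      haveI := hμIprob j
      rw [Measure.smul_apply, smul_eq_mul, Measure.prod_prod, measure_univ, one_mul]
    have h2 : (ρ.prod σ) (univ ×ˢ s) = σ s * r := by
      rw [Measure.prod_prod, hρuniv, mul_comm]
    have h3 : σ s = ∑ j ∈ Finset.range K, (b j - m j) * νI j s := by
      rw [hσ, Measure.finset_sum_apply]
      exact Finset.sum_congr rfl (fun j _ => by rw [Measure.smul_apply, smul_eq_mul])
    have hσs : σ s ≤ r := by rw [← hσuniv]; exact measure_mono (subset_univ s)
    rw [Finset.sum_congr rfl h1, h2, hcancel _ hσs, h3, ← Finset.sum_add_distrib]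
    have h4 : ∀ j ∈ Finset.range K, m j * νI j s + (b j - m j) * νI j s = b j * νI j s := by
      intro j _
      rw [← add_mul, add_tsub_cancel_of_le (hmb j)]
    rw [Finset.sum_congr rfl h4]
    exact hsplit ν b νI hνIsmul s hs
  have hπprob : IsProbabilityMeasure π := by
    constructor
    have : π univ = (π.map Prod.fst) univ := by
      rw [Measure.map_apply measurable_fst MeasurableSet.univ]; rfl
    rw [this, hmapfst, measure_univ]
  refine ⟨π, ⟨hπprob, hmapfst, hmapsnd⟩, ?_⟩
  rw [hπ, lintegral_add_measure, lintegral_finset_sum_measure, lintegral_smul_measure]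
  have hA : ∑ j ∈ Finset.range K, ∫⁻ p, c p ∂(m j • (μI j).prod (νI j)) ≤
      ∑ j ∈ Finset.range K, m j * D j := by
    refine Finset.sum_le_sum (fun j _ => ?_)
    rw [lintegral_smul_measure, smul_eq_mul]
    by_cases hm0 : m j = 0
    · simp [hm0]
    have haj : a j ≠ 0 := fun h => hm0 (le_antisymm (h ▸ hma j) zero_le)
    have hbj : b j ≠ 0 := fun h => hm0 (le_antisymm (h ▸ hmb j) zero_le)
    refine mul_le_mul_right ?_ (m j)
    haveI := hμIprob j; haveI := hνIprob j
    have hμc : μI j ((B j)ᶜ) = 0 := by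
      simp only [hμI, if_neg haj, Measure.smul_apply, smul_eq_mul,
        Measure.restrict_apply (hBm j).compl]
      simp
    have hνc : νI j ((B j)ᶜ) = 0 := by
      simp only [hνI, if_neg hbj, Measure.smul_apply, smul_eq_mul,
        Measure.restrict_apply (hBm j).compl]
      simp
    have hsupp : ((μI j).prod (νI j)) ((B j ×ˢ B j)ᶜ) = 0 := by
      have hsub : (B j ×ˢ B j)ᶜ ⊆ ((B j)ᶜ ×ˢ univ) ∪ (univ ×ˢ (B j)ᶜ) := by
        intro p hp
        simp only [mem_compl_iff, mem_prod, not_and_or] at hp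
        rcases hp with h | h
        · exact Or.inl ⟨h, mem_univ _⟩
        · exact Or.inr ⟨mem_univ _, h⟩
      refine le_antisymm (le_trans (measure_mono hsub) ?_) zero_le
      refine le_trans (measure_union_le _ _) ?_
      rw [Measure.prod_prod, Measure.prod_prod, hμc, hνc]
      simp
    have hae : ∀ᵐ p ∂((μI j).prod (νI j)), c p ≤ D j := by
      rw [ae_iff]
      refine measure_mono_null ?_ hsupp
      intro p hp
      simp only [mem_setOf_eq] at hp
      intro hmem
      rw [mem_prod] at hmem
      exact hp (by simpa using hD j p.1 hmem.1 p.2 hmem.2)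
    calc ∫⁻ p, c p ∂((μI j).prod (νI j)) ≤ ∫⁻ _, D j ∂((μI j).prod (νI j)) :=
          lintegral_mono_ae hae
      _ = D j := by rw [lintegral_const, measure_univ, mul_one]
  have hgρ : ∫⁻ x, g x ∂ρ ≤
      ∑ j ∈ Finset.range K, ((a j - m j) * ((a j)⁻¹ * ∫⁻ x in B j, g x ∂μ)) := by
    rw [hρ, lintegral_finset_sum_measure]
    refine Finset.sum_le_sum (fun j _ => ?_)
    rw [lintegral_smul_measure]
    by_cases haj : a j = 0
    · have : m j = 0 := le_antisymm (haj ▸ hma j) zero_le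
      simp [haj, this]
    · simp only [hμI, if_neg haj, lintegral_smul_measure]
      exact le_refl _
  have hgσ : ∫⁻ x, g x ∂σ ≤
      ∑ j ∈ Finset.range K, ((b j - m j) * ((b j)⁻¹ * ∫⁻ x in B j, g x ∂ν)) := by
    rw [hσ, lintegral_finset_sum_measure]
    refine Finset.sum_le_sum (fun j _ => ?_)
    rw [lintegral_smul_measure]
    by_cases hbj : b j = 0
    · have : m j = 0 := le_antisymm (hbj ▸ hmb j) zero_le
      simp [hbj, this]
    · simp only [hνI, if_neg hbj, lintegral_smul_measure]
      exact le_refl _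
  have hgfst : ∫⁻ p, g p.1 ∂(ρ.prod σ) = r * ∫⁻ x, g x ∂ρ := by
    calc ∫⁻ p, g p.1 ∂(ρ.prod σ) = ∫⁻ x, g x ∂((ρ.prod σ).map Prod.fst) :=
          (lintegral_map hg measurable_fst).symm
      _ = r * ∫⁻ x, g x ∂ρ := by rw [Measure.map_fst_prod, lintegral_smul_measure, hσuniv, smul_eq_mul]
  have hgsnd : ∫⁻ p, g p.2 ∂(ρ.prod σ) = r * ∫⁻ x, g x ∂σ := by
    calc ∫⁻ p, g p.2 ∂(ρ.prod σ) = ∫⁻ x, g x ∂((ρ.prod σ).map Prod.snd) :=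
          (lintegral_map hg measurable_snd).symm
      _ = r * ∫⁻ x, g x ∂σ := by rw [Measure.map_snd_prod, lintegral_smul_measure, hρuniv, smul_eq_mul]
  have hrr : r⁻¹ * r ≤ 1 := by
    rcases eq_or_ne r 0 with h0 | h0
    · simp [h0]
    · rw [ENNReal.inv_mul_cancel h0 hrne]
  have hB : r⁻¹ * ∫⁻ p, c p ∂(ρ.prod σ) ≤
      2 * ∫⁻ x, g x ∂ρ + 2 * ∫⁻ x, g x ∂σ := by
    have h1 : ∫⁻ p, c p ∂(ρ.prod σ) ≤ r * (2 * ∫⁻ x, g x ∂ρ) + r * (2 * ∫⁻ x, g x ∂σ) := by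
      calc ∫⁻ p, c p ∂(ρ.prod σ) ≤ ∫⁻ p, (2 * g p.1 + 2 * g p.2) ∂(ρ.prod σ) :=
            lintegral_mono hcg
        _ = 2 * ∫⁻ p, g p.1 ∂(ρ.prod σ) + 2 * ∫⁻ p, g p.2 ∂(ρ.prod σ) := by
            have M1 : Measurable fun p : E × E => 2 * g p.1 :=
              (hg.comp measurable_fst).const_mul 2
            have Mf : Measurable fun p : E × E => g p.1 := hg.comp measurable_fst
            have Ms : Measurable fun p : E × E => g p.2 := hg.comp measurable_snd
            rw [lintegral_add_left M1, lintegral_const_mul 2 Mf, lintegral_const_mul 2 Ms]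
        _ = r * (2 * ∫⁻ x, g x ∂ρ) + r * (2 * ∫⁻ x, g x ∂σ) := by
            rw [hgfst, hgsnd]; ring
    calc r⁻¹ * ∫⁻ p, c p ∂(ρ.prod σ)
        ≤ r⁻¹ * (r * (2 * ∫⁻ x, g x ∂ρ) + r * (2 * ∫⁻ x, g x ∂σ)) := mul_le_mul_right h1 _
      _ = (r⁻¹ * r) * (2 * ∫⁻ x, g x ∂ρ) + (r⁻¹ * r) * (2 * ∫⁻ x, g x ∂σ) := by
          rw [mul_add]; ring
      _ ≤ 1 * (2 * ∫⁻ x, g x ∂ρ) + 1 * (2 * ∫⁻ x, g x ∂σ) := by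
          exact add_le_add (mul_le_mul_left hrr _) (mul_le_mul_left hrr _)
      _ = 2 * ∫⁻ x, g x ∂ρ + 2 * ∫⁻ x, g x ∂σ := by rw [one_mul, one_mul]
  calc (∑ j ∈ Finset.range K, ∫⁻ p, c p ∂(m j • (μI j).prod (νI j)))
        + r⁻¹ * ∫⁻ p, c p ∂(ρ.prod σ)
      ≤ (∑ j ∈ Finset.range K, m j * D j)
        + (2 * ∫⁻ x, g x ∂ρ + 2 * ∫⁻ x, g x ∂σ) := add_le_add hA hB
    _ ≤ (∑ j ∈ Finset.range K, m j * D j)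
        + (2 * ∑ j ∈ Finset.range K, ((a j - m j) * ((a j)⁻¹ * ∫⁻ x in B j, g x ∂μ))
          + 2 * ∑ j ∈ Finset.range K, ((b j - m j) * ((b j)⁻¹ * ∫⁻ x in B j, g x ∂ν))) := by
        exact add_le_add le_rfl (add_le_add (mul_le_mul_right hgρ _) (mul_le_mul_right hgσ _))
    _ = _ := by rw [← add_assoc]

lemma exists_partition {E : Type*} [MetricSpace E] [TopologicalSpace.SeparableSpace E]
    [Nonempty E] [MeasurableSpace E] [BorelSpace E]
    {H : Type*} [NormedAddCommGroup H] (φ : E → H) (hφ : Continuous φ)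
    (ε : ℝ) (hε : 0 < ε) :
    ∃ A : ℕ → Set E, (∀ j, MeasurableSet (A j)) ∧ Pairwise (Function.onFun Disjoint A) ∧
      (⋃ j, A j) = Set.univ ∧
      ∀ j, ∀ x ∈ A j, ∀ y ∈ A j, ‖φ x - φ y‖ < 2 * ε := by
  set u := TopologicalSpace.denseSeq E
  set U : ℕ → Set E := fun j => φ ⁻¹' Metric.ball (φ (u j)) ε with hU
  have hUopen : ∀ j, IsOpen (U j) := fun j => (Metric.isOpen_ball).preimage hφ
  have hUcover : (⋃ j, U j) = Set.univ := by
    refine Set.eq_univ_of_forall (fun x => ?_)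
    have hx : x ∈ closure (Set.range u) := by
      rw [(TopologicalSpace.denseRange_denseSeq E).closure_range]; trivial
    have h2 : φ x ∈ closure (φ '' Set.range u) :=
      image_closure_subset_closure_image hφ ⟨x, hx, rfl⟩
    rcases Metric.mem_closure_iff.1 h2 ε hε with ⟨b, ⟨y, ⟨j, rfl⟩, rfl⟩, hb⟩
    exact Set.mem_iUnion.2 ⟨j, by simpa [hU, Metric.mem_ball] using hb⟩
  refine ⟨disjointed U, fun j => MeasurableSet.disjointed
    (fun j => (hUopen j).measurableSet) j, disjoint_disjointed U, by
      rw [iUnion_disjointed, hUcover], ?_⟩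
  intro j x hx y hy
  have hx' := disjointed_subset U j hx
  have hy' := disjointed_subset U j hy
  rw [hU, Set.mem_preimage, Metric.mem_ball] at hx' hy'
  calc ‖φ x - φ y‖ = dist (φ x) (φ y) := (dist_eq_norm _ _).symm
    _ ≤ dist (φ x) (φ (u j)) + dist (φ (u j)) (φ y) := dist_triangle _ _ _
    _ < ε + ε := add_lt_add hx' (by rw [dist_comm]; exact hy')
    _ = 2 * ε := by ring

lemma tsub_min_left (a b : ℝ≥0∞) : a - min a b = a - b := by
  rcases le_total a b with h | h
  · rw [min_eq_left h, tsub_self, eq_comm, tsub_eq_zero_of_le h]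
  · rw [min_eq_right h]

lemma tsub_min_right (a b : ℝ≥0∞) : b - min a b = b - a := by
  rw [min_comm]; exact tsub_min_left b a

lemma sq_norm_sub_le {H : Type*} [NormedAddCommGroup H] (x y : H) :
    ENNReal.ofReal (‖x - y‖ ^ 2) ≤
      2 * ENNReal.ofReal (‖x‖ ^ 2) + 2 * ENNReal.ofReal (‖y‖ ^ 2) := by
  have h1 : ‖x - y‖ ^ 2 ≤ 2 * ‖x‖ ^ 2 + 2 * ‖y‖ ^ 2 := by
    nlinarith [norm_sub_le x y, norm_nonneg x, norm_nonneg y, norm_nonneg (x - y),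
      sq_nonneg (‖x‖ - ‖y‖)]
  calc ENNReal.ofReal (‖x - y‖ ^ 2) ≤ ENNReal.ofReal (2 * ‖x‖ ^ 2 + 2 * ‖y‖ ^ 2) :=
        ENNReal.ofReal_le_ofReal h1
    _ = 2 * ENNReal.ofReal (‖x‖ ^ 2) + 2 * ENNReal.ofReal (‖y‖ ^ 2) := by
        rw [ENNReal.ofReal_add (by positivity) (by positivity),
          ENNReal.ofReal_mul (by norm_num), ENNReal.ofReal_mul (by norm_num)]
        norm_num

lemma emp_lintegral {E Ω : Type*} [MeasurableSpace E]
    (X : ℕ → Ω → E) (n : ℕ) (ω : Ω) (h : E → ℝ≥0∞) (hh : Measurable h) :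
    ∫⁻ x, h x ∂(empMeasure X n ω) =
      (n : ℝ≥0∞)⁻¹ * ∑ i ∈ Finset.range n, h (X i ω) := by
  rw [empMeasure, lintegral_smul_measure, lintegral_finset_sum_measure]
  simp only [lintegral_dirac' _ hh, smul_eq_mul]

lemma emp_prob {E Ω : Type*} [MeasurableSpace E]
    (X : ℕ → Ω → E) (n : ℕ) (hn : 1 ≤ n) (ω : Ω) :
    IsProbabilityMeasure (empMeasure X n ω) := by
  constructor
  have h1 : empMeasure X n ω Set.univ = ∫⁻ _, (1 : ℝ≥0∞) ∂(empMeasure X n ω) := by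
    rw [lintegral_const, one_mul]
  rw [h1, emp_lintegral X n ω _ measurable_const]
  simp only [Finset.sum_const, Finset.card_range, nsmul_eq_mul, mul_one]
  have hn0 : (n : ℝ≥0∞) ≠ 0 := by exact_mod_cast Nat.one_le_iff_ne_zero.mp hn
  exact ENNReal.inv_mul_cancel hn0 (by simp)

lemma cost_tendsto_zero {E : Type*} [MeasurableSpace E]
    (μ : Measure E) [IsProbabilityMeasure μ]
    (c : E × E → ℝ≥0∞) (hc : Measurable c) (g : E → ℝ≥0∞) (hg : Measurable g)
    (hcg : ∀ p : E × E, c p ≤ 2 * g p.1 + 2 * g p.2)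
    (hgfin : ∫⁻ x, g x ∂μ ≠ ⊤)
    (ν : ℕ → Measure E) (hν : ∀ n, 1 ≤ n → IsProbabilityMeasure (ν n))
    (ε : ℕ → ℝ) (hε : ∀ m, 0 < ε m) (hε0 : Tendsto ε atTop (𝓝 (0:ℝ)))
    (B : ℕ → ℕ → Set E) (k : ℕ → ℕ)
    (hBm : ∀ m j, MeasurableSet (B m j))
    (hBd : ∀ m, Pairwise (Function.onFun Disjoint (B m)))
    (hBu : ∀ m, (⋃ j ∈ Finset.range (k m + 1), B m j) = Set.univ)
    (hD : ∀ m j, ∀ x ∈ B m (j+1), ∀ y ∈ B m (j+1), c (x,y) ≤ ENNReal.ofReal ((2 * ε m)^2))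
    (htail1 : ∀ m, μ (B m 0) ≤ ENNReal.ofReal (ε m))
    (htail2 : ∀ m, ∫⁻ x in B m 0, g x ∂μ ≤ ENNReal.ofReal (ε m))
    (hbE : ∀ m j, Tendsto (fun n => ν n (B m j)) atTop (𝓝 (μ (B m j))))
    (hIE : ∀ m j, Tendsto (fun n => ∫⁻ x in B m j, g x ∂(ν n)) atTop
      (𝓝 (∫⁻ x in B m j, g x ∂μ))) :
    Tendsto (fun n => ⨅ π : {π : Measure (E × E) // IsCoupling π μ (ν n)},
      ∫⁻ p, c p ∂π.1) atTop (𝓝 0) := by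
  rw [ENNReal.tendsto_nhds_zero]
  intro δ hδ
  -- choose m with small bound
  have hbnd : Tendsto (fun m => ENNReal.ofReal ((2 * ε m)^2 + 5 * ε m)) atTop (𝓝 0) := by
    have h1 : Tendsto (fun m => (2 * ε m)^2 + 5 * ε m) atTop (𝓝 0) := by
      have h2 : Tendsto (fun m => (2 * ε m)) atTop (𝓝 (2 * 0)) := hε0.const_mul 2
      have h3 := (h2.pow 2).add (hε0.const_mul 5)
      simpa using h3
    have := (ENNReal.continuous_ofReal.tendsto (0:ℝ)).comp h1
    rw [ENNReal.ofReal_zero] at this; exact this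
  obtain ⟨m, hm⟩ := (hbnd.eventually_le_const hδ).exists
  refine Filter.Eventually.mono ?_ (fun n hn => le_trans hn hm)
  -- work with fixed m
  set εm := ε m with hεm
  have hεmpos : 0 < εm := hε m
  set km := k m with hkm
  set a : ℕ → ℝ≥0∞ := fun j => μ (B m j) with haj
  set Iμ : ℕ → ℝ≥0∞ := fun j => ∫⁻ x in B m j, g x ∂μ with hIμ
  set b : ℕ → ℕ → ℝ≥0∞ := fun n j => ν n (B m j) with hbj
  set Iν : ℕ → ℕ → ℝ≥0∞ := fun n j => ∫⁻ x in B m j, g x ∂(ν n) with hIν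
  set mcoef : ℕ → ℕ → ℝ≥0∞ :=
    fun n j => Nat.casesOn j 0 (fun j' => min (a (j'+1)) (b n (j'+1))) with hmcoef
  set D : ℕ → ℝ≥0∞ := fun j => Nat.casesOn j ⊤ (fun _ => ENNReal.ofReal ((2 * εm)^2)) with hDdef
  have hIμ_ne : ∀ j, Iμ j ≠ ⊤ :=
    fun j => ne_top_of_le_ne_top hgfin (setLIntegral_le_lintegral _ _)
  have hc_ne : ∀ j, (a j)⁻¹ * Iμ j ≠ ⊤ := by
    intro j
    by_cases h0 : a j = 0
    · have : μ.restrict (B m j) = 0 := Measure.restrict_eq_zero.2 h0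
      have hIz : Iμ j = 0 := by rw [hIμ]; simp only [this, lintegral_zero_measure]
      rw [hIz, mul_zero]
      exact ENNReal.zero_ne_top
    · exact ENNReal.mul_ne_top (ENNReal.inv_ne_top.2 h0) (hIμ_ne j)
  have hsum1 : ∑ j ∈ Finset.range (km + 1), a j = 1 := by
    have hBd' : Set.PairwiseDisjoint (↑(Finset.range (km+1)) : Set ℕ) (B m) :=
      fun i _ j _ hij => (hBd m) hij
    rw [haj]
    simp only
    rw [← measure_biUnion_finset hBd' (fun j _ => hBm m j), hBu m, measure_univ]
  -- coupling bound
  have hcoupling : ∀ n, 1 ≤ n →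
      (⨅ π : {π : Measure (E × E) // IsCoupling π μ (ν n)}, ∫⁻ p, c p ∂π.1) ≤
        (∑ j ∈ Finset.range (km+1), mcoef n j * D j)
        + 2 * ∑ j ∈ Finset.range (km+1), ((a j - mcoef n j) * ((a j)⁻¹ * Iμ j))
        + 2 * ∑ j ∈ Finset.range (km+1), ((b n j - mcoef n j) * ((b n j)⁻¹ * Iν n j)) := by
    intro n hn
    haveI := hν n hn
    obtain ⟨π, hπ, hbound⟩ := coupling_cost_bound μ (ν n) c hc g hg hcg (km+1) (B m)
      (hBm m) (hBd m) (hBu m) (mcoef n)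
      (fun j => by cases j with
        | zero => exact zero_le
        | succ j' => exact min_le_left _ _)
      (fun j => by cases j with
        | zero => exact zero_le
        | succ j' => exact min_le_right _ _)
      D
      (fun j => by cases j with
        | zero => intro x _ y _; exact le_top
        | succ j' => exact hD m j')
    exact le_trans (iInf_le _ ⟨π, hπ⟩) hbound
  -- S1 bound
  have hS1 : ∀ n, (∑ j ∈ Finset.range (km+1), mcoef n j * D j) ≤
      ENNReal.ofReal ((2 * εm)^2) := by
    intro n
    rw [Finset.sum_range_succ']
    have h0 : mcoef n 0 * D 0 = 0 := by simp [hmcoef]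
    rw [h0, add_zero]
    calc ∑ j ∈ Finset.range km, mcoef n (j+1) * D (j+1)
        ≤ ∑ j ∈ Finset.range km, a (j+1) * ENNReal.ofReal ((2 * εm)^2) := by
          refine Finset.sum_le_sum (fun j _ => ?_)
          exact mul_le_mul' (min_le_left _ _) le_rfl
      _ = (∑ j ∈ Finset.range km, a (j+1)) * ENNReal.ofReal ((2 * εm)^2) := by
          rw [Finset.sum_mul]
      _ ≤ 1 * ENNReal.ofReal ((2 * εm)^2) := by
          refine mul_le_mul' ?_ le_rfl
          rw [← hsum1, Finset.sum_range_succ']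
          exact self_le_add_right _ _
      _ = ENNReal.ofReal ((2 * εm)^2) := one_mul _
  -- S2 tendsto
  have htS2 : ∀ j, Tendsto (fun n => (a (j+1) - mcoef n (j+1)) * ((a (j+1))⁻¹ * Iμ (j+1)))
      atTop (𝓝 0) := by
    intro j
    have heq : ∀ n, (a (j+1) - mcoef n (j+1)) = a (j+1) - b n (j+1) :=
      fun n => tsub_min_left _ _
    simp only [heq]
    have hsub : Tendsto (fun n => a (j+1) - b n (j+1)) atTop (𝓝 0) := by
      have := ENNReal.Tendsto.sub (tendsto_const_nhds (x := a (j+1))) (hbE m (j+1))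
        (Or.inl (measure_ne_top μ _))
      rwa [tsub_self] at this
    have := ENNReal.Tendsto.mul_const (b := (a (j+1))⁻¹ * Iμ (j+1)) hsub (Or.inr (hc_ne (j+1)))
    rwa [zero_mul] at this
  have hS2tendsto : Tendsto (fun n => ∑ j ∈ Finset.range (km+1),
      ((a j - mcoef n j) * ((a j)⁻¹ * Iμ j))) atTop
      (𝓝 (a 0 * ((a 0)⁻¹ * Iμ 0))) := by
    have hrw : ∀ n, ∑ j ∈ Finset.range (km+1), ((a j - mcoef n j) * ((a j)⁻¹ * Iμ j))
        = (∑ j ∈ Finset.range km, ((a (j+1) - mcoef n (j+1)) * ((a (j+1))⁻¹ * Iμ (j+1))))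
          + a 0 * ((a 0)⁻¹ * Iμ 0) := by
      intro n
      rw [Finset.sum_range_succ']
      congr 1
      simp [hmcoef]
    simp only [hrw]
    have hsum0 : Tendsto (fun n => ∑ j ∈ Finset.range km,
        ((a (j+1) - mcoef n (j+1)) * ((a (j+1))⁻¹ * Iμ (j+1)))) atTop (𝓝 0) := by
      have := tendsto_finset_sum (Finset.range km) (fun j _ => htS2 j)
      simpa using this
    have := hsum0.add (tendsto_const_nhds (x := a 0 * ((a 0)⁻¹ * Iμ 0)))
    rwa [zero_add] at this
  -- S3
  have htS3 : ∀ j, Tendsto (fun n => (b n (j+1) - mcoef n (j+1)) *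
      ((b n (j+1))⁻¹ * Iν n (j+1))) atTop (𝓝 0) := by
    intro j
    have heq : ∀ n, (b n (j+1) - mcoef n (j+1)) = b n (j+1) - a (j+1) :=
      fun n => tsub_min_right _ _
    simp only [heq]
    by_cases h0 : a (j+1) = 0
    · have hrz : μ.restrict (B m (j+1)) = 0 := Measure.restrict_eq_zero.2 h0
      have hIz : Iμ (j+1) = 0 := by rw [hIμ]; simp only [hrz, lintegral_zero_measure]
      have hle : ∀ n, (b n (j+1) - a (j+1)) * ((b n (j+1))⁻¹ * Iν n (j+1)) ≤ Iν n (j+1) := by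
        intro n
        calc (b n (j+1) - a (j+1)) * ((b n (j+1))⁻¹ * Iν n (j+1))
            ≤ b n (j+1) * ((b n (j+1))⁻¹ * Iν n (j+1)) :=
              mul_le_mul' tsub_le_self le_rfl
          _ = (b n (j+1) * (b n (j+1))⁻¹) * Iν n (j+1) := by rw [mul_assoc]
          _ ≤ 1 * Iν n (j+1) := mul_le_mul' (ENNReal.mul_inv_le_one _) le_rfl
          _ = Iν n (j+1) := one_mul _
      have hIto0 : Tendsto (fun n => Iν n (j+1)) atTop (𝓝 0) := by
        have := hIE m (j+1)
        rw [show ∫⁻ x in B m (j+1), g x ∂μ = 0 from hIz] at this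
        exact this
      exact tendsto_of_tendsto_of_tendsto_of_le_of_le tendsto_const_nhds hIto0
        (fun n => zero_le) hle
    · have hsub : Tendsto (fun n => b n (j+1) - a (j+1)) atTop (𝓝 0) := by
        have := ENNReal.Tendsto.sub (hbE m (j+1)) (tendsto_const_nhds (x := a (j+1)))
          (Or.inr (measure_ne_top μ _))
        rwa [tsub_self] at this
      have hinv : Tendsto (fun n => (b n (j+1))⁻¹) atTop (𝓝 ((a (j+1))⁻¹)) :=
        ENNReal.tendsto_inv_iff.2 (hbE m (j+1))
      have hmul2 : Tendsto (fun n => (b n (j+1))⁻¹ * Iν n (j+1)) atTop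
          (𝓝 ((a (j+1))⁻¹ * Iμ (j+1))) :=
        ENNReal.Tendsto.mul hinv (Or.inr (hIμ_ne (j+1))) (hIE m (j+1))
          (Or.inr (ENNReal.inv_ne_top.2 h0))
      have := ENNReal.Tendsto.mul hsub (Or.inr (hc_ne (j+1))) hmul2
        (Or.inr ENNReal.zero_ne_top)
      rwa [zero_mul] at this
  have hS3le : ∀ n, (∑ j ∈ Finset.range (km+1),
      ((b n j - mcoef n j) * ((b n j)⁻¹ * Iν n j))) ≤
      Iν n 0 + ∑ j ∈ Finset.range km,
        ((b n (j+1) - mcoef n (j+1)) * ((b n (j+1))⁻¹ * Iν n (j+1))) := by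
    intro n
    rw [Finset.sum_range_succ', add_comm]
    refine add_le_add ?_ le_rfl
    have h0 : mcoef n 0 = 0 := rfl
    rw [h0, tsub_zero, ← mul_assoc]
    calc b n 0 * (b n 0)⁻¹ * Iν n 0 ≤ 1 * Iν n 0 :=
          mul_le_mul' (ENNReal.mul_inv_le_one _) le_rfl
      _ = Iν n 0 := one_mul _
  have hS3btendsto : Tendsto (fun n => Iν n 0 + ∑ j ∈ Finset.range km,
      ((b n (j+1) - mcoef n (j+1)) * ((b n (j+1))⁻¹ * Iν n (j+1)))) atTop
      (𝓝 (Iμ 0)) := by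
    have hsum0 : Tendsto (fun n => ∑ j ∈ Finset.range km,
        ((b n (j+1) - mcoef n (j+1)) * ((b n (j+1))⁻¹ * Iν n (j+1)))) atTop (𝓝 0) := by
      have := tendsto_finset_sum (Finset.range km) (fun j _ => htS3 j)
      simpa using this
    have := (hIE m 0).add hsum0
    rwa [add_zero] at this
  -- assemble F
  set L : ℝ≥0∞ := ENNReal.ofReal ((2 * εm)^2) + 2 * (a 0 * ((a 0)⁻¹ * Iμ 0)) + 2 * Iμ 0
    with hL
  have hFtendsto : Tendsto (fun n =>
      ENNReal.ofReal ((2 * εm)^2)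
      + 2 * (∑ j ∈ Finset.range (km+1), ((a j - mcoef n j) * ((a j)⁻¹ * Iμ j)))
      + 2 * (Iν n 0 + ∑ j ∈ Finset.range km,
          ((b n (j+1) - mcoef n (j+1)) * ((b n (j+1))⁻¹ * Iν n (j+1)))))
      atTop (𝓝 L) := by
    refine Tendsto.add (Tendsto.add tendsto_const_nhds ?_) ?_
    · exact ENNReal.Tendsto.const_mul hS2tendsto (Or.inr (by simp))
    · exact ENNReal.Tendsto.const_mul hS3btendsto (Or.inr (by simp))
  have hLlt : L < ENNReal.ofReal ((2 * εm)^2 + 5 * εm) := by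
    have h1 : a 0 * ((a 0)⁻¹ * Iμ 0) ≤ Iμ 0 := by
      rw [← mul_assoc]
      calc a 0 * (a 0)⁻¹ * Iμ 0 ≤ 1 * Iμ 0 := mul_le_mul' (ENNReal.mul_inv_le_one _) le_rfl
        _ = Iμ 0 := one_mul _
    have h2 : L ≤ ENNReal.ofReal ((2 * εm)^2) + 2 * ENNReal.ofReal εm
        + 2 * ENNReal.ofReal εm := by
      refine add_le_add (add_le_add le_rfl ?_) ?_
      · exact mul_le_mul' le_rfl (h1.trans (htail2 m))
      · exact mul_le_mul' le_rfl (htail2 m)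
    have h3 : ENNReal.ofReal ((2 * εm)^2) + 2 * ENNReal.ofReal εm + 2 * ENNReal.ofReal εm
        = ENNReal.ofReal ((2 * εm)^2 + 2 * εm + 2 * εm) := by
      rw [ENNReal.ofReal_add (by positivity) (by positivity),
        ENNReal.ofReal_add (by positivity) (by positivity),
        ENNReal.ofReal_mul (by norm_num : (0:ℝ) ≤ 2),
        ENNReal.ofReal_ofNat]
    have h4 : ENNReal.ofReal ((2 * εm)^2 + 2 * εm + 2 * εm) <
        ENNReal.ofReal ((2 * εm)^2 + 5 * εm) := by
      rw [ENNReal.ofReal_lt_ofReal_iff (by positivity)]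
      nlinarith [hεmpos]
    exact lt_of_le_of_lt (h2.trans_eq h3) h4
  filter_upwards [hFtendsto.eventually_le_const hLlt, eventually_ge_atTop 1] with n hFn hn1
  calc (⨅ π : {π : Measure (E × E) // IsCoupling π μ (ν n)}, ∫⁻ p, c p ∂π.1)
      ≤ _ := hcoupling n hn1
    _ ≤ ENNReal.ofReal ((2 * εm)^2)
      + 2 * (∑ j ∈ Finset.range (km+1), ((a j - mcoef n j) * ((a j)⁻¹ * Iμ j)))
      + 2 * (Iν n 0 + ∑ j ∈ Finset.range km,
          ((b n (j+1) - mcoef n (j+1)) * ((b n (j+1))⁻¹ * Iν n (j+1)))) := by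
        exact add_le_add (add_le_add (hS1 n) le_rfl) (mul_le_mul' le_rfl (hS3le n))
    _ ≤ ENNReal.ofReal ((2 * εm)^2 + 5 * εm) := hFn

lemma rpow_half_tendsto_zero {q : ℕ → ℝ≥0∞} (h : Tendsto q atTop (𝓝 0)) :
    Tendsto (fun n => (q n) ^ (1/2 : ℝ)) atTop (𝓝 0) := by
  rw [ENNReal.tendsto_nhds_zero] at h ⊢
  intro δ hδ
  filter_upwards [h (δ * δ) (ENNReal.mul_pos hδ.ne' hδ.ne')] with n hn
  have h2 : (δ * δ) ^ (1/2 : ℝ) = δ := by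
    rw [← pow_two, ← ENNReal.rpow_natCast δ 2, ← ENNReal.rpow_mul]
    norm_num
  calc (q n) ^ (1/2 : ℝ) ≤ (δ * δ) ^ (1/2 : ℝ) := ENNReal.rpow_le_rpow hn (by norm_num)
    _ = δ := h2


/-- Lemma 3, part 1: for i.i.d. samples from `μ` with `∫‖φ‖² dμ < ∞`, almost surely
`γ_φ(μ, μ_n^ω) → 0`. -/
theorem gammaK_empMeasure_tendsto_zero_ae
    {E : Type*} [MetricSpace E] [CompleteSpace E] [TopologicalSpace.SeparableSpace E]
    [MeasurableSpace E] [BorelSpace E]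
    {H : Type*} [NormedAddCommGroup H] [InnerProductSpace ℝ H] [CompleteSpace H]
    (φ : E → H) (hφ : Continuous φ)
    (μ : Measure E) [IsProbabilityMeasure μ]
    (hφ2 : Integrable (fun x => ‖φ x‖ ^ 2) μ)
    {Ω : Type*} [MeasurableSpace Ω] (P : Measure Ω) [IsProbabilityMeasure P]
    (X : ℕ → Ω → E) (hXm : ∀ i, Measurable (X i))
    (hindep : ProbabilityTheory.iIndepFun
      X P)
    (hident : ∀ i, P.map (X i) = μ) :
    ∀ᵐ ω ∂P, Tendsto (fun n => gammaK φ μ (empMeasure X n ω)) atTop (nhds 0) := by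
  haveI hEne : Nonempty E := by
    by_contra h
    rw [not_nonempty_iff] at h
    have h1 : (Set.univ : Set E) = ∅ := Set.univ_eq_empty_iff.2 h
    have h2 := measure_univ (μ := μ)
    rw [h1, measure_empty] at h2
    exact zero_ne_one h2
  classical
  set f : E → ℝ := fun x => ‖φ x‖ ^ 2 with hfdef
  have hfc : Continuous f := (hφ.norm).pow 2
  have hfm : Measurable f := hfc.measurable
  have hfnn : ∀ x, 0 ≤ f x := fun x => by positivity
  set G : E → ℝ≥0∞ := fun x => ENNReal.ofReal (f x) with hGdef
  have hGm : Measurable G := hfm.ennreal_ofReal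
  have hGfin : ∫⁻ x, G x ∂μ ≠ ⊤ := by
    have := (hasFiniteIntegral_iff_ofReal (Filter.Eventually.of_forall hfnn)).1 hφ2.2
    exact this.ne
  set c : E × E → ℝ≥0∞ := fun p => ENNReal.ofReal (‖φ p.1 - φ p.2‖ ^ 2) with hcdef
  have hcm : Measurable c := by
    have hcont : Continuous fun p : E × E => ‖φ p.1 - φ p.2‖ ^ 2 :=
      (((hφ.comp continuous_fst).sub (hφ.comp continuous_snd)).norm).pow 2
    exact hcont.measurable.ennreal_ofReal
  have hcg : ∀ p : E × E, c p ≤ 2 * G p.1 + 2 * G p.2 := fun p => sq_norm_sub_le _ _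
  set ε : ℕ → ℝ := fun m => 1 / (m + 1) with hεdef
  have hεpos : ∀ m, 0 < ε m := fun m => by positivity
  have hε0 : Tendsto ε atTop (𝓝 (0:ℝ)) := tendsto_one_div_add_atTop_nhds_zero_nat
  choose A hAm hAd hAu hAosc using fun m => exists_partition φ hφ (ε m) (hεpos m)
  -- tails
  have htail : ∀ m, ∃ k, μ ((⋃ j ∈ Finset.range k, A m j)ᶜ) ≤ ENNReal.ofReal (ε m) ∧
      ∫⁻ x in (⋃ j ∈ Finset.range k, A m j)ᶜ, G x ∂μ ≤ ENNReal.ofReal (ε m) := by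
    intro m
    set T : ℕ → Set E := fun kk => (⋃ j ∈ Finset.range kk, A m j)ᶜ with hT
    have hTm : ∀ kk, MeasurableSet (T kk) :=
      fun kk => (MeasurableSet.biUnion (Finset.range kk).countable_toSet
        (fun j _ => hAm m j)).compl
    have hTanti : Antitone T := by
      intro k1 k2 h12
      refine Set.compl_subset_compl.2 ?_
      intro x hx
      rcases Set.mem_iUnion₂.1 hx with ⟨j, hj, hxa⟩
      exact Set.mem_biUnion (Finset.mem_range.2 (lt_of_lt_of_le (Finset.mem_range.1 hj) h12)) hxa
    have hTinter : (⋂ kk, T kk) = ∅ := by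
      rw [Set.eq_empty_iff_forall_notMem]
      intro x hx
      have hxu : x ∈ ⋃ j, A m j := by rw [hAu m]; trivial
      rcases Set.mem_iUnion.1 hxu with ⟨j, hj⟩
      have hmem := Set.mem_iInter.1 hx (j+1)
      exact hmem (Set.mem_biUnion (Finset.mem_range.2 (Nat.lt_succ_self j)) hj)
    have hwfin : (μ.withDensity G) (T 0) ≠ ⊤ := by
      refine ne_top_of_le_ne_top ?_ (measure_mono (Set.subset_univ _))
      rw [withDensity_apply G MeasurableSet.univ, Measure.restrict_univ]
      exact hGfin
    have ht1 : Tendsto (μ ∘ T) atTop (𝓝 (μ (⋂ kk, T kk))) :=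
      tendsto_measure_iInter_atTop (fun kk => (hTm kk).nullMeasurableSet) hTanti
        ⟨0, measure_ne_top μ _⟩
    have ht2 : Tendsto ((μ.withDensity G) ∘ T) atTop
        (𝓝 ((μ.withDensity G) (⋂ kk, T kk))) :=
      tendsto_measure_iInter_atTop (fun kk => (hTm kk).nullMeasurableSet) hTanti ⟨0, hwfin⟩
    rw [hTinter, measure_empty] at ht1 ht2
    have hpos : (0:ℝ≥0∞) < ENNReal.ofReal (ε m) := ENNReal.ofReal_pos.2 (hεpos m)
    obtain ⟨kk, h1, h2⟩ :=
      ((ht1.eventually_le_const hpos).and (ht2.eventually_le_const hpos)).exists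
    refine ⟨kk, h1, ?_⟩
    have := h2
    rw [Function.comp_apply, withDensity_apply G (hTm kk)] at this
    exact this
  choose k hk1 hk2 using htail
  set B : ℕ → ℕ → Set E := fun m j => Nat.casesOn j ((⋃ j' ∈ Finset.range (k m), A m j')ᶜ)
    (fun j' => if j' < k m then A m j' else ∅) with hBdef
  have hB0 : ∀ m, B m 0 = (⋃ j' ∈ Finset.range (k m), A m j')ᶜ := fun m => rfl
  have hBs : ∀ m j', B m (j'+1) = if j' < k m then A m j' else ∅ := fun m j' => rfl
  have hBm : ∀ m j, MeasurableSet (B m j) := by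
    intro m j
    cases j with
    | zero =>
      exact (MeasurableSet.biUnion (Finset.range (k m)).countable_toSet
        (fun j _ => hAm m j)).compl
    | succ j' =>
      rw [hBs]
      split_ifs
      exacts [hAm m j', MeasurableSet.empty]
  have hBd : ∀ m, Pairwise (Function.onFun Disjoint (B m)) := by
    intro m
    rw [pairwise_disjoint_on]
    intro i j hij
    cases i with
    | zero =>
      cases j with
      | zero => omega
      | succ j' =>
        rw [hB0, hBs]
        split_ifs with h
        · refine Set.disjoint_left.2 (fun x hx hx2 => ?_)
          exact hx (Set.mem_biUnion (Finset.mem_range.2 h) hx2)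
        · exact Set.disjoint_empty _
    | succ i' =>
      cases j with
      | zero => omega
      | succ j' =>
        rw [hBs, hBs]
        have hne : i' ≠ j' := by omega
        split_ifs with h1 h2 h2
        · exact hAd m hne
        · exact Set.disjoint_empty _
        · exact (Set.disjoint_empty _).symm
        · exact Set.disjoint_empty _
  have hBu : ∀ m, (⋃ j ∈ Finset.range (k m + 1), B m j) = Set.univ := by
    intro m
    apply Set.eq_univ_of_forall
    intro x
    by_cases hx : x ∈ ⋃ j' ∈ Finset.range (k m), A m j'
    · rcases Set.mem_iUnion₂.1 hx with ⟨j', hj', hxa⟩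
      have hj'' := Finset.mem_range.1 hj'
      refine Set.mem_biUnion (Finset.mem_range.2 (by omega : j'+1 < k m + 1)) ?_
      rw [hBs, if_pos hj'']
      exact hxa
    · exact Set.mem_biUnion (Finset.mem_range.2 (by omega : 0 < k m + 1)) hx
  have hDosc : ∀ m j', ∀ x ∈ B m (j'+1), ∀ y ∈ B m (j'+1),
      c (x,y) ≤ ENNReal.ofReal ((2 * ε m)^2) := by
    intro m j' x hx y hy
    rw [hBs] at hx hy
    split_ifs at hx hy with h
    · have hlt := hAosc m j' x hx y hy
      refine ENNReal.ofReal_le_ofReal ?_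
      have h0 : (0:ℝ) ≤ ‖φ x - φ y‖ := norm_nonneg _
      nlinarith [hlt]
    · exact absurd hx (Set.notMem_empty x)
  -- SLLN
  have hae1 : ∀ᵐ ω ∂P, ∀ m j, Tendsto (fun n : ℕ =>
      (n:ℝ)⁻¹ • ∑ i ∈ Finset.range n, (B m j).indicator (1 : E → ℝ) (X i ω)) atTop
      (𝓝 (∫ x, (B m j).indicator (1 : E → ℝ) x ∂μ)) := by
    rw [ae_all_iff]
    intro m
    rw [ae_all_iff]
    intro j
    exact slln_comp P X hXm hindep μ hident _
      (measurable_const.indicator (hBm m j)) ((integrable_const 1).indicator (hBm m j))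
  have hae2 : ∀ᵐ ω ∂P, ∀ m j, Tendsto (fun n : ℕ =>
      (n:ℝ)⁻¹ • ∑ i ∈ Finset.range n, (B m j).indicator f (X i ω)) atTop
      (𝓝 (∫ x, (B m j).indicator f x ∂μ)) := by
    rw [ae_all_iff]
    intro m
    rw [ae_all_iff]
    intro j
    exact slln_comp P X hXm hindep μ hident _
      (hfm.indicator (hBm m j)) (hφ2.indicator (hBm m j))
  filter_upwards [hae1, hae2] with ω h1 h2
  -- empirical identities
  have hkey : ∀ (g' : E → ℝ≥0∞) (f' : E → ℝ), Measurable g' →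
      (∀ z, g' z = ENNReal.ofReal (f' z)) → (∀ z, 0 ≤ f' z) →
      ∀ (s : Set E), MeasurableSet s → ∀ (n : ℕ), 1 ≤ n →
      ∫⁻ x in s, g' x ∂(empMeasure X n ω) =
        ENNReal.ofReal ((n:ℝ)⁻¹ • ∑ i ∈ Finset.range n, s.indicator f' (X i ω)) := by
    intro g' f' hg' hgf' hf'nn s hs n hn
    have hnpos : (0:ℝ) < n := by exact_mod_cast hn
    rw [← lintegral_indicator hs _, emp_lintegral X n ω _ (hg'.indicator hs)]
    rw [smul_eq_mul, ENNReal.ofReal_mul (by positivity),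
      ENNReal.ofReal_sum_of_nonneg (fun i _ => Set.indicator_nonneg (fun z _ => hf'nn z) _)]
    congr 1
    · rw [ENNReal.ofReal_inv_of_pos hnpos, ENNReal.ofReal_natCast]
    · refine Finset.sum_congr rfl (fun i _ => ?_)
      by_cases hmem : X i ω ∈ s
      · rw [Set.indicator_of_mem hmem, Set.indicator_of_mem hmem, hgf']
      · rw [Set.indicator_of_notMem hmem, Set.indicator_of_notMem hmem, ENNReal.ofReal_zero]
  have hbeq : ∀ (s : Set E), MeasurableSet s → ∀ (n : ℕ), 1 ≤ n →
      empMeasure X n ω s =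
        ENNReal.ofReal ((n:ℝ)⁻¹ • ∑ i ∈ Finset.range n,
          s.indicator (1 : E → ℝ) (X i ω)) := by
    intro s hs n hn
    rw [← setLIntegral_one]
    exact hkey (fun _ => 1) (1 : E → ℝ) measurable_const
      (fun z => by simp) (fun z => zero_le_one) s hs n hn
  have hIeq : ∀ (s : Set E), MeasurableSet s → ∀ (n : ℕ), 1 ≤ n →
      ∫⁻ x in s, G x ∂(empMeasure X n ω) =
        ENNReal.ofReal ((n:ℝ)⁻¹ • ∑ i ∈ Finset.range n, s.indicator f (X i ω)) :=
    fun s hs n hn => hkey G f hGm (fun z => rfl) hfnn s hs n hn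
  -- μ-side identities
  have hμBid : ∀ (s : Set E), MeasurableSet s →
      μ s = ENNReal.ofReal (∫ x, s.indicator (1 : E → ℝ) x ∂μ) := by
    intro s hs
    rw [integral_indicator_one hs, measureReal_def, ENNReal.ofReal_toReal (measure_ne_top μ s)]
  have hIμid : ∀ (s : Set E), MeasurableSet s →
      ∫⁻ x in s, G x ∂μ = ENNReal.ofReal (∫ x, s.indicator f x ∂μ) := by
    intro s hs
    rw [ofReal_integral_eq_lintegral_ofReal (hφ2.indicator hs)
      (Filter.Eventually.of_forall (Set.indicator_nonneg (fun z _ => hfnn z)))]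
    rw [← lintegral_indicator hs _]
    congr 1
    funext z
    by_cases hmem : z ∈ s
    · rw [Set.indicator_of_mem hmem, Set.indicator_of_mem hmem]
    · rw [Set.indicator_of_notMem hmem, Set.indicator_of_notMem hmem, ENNReal.ofReal_zero]
  -- ENNReal tendstos
  have hbE : ∀ m j, Tendsto (fun n => empMeasure X n ω (B m j)) atTop (𝓝 (μ (B m j))) := by
    intro m j
    have h := (ENNReal.continuous_ofReal.tendsto _).comp (h1 m j)
    rw [← hμBid _ (hBm m j)] at h
    refine h.congr' ?_
    filter_upwards [eventually_ge_atTop 1] with n hn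
    exact (hbeq _ (hBm m j) n hn).symm
  have hIE : ∀ m j, Tendsto (fun n => ∫⁻ x in B m j, G x ∂(empMeasure X n ω)) atTop
      (𝓝 (∫⁻ x in B m j, G x ∂μ)) := by
    intro m j
    have h := (ENNReal.continuous_ofReal.tendsto _).comp (h2 m j)
    rw [← hIμid _ (hBm m j)] at h
    refine h.congr' ?_
    filter_upwards [eventually_ge_atTop 1] with n hn
    exact (hIeq _ (hBm m j) n hn).symm
  -- conclude
  have hcost := cost_tendsto_zero μ c hcm G hGm hcg hGfin
    (fun n => empMeasure X n ω) (fun n hn => emp_prob X n hn ω)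
    ε hεpos hε0 B k hBm hBd hBu hDosc
    (fun m => by rw [hB0]; exact hk1 m)
    (fun m => by rw [hB0]; exact hk2 m)
    hbE hIE
  exact rpow_half_tendsto_zero hcost
end

section
/- (Lemma 3, part 2.) Let E be a complete separable metric space equipped with its Borel σ-algebra, H a real Hilbert space, and φ : E → H a continuous map. Let μ be a Borel probability measure on E with ∫ ‖φ(x)‖² dμ(x) < ∞, and let X_0, X_1, X_2, … be independent and identically distributed random elements with values in E, defined on a probability space (Ω, 𝔽, P), each with law μ. For ω ∈ Ω and n ≥ 1 let μ_n^ω = (1/n) Σ_{i=0}^{n−1} δ_{X_i(ω)} denote the empirical measure. Then the expectations converge: the Lebesgue integral ∫ γ_φ(μ, μ_n^ω) dP(ω), valued in [0, ∞], tends to 0 as n → ∞. -/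
open MeasureTheory Filter
open scoped ENNReal

set_option linter.unusedSectionVars false

namespace GammaKAux

noncomputable def gg {E H : Type*} [NormedAddCommGroup H] (φ : E → H) (x : E) : ℝ≥0∞ :=
  ENNReal.ofReal (‖φ x‖ ^ 2)

section A
variable {E : Type*} [MeasurableSpace E] {H : Type*} [NormedAddCommGroup H]

lemma cost_le_gg (φ : E → H) (x y : E) :
    ENNReal.ofReal (‖φ x - φ y‖ ^ 2) ≤ 2 * gg φ x + 2 * gg φ y := by
  have h1 : ‖φ x - φ y‖ ^ 2 ≤ 2 * ‖φ x‖ ^ 2 + 2 * ‖φ y‖ ^ 2 := by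
    have h := norm_sub_le (φ x) (φ y)
    have h2 := mul_self_le_mul_self (norm_nonneg (φ x - φ y)) h
    nlinarith [sq_nonneg (‖φ x‖ - ‖φ y‖)]
  calc ENNReal.ofReal (‖φ x - φ y‖ ^ 2) ≤ ENNReal.ofReal (2 * ‖φ x‖ ^ 2 + 2 * ‖φ y‖ ^ 2) :=
        ENNReal.ofReal_le_ofReal h1
    _ = 2 * gg φ x + 2 * gg φ y := by
        rw [ENNReal.ofReal_add (by positivity) (by positivity), ENNReal.ofReal_mul (by norm_num),
          ENNReal.ofReal_mul (by norm_num), gg, gg, ENNReal.ofReal_ofNat]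

lemma lintegral_cost_prod_le (φ : E → H) (hg : Measurable (gg φ))
    (ν ρ : Measure E) [IsFiniteMeasure ν] [IsFiniteMeasure ρ] :
    ∫⁻ p : E × E, ENNReal.ofReal (‖φ p.1 - φ p.2‖ ^ 2) ∂ν.prod ρ ≤
      2 * (∫⁻ x, gg φ x ∂ν) * ρ Set.univ + 2 * (ν Set.univ * ∫⁻ x, gg φ x ∂ρ) := by
  calc ∫⁻ p : E × E, ENNReal.ofReal (‖φ p.1 - φ p.2‖ ^ 2) ∂ν.prod ρ
      ≤ ∫⁻ p : E × E, (2 * gg φ p.1 + 2 * gg φ p.2) ∂ν.prod ρ :=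
        lintegral_mono fun p => cost_le_gg φ p.1 p.2
    _ = 2 * ∫⁻ p : E × E, gg φ p.1 ∂ν.prod ρ + 2 * ∫⁻ p : E × E, gg φ p.2 ∂ν.prod ρ := by
        rw [lintegral_add_left ((show Measurable fun p : E × E => gg φ p.1 from hg.comp measurable_fst).const_mul 2),
          lintegral_const_mul 2 (show Measurable fun p : E × E => gg φ p.1 from hg.comp measurable_fst),
          lintegral_const_mul 2 (show Measurable fun p : E × E => gg φ p.2 from hg.comp measurable_snd)]
    _ = _ := by
        have h1 : ∫⁻ p : E × E, gg φ p.1 ∂ν.prod ρ = ρ Set.univ * ∫⁻ x, gg φ x ∂ν := by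
          rw [← lintegral_map hg measurable_fst, Measure.map_fst_prod, lintegral_smul_measure, smul_eq_mul]
        have h2 : ∫⁻ p : E × E, gg φ p.2 ∂ν.prod ρ = ν Set.univ * ∫⁻ x, gg φ x ∂ρ := by
          rw [← lintegral_map hg measurable_snd, Measure.map_snd_prod, lintegral_smul_measure, smul_eq_mul]
        rw [h1, h2]; ring

lemma lintegral_rpow_half_le {Ω : Type*} [MeasurableSpace Ω] (P : Measure Ω)
    [IsProbabilityMeasure P] {f : Ω → ℝ≥0∞} (hf : AEMeasurable f P) :
    ∫⁻ ω, (f ω) ^ (1/2 : ℝ) ∂P ≤ (∫⁻ ω, f ω ∂P) ^ (1/2 : ℝ) := by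
  have h := ENNReal.lintegral_mul_norm_pow_le (μ := P) hf
    (aemeasurable_const (b := (1:ℝ≥0∞))) (by norm_num) (by norm_num)
    (by norm_num : (1/2:ℝ) + 1/2 = 1)
  simpa using h

lemma rpow_half_sq (x : ℝ≥0∞) : (x ^ 2) ^ (1/2 : ℝ) = x := by
  rw [← ENNReal.rpow_natCast x 2, ← ENNReal.rpow_mul]
  norm_num

lemma exists_coupling (φ : E → H) (hg : Measurable (gg φ))
    (μ η : Measure E) [IsProbabilityMeasure μ] [IsProbabilityMeasure η]
    (N : ℕ) (A : ℕ → Set E) (hAm : ∀ j, MeasurableSet (A j))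
    (hdisj : ∀ i j, i ≠ j → Disjoint (A i) (A j))
    (hcover : ⋃ j ∈ Finset.range N, A j = Set.univ)
    (ε2 M2 : ℝ≥0∞)
    (hdiam : ∀ j, j ≠ 0 → ∀ x ∈ A j, ∀ y ∈ A j, ENNReal.ofReal (‖φ x - φ y‖ ^ 2) ≤ ε2)
    (hbdd : ∀ j, j ≠ 0 → ∀ x ∈ A j, gg φ x ≤ M2) :
    ∃ π : Measure (E × E), IsCoupling π μ η ∧
      ∫⁻ p : E × E, ENNReal.ofReal (‖φ p.1 - φ p.2‖ ^ 2) ∂π ≤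
        ε2 + 4 * ∫⁻ x in A 0, gg φ x ∂μ + 4 * ∫⁻ x in A 0, gg φ x ∂η
          + 4 * M2 * ∑ j ∈ Finset.range N, ((μ (A j) - η (A j)) + (η (A j) - μ (A j))) := by
  classical
  set g : E → ℝ≥0∞ := gg φ with hgdef
  set c : ℕ → ℝ≥0∞ := fun j => μ (A j) with hc
  set d : ℕ → ℝ≥0∞ := fun j => η (A j) with hd
  set t : ℕ → ℝ≥0∞ := fun j => min (c j) (d j) with ht
  set e : ℕ → ℝ≥0∞ := fun j => c j - d j with he
  set f : ℕ → ℝ≥0∞ := fun j => d j - c j with hf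
  have hcfin : ∀ j, c j ≠ ∞ := fun j => (measure_lt_top μ _).ne
  have hdfin : ∀ j, d j ≠ ∞ := fun j => (measure_lt_top η _).ne
  have hte : ∀ j, t j + e j = c j := by
    intro j
    show min (c j) (d j) + (c j - d j) = c j
    rcases le_total (d j) (c j) with h | h
    · rw [min_eq_right h, add_tsub_cancel_of_le h]
    · rw [min_eq_left h, tsub_eq_zero_of_le h, add_zero]
  have htf : ∀ j, t j + f j = d j := by
    intro j
    show min (c j) (d j) + (d j - c j) = d j
    rcases le_total (c j) (d j) with h | h
    · rw [min_eq_left h, add_tsub_cancel_of_le h]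
    · rw [min_eq_right h, tsub_eq_zero_of_le h, add_zero]
  have hsumc : ∑ j ∈ Finset.range N, c j = 1 := by
    have := measure_biUnion_finset (μ := μ) (s := Finset.range N) (f := A)
      (fun i _ j _ hij => hdisj i j hij) (fun j _ => hAm j)
    rw [hcover, measure_univ] at this
    exact this.symm
  have hsumd : ∑ j ∈ Finset.range N, d j = 1 := by
    have := measure_biUnion_finset (μ := η) (s := Finset.range N) (f := A)
      (fun i _ j _ hij => hdisj i j hij) (fun j _ => hAm j)
    rw [hcover, measure_univ] at this
    exact this.symm
  have hsumt_le : ∑ j ∈ Finset.range N, t j ≤ 1 :=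
    hsumc ▸ Finset.sum_le_sum fun j _ => min_le_left _ _
  have hsumef : ∑ j ∈ Finset.range N, e j = ∑ j ∈ Finset.range N, f j := by
    have h1 : ∑ j ∈ Finset.range N, t j + ∑ j ∈ Finset.range N, e j = 1 := by
      rw [← Finset.sum_add_distrib]; simp_rw [hte]; exact hsumc
    have h2 : ∑ j ∈ Finset.range N, t j + ∑ j ∈ Finset.range N, f j = 1 := by
      rw [← Finset.sum_add_distrib]; simp_rw [htf]; exact hsumd
    exact (ENNReal.add_right_inj (lt_of_le_of_lt hsumt_le (by norm_num)).ne).mp (h1.trans h2.symm)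
  set ν : ℕ → Measure E := fun j => μ.restrict (A j) with hν
  set ρ : ℕ → Measure E := fun j => η.restrict (A j) with hρ
  set μ' : Measure E := ∑ j ∈ Finset.range N, (e j / c j) • ν j with hμ'
  set η' : Measure E := ∑ j ∈ Finset.range N, (f j / d j) • ρ j with hη'
  set r : ℝ≥0∞ := ∑ j ∈ Finset.range N, e j with hr
  have hrfin : r ≠ ∞ := by
    have : r ≤ 1 := by
      rw [hr, ← hsumc]
      exact Finset.sum_le_sum fun j _ => (tsub_le_self : c j - d j ≤ c j)
    exact (lt_of_le_of_lt this (by norm_num)).ne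
  have he_le : ∀ j, e j ≤ c j := fun j => (tsub_le_self : c j - d j ≤ c j)
  have hf_le : ∀ j, f j ≤ d j := fun j => (tsub_le_self : d j - c j ≤ d j)
  have ht_le_c : ∀ j, t j ≤ c j := fun j => min_le_left _ _
  have ht_le_d : ∀ j, t j ≤ d j := fun j => min_le_right _ _
  have hecj : ∀ j, e j / c j * c j = e j := by
    intro j
    rcases eq_or_ne (c j) 0 with h0 | h0
    · have hej : e j = 0 := le_zero_iff.mp (h0 ▸ he_le j)
      rw [hej, h0, mul_zero]
    · exact ENNReal.div_mul_cancel h0 (hcfin j)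
  have hfdj : ∀ j, f j / d j * d j = f j := by
    intro j
    rcases eq_or_ne (d j) 0 with h0 | h0
    · have hfj : f j = 0 := le_zero_iff.mp (h0 ▸ hf_le j)
      rw [hfj, h0, mul_zero]
    · exact ENNReal.div_mul_cancel h0 (hdfin j)
  have hν_univ : ∀ j, ν j Set.univ = c j := fun j => by
    show μ.restrict (A j) Set.univ = μ (A j); exact Measure.restrict_apply_univ _
  have hρ_univ : ∀ j, ρ j Set.univ = d j := fun j => by
    show η.restrict (A j) Set.univ = η (A j); exact Measure.restrict_apply_univ _
  have hμ'_apply : ∀ s : Set E, MeasurableSet s →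
      μ' s = ∑ j ∈ Finset.range N, e j / c j * μ (s ∩ A j) := by
    intro s hs
    show (∑ j ∈ Finset.range N, (e j / c j) • ν j) s = _
    rw [Measure.finset_sum_apply]
    refine Finset.sum_congr rfl fun j _ => ?_
    rw [Measure.smul_apply, smul_eq_mul]
    congr 1
    exact Measure.restrict_apply hs
  have hη'_apply : ∀ s : Set E, MeasurableSet s →
      η' s = ∑ j ∈ Finset.range N, f j / d j * η (s ∩ A j) := by
    intro s hs
    show (∑ j ∈ Finset.range N, (f j / d j) • ρ j) s = _
    rw [Measure.finset_sum_apply]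
    refine Finset.sum_congr rfl fun j _ => ?_
    rw [Measure.smul_apply, smul_eq_mul]
    congr 1
    exact Measure.restrict_apply hs
  have hμ'_univ : μ' Set.univ = r := by
    show (∑ j ∈ Finset.range N, (e j / c j) • ν j) Set.univ = r
    rw [Measure.finset_sum_apply, hr]
    refine Finset.sum_congr rfl fun j _ => ?_
    rw [Measure.smul_apply, smul_eq_mul, hν_univ j, hecj j]
  have hη'_univ : η' Set.univ = r := by
    show (∑ j ∈ Finset.range N, (f j / d j) • ρ j) Set.univ = r
    rw [Measure.finset_sum_apply, hsumef]
    refine Finset.sum_congr rfl fun j _ => ?_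
    rw [Measure.smul_apply, smul_eq_mul, hρ_univ j, hfdj j]
  haveI hμ'fin : IsFiniteMeasure μ' := ⟨by rw [hμ'_univ]; exact lt_top_iff_ne_top.2 hrfin⟩
  haveI hη'fin : IsFiniteMeasure η' := ⟨by rw [hη'_univ]; exact lt_top_iff_ne_top.2 hrfin⟩
  set π : Measure (E × E) :=
    (∑ j ∈ Finset.range N, (t j / (c j * d j)) • ((ν j).prod (ρ j))) + r⁻¹ • (μ'.prod η')
    with hπdef
  -- key per-term identities
  have hκfst : ∀ (s : Set E), MeasurableSet s → ∀ j,
      t j / (c j * d j) * ((ν j).prod (ρ j)) (s ×ˢ Set.univ) = t j / c j * μ (s ∩ A j) := by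
    intro s hs j
    rw [Measure.prod_prod, hρ_univ j, Measure.restrict_apply hs]
    rcases eq_or_ne (d j) 0 with h0 | h0
    · have ht0 : t j = 0 := le_zero_iff.mp (h0 ▸ ht_le_d j)
      rw [ht0]; simp
    · have hkey : t j / (c j * d j) * d j = t j / c j := by
        calc t j / (c j * d j) * d j = t j * (c j)⁻¹ * ((d j)⁻¹ * d j) := by
              rw [div_eq_mul_inv, ENNReal.mul_inv (Or.inr (hdfin j)) (Or.inl (hcfin j))]; ring
          _ = t j / c j := by rw [ENNReal.inv_mul_cancel h0 (hdfin j), mul_one, div_eq_mul_inv]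
      rw [← mul_assoc, mul_right_comm, hkey]
  have hκsnd : ∀ (s : Set E), MeasurableSet s → ∀ j,
      t j / (c j * d j) * ((ν j).prod (ρ j)) (Set.univ ×ˢ s) = t j / d j * η (s ∩ A j) := by
    intro s hs j
    rw [Measure.prod_prod, hν_univ j, Measure.restrict_apply hs]
    rcases eq_or_ne (c j) 0 with h0 | h0
    · have ht0 : t j = 0 := le_zero_iff.mp (h0 ▸ ht_le_c j)
      rw [ht0]; simp
    · have hkey : t j / (c j * d j) * c j = t j / d j := by
        calc t j / (c j * d j) * c j = t j * (d j)⁻¹ * ((c j)⁻¹ * c j) := by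
              rw [div_eq_mul_inv, ENNReal.mul_inv (Or.inr (hdfin j)) (Or.inl (hcfin j))]; ring
          _ = t j / d j := by rw [ENNReal.inv_mul_cancel h0 (hcfin j), mul_one, div_eq_mul_inv]
      rw [← mul_assoc, hkey]
  have hrzero : r = 0 → ∀ j ∈ Finset.range N, e j = 0 := by
    intro h0 j hj
    exact (Finset.sum_eq_zero_iff.mp (hr.symm.trans h0)) j hj
  have hrzero' : r = 0 → ∀ j ∈ Finset.range N, f j = 0 := by
    intro h0 j hj
    exact (Finset.sum_eq_zero_iff.mp (hsumef.symm.trans (hr.symm.trans h0))) j hj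
  have hrfst : ∀ (s : Set E), MeasurableSet s →
      r⁻¹ * (μ'.prod η') (s ×ˢ Set.univ) = μ' s := by
    intro s hs
    rw [Measure.prod_prod, hη'_univ]
    rcases eq_or_ne r 0 with h0 | h0
    · have hμ's : μ' s = 0 := by
        rw [hμ'_apply s hs]
        exact Finset.sum_eq_zero fun j hj => by
          rw [hrzero h0 j hj, ENNReal.zero_div, zero_mul]
      simp [hμ's, h0]
    · rw [mul_comm (μ' s) r, ← mul_assoc, ENNReal.inv_mul_cancel h0 hrfin, one_mul]
  have hrsnd : ∀ (s : Set E), MeasurableSet s →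
      r⁻¹ * (μ'.prod η') (Set.univ ×ˢ s) = η' s := by
    intro s hs
    rw [Measure.prod_prod, hμ'_univ]
    rcases eq_or_ne r 0 with h0 | h0
    · have hη's : η' s = 0 := by
        rw [hη'_apply s hs]
        exact Finset.sum_eq_zero fun j hj => by
          rw [hrzero' h0 j hj, ENNReal.zero_div, zero_mul]
      simp [hη's, h0]
    · rw [← mul_assoc, ENNReal.inv_mul_cancel h0 hrfin, one_mul]
  have hsplitμ : ∀ s : Set E, MeasurableSet s →
      (∑ j ∈ Finset.range N, t j / c j * μ (s ∩ A j)) + μ' s = μ s := by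
    intro s hs
    rw [hμ'_apply s hs, ← Finset.sum_add_distrib]
    have hterm : ∀ j ∈ Finset.range N,
        t j / c j * μ (s ∩ A j) + e j / c j * μ (s ∩ A j) = μ (s ∩ A j) := by
      intro j _
      rw [← add_mul, ENNReal.div_add_div_same, hte j]
      rcases eq_or_ne (c j) 0 with h0 | h0
      · have hz : μ (s ∩ A j) = 0 := le_zero_iff.mp (h0 ▸ measure_mono Set.inter_subset_right)
        simp [hz]
      · rw [ENNReal.div_self h0 (hcfin j), one_mul]
    rw [Finset.sum_congr rfl hterm]
    have hcov : s = ⋃ j ∈ Finset.range N, s ∩ A j := by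
      rw [← Set.inter_iUnion₂, hcover, Set.inter_univ]
    conv_rhs => rw [hcov]
    exact (measure_biUnion_finset
      (fun i _ j _ hij => (hdisj i j hij).mono Set.inter_subset_right Set.inter_subset_right)
      (fun j _ => hs.inter (hAm j))).symm
  have hsplitη : ∀ s : Set E, MeasurableSet s →
      (∑ j ∈ Finset.range N, t j / d j * η (s ∩ A j)) + η' s = η s := by
    intro s hs
    rw [hη'_apply s hs, ← Finset.sum_add_distrib]
    have hterm : ∀ j ∈ Finset.range N,
        t j / d j * η (s ∩ A j) + f j / d j * η (s ∩ A j) = η (s ∩ A j) := by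
      intro j _
      rw [← add_mul, ENNReal.div_add_div_same, htf j]
      rcases eq_or_ne (d j) 0 with h0 | h0
      · have hz : η (s ∩ A j) = 0 := le_zero_iff.mp (h0 ▸ measure_mono Set.inter_subset_right)
        simp [hz]
      · rw [ENNReal.div_self h0 (hdfin j), one_mul]
    rw [Finset.sum_congr rfl hterm]
    have hcov : s = ⋃ j ∈ Finset.range N, s ∩ A j := by
      rw [← Set.inter_iUnion₂, hcover, Set.inter_univ]
    conv_rhs => rw [hcov]
    exact (measure_biUnion_finset
      (fun i _ j _ hij => (hdisj i j hij).mono Set.inter_subset_right Set.inter_subset_right)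
      (fun j _ => hs.inter (hAm j))).symm
  have hfst : π.map Prod.fst = μ := by
    ext s hs
    rw [Measure.map_apply measurable_fst hs, ← Set.prod_univ, hπdef, Measure.add_apply,
      Measure.smul_apply, smul_eq_mul, Measure.finset_sum_apply]
    simp only [Measure.smul_apply, smul_eq_mul]
    rw [Finset.sum_congr rfl (fun j _ => hκfst s hs j), hrfst s hs]
    exact hsplitμ s hs
  have hsnd : π.map Prod.snd = η := by
    ext s hs
    have hpre : (Prod.snd ⁻¹' s : Set (E × E)) = Set.univ ×ˢ s := by
      ext p; simp
    rw [Measure.map_apply measurable_snd hs, hpre, hπdef, Measure.add_apply,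
      Measure.smul_apply, smul_eq_mul, Measure.finset_sum_apply]
    simp only [Measure.smul_apply, smul_eq_mul]
    rw [Finset.sum_congr rfl (fun j _ => hκsnd s hs j), hrsnd s hs]
    exact hsplitη s hs
  have hprob : IsProbabilityMeasure π := by
    constructor
    have h1 : π Set.univ = (π.map Prod.fst) Set.univ := by
      rw [Measure.map_apply measurable_fst MeasurableSet.univ, Set.preimage_univ]
    rw [h1, hfst, measure_univ]
  refine ⟨π, ⟨hprob, hfst, hsnd⟩, ?_⟩
  -- cost bound
  set Iμ : ℝ≥0∞ := ∫⁻ x in A 0, g x ∂μ with hIμ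
  set Iη : ℝ≥0∞ := ∫⁻ x in A 0, g x ∂η with hIη
  set S : ℝ≥0∞ := ∑ j ∈ Finset.range N, (e j + f j) with hS
  have hπint : ∫⁻ p : E × E, ENNReal.ofReal (‖φ p.1 - φ p.2‖ ^ 2) ∂π =
      (∑ j ∈ Finset.range N,
        t j / (c j * d j) * ∫⁻ p : E × E, ENNReal.ofReal (‖φ p.1 - φ p.2‖ ^ 2) ∂(ν j).prod (ρ j))
      + r⁻¹ * ∫⁻ p : E × E, ENNReal.ofReal (‖φ p.1 - φ p.2‖ ^ 2) ∂μ'.prod η' := by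
    rw [hπdef, lintegral_add_measure, lintegral_smul_measure, lintegral_finset_sum_measure]
    simp_rw [lintegral_smul_measure, smul_eq_mul]
  have hB1 : (∑ j ∈ Finset.range N,
      t j / (c j * d j) * ∫⁻ p : E × E, ENNReal.ofReal (‖φ p.1 - φ p.2‖ ^ 2) ∂(ν j).prod (ρ j))
      ≤ (2 * Iμ + 2 * Iη) + ε2 := by
    have hLj : ∀ j, j ≠ 0 →
        t j / (c j * d j) * ∫⁻ p : E × E, ENNReal.ofReal (‖φ p.1 - φ p.2‖ ^ 2) ∂(ν j).prod (ρ j)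
          ≤ ε2 * t j := by
      intro j hj
      have hνc : ν j ((A j)ᶜ) = 0 := by
        show μ.restrict (A j) (A j)ᶜ = 0
        rw [Measure.restrict_apply (hAm j).compl, Set.compl_inter_self]
        exact measure_empty
      have hρc : ρ j ((A j)ᶜ) = 0 := by
        show η.restrict (A j) (A j)ᶜ = 0
        rw [Measure.restrict_apply (hAm j).compl, Set.compl_inter_self]
        exact measure_empty
      have hnull : ((ν j).prod (ρ j)) ((A j ×ˢ A j)ᶜ) = 0 := by
        rw [Set.compl_prod_eq_union]
        refine measure_union_null ?_ ?_
        · rw [Measure.prod_prod, hνc, zero_mul]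
        · rw [Measure.prod_prod, hρc, mul_zero]
      have hae : ∀ᵐ p ∂((ν j).prod (ρ j)),
          ENNReal.ofReal (‖φ p.1 - φ p.2‖ ^ 2) ≤ ε2 := by
        rw [ae_iff]
        refine measure_mono_null ?_ hnull
        intro p hp
        rw [Set.mem_compl_iff]
        intro hmem
        simp only [Set.mem_setOf_eq, not_le] at hp
        exact absurd (hdiam j hj p.1 hmem.1 p.2 hmem.2) (not_le.mpr hp)
      calc t j / (c j * d j) * ∫⁻ p : E × E, ENNReal.ofReal (‖φ p.1 - φ p.2‖ ^ 2) ∂(ν j).prod (ρ j)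
          ≤ t j / (c j * d j) * ∫⁻ _ : E × E, ε2 ∂(ν j).prod (ρ j) :=
            mul_le_mul_right (lintegral_mono_ae hae) _
        _ = t j / (c j * d j) * (ε2 * (c j * d j)) := by
            rw [lintegral_const, ← Set.univ_prod_univ, Measure.prod_prod, hν_univ, hρ_univ]
        _ = ε2 * (t j / (c j * d j) * (c j * d j)) := by ring
        _ ≤ ε2 * t j := mul_le_mul_right (by rw [mul_comm]; exact ENNReal.mul_div_le) _
    have hL0 : ∀ j, j = 0 →
        t j / (c j * d j) * ∫⁻ p : E × E, ENNReal.ofReal (‖φ p.1 - φ p.2‖ ^ 2) ∂(ν j).prod (ρ j)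
          ≤ 2 * Iμ + 2 * Iη := by
      rintro j rfl
      have hb := lintegral_cost_prod_le φ hg (ν 0) (ρ 0)
      rw [hν_univ, hρ_univ] at hb
      have h1 : t 0 / (c 0 * d 0) * d 0 ≤ 1 := by
        rcases eq_or_ne (d 0) 0 with h0 | h0
        · rw [h0, mul_zero]; exact zero_le
        · have : t 0 / (c 0 * d 0) * d 0 = t 0 / c 0 := by
            calc t 0 / (c 0 * d 0) * d 0 = t 0 * (c 0)⁻¹ * ((d 0)⁻¹ * d 0) := by
                  rw [div_eq_mul_inv, ENNReal.mul_inv (Or.inr (hdfin 0)) (Or.inl (hcfin 0))]; ring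
              _ = t 0 / c 0 := by rw [ENNReal.inv_mul_cancel h0 (hdfin 0), mul_one, div_eq_mul_inv]
          rw [this]
          exact ENNReal.div_le_of_le_mul (by rw [one_mul]; exact ht_le_c 0)
      have h2 : t 0 / (c 0 * d 0) * c 0 ≤ 1 := by
        rcases eq_or_ne (c 0) 0 with h0 | h0
        · rw [h0, mul_zero]; exact zero_le
        · have : t 0 / (c 0 * d 0) * c 0 = t 0 / d 0 := by
            calc t 0 / (c 0 * d 0) * c 0 = t 0 * (d 0)⁻¹ * ((c 0)⁻¹ * c 0) := by
                  rw [div_eq_mul_inv, ENNReal.mul_inv (Or.inr (hdfin 0)) (Or.inl (hcfin 0))]; ring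
              _ = t 0 / d 0 := by rw [ENNReal.inv_mul_cancel h0 (hcfin 0), mul_one, div_eq_mul_inv]
          rw [this]
          exact ENNReal.div_le_of_le_mul (by rw [one_mul]; exact ht_le_d 0)
      calc t 0 / (c 0 * d 0) * ∫⁻ p : E × E, ENNReal.ofReal (‖φ p.1 - φ p.2‖ ^ 2) ∂(ν 0).prod (ρ 0)
          ≤ t 0 / (c 0 * d 0) * (2 * (∫⁻ x, g x ∂ν 0) * d 0 + 2 * (c 0 * ∫⁻ x, g x ∂ρ 0)) :=
            mul_le_mul_right hb _
        _ = 2 * (∫⁻ x, g x ∂ν 0) * (t 0 / (c 0 * d 0) * d 0)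
            + 2 * (∫⁻ x, g x ∂ρ 0) * (t 0 / (c 0 * d 0) * c 0) := by ring
        _ ≤ 2 * (∫⁻ x, g x ∂ν 0) * 1 + 2 * (∫⁻ x, g x ∂ρ 0) * 1 :=
            add_le_add (mul_le_mul_right h1 _) (mul_le_mul_right h2 _)
        _ = 2 * Iμ + 2 * Iη := by rw [mul_one, mul_one]
    calc (∑ j ∈ Finset.range N,
        t j / (c j * d j) * ∫⁻ p : E × E, ENNReal.ofReal (‖φ p.1 - φ p.2‖ ^ 2) ∂(ν j).prod (ρ j))
        ≤ ∑ j ∈ Finset.range N, ((if j = 0 then 2 * Iμ + 2 * Iη else 0) + ε2 * t j) := by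
          refine Finset.sum_le_sum fun j _ => ?_
          rcases eq_or_ne j 0 with rfl | hj
          · simp only [if_pos rfl]
            exact le_add_right (hL0 0 rfl)
          · simp only [if_neg hj, zero_add]
            exact hLj j hj
      _ = (∑ j ∈ Finset.range N, (if j = 0 then 2 * Iμ + 2 * Iη else 0))
          + ε2 * ∑ j ∈ Finset.range N, t j := by
          rw [Finset.sum_add_distrib, Finset.mul_sum]
      _ ≤ (2 * Iμ + 2 * Iη) + ε2 * 1 := by
          refine add_le_add ?_ (mul_le_mul_right hsumt_le _)
          rw [Finset.sum_ite_eq' (Finset.range N) 0 (fun _ => 2 * Iμ + 2 * Iη)]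
          split_ifs
          · exact le_rfl
          · exact zero_le
      _ = (2 * Iμ + 2 * Iη) + ε2 := by rw [mul_one]
  have hG'μ : ∫⁻ x, g x ∂μ' ≤ Iμ + M2 * S := by
    show ∫⁻ x, g x ∂(∑ j ∈ Finset.range N, (e j / c j) • ν j) ≤ Iμ + M2 * S
    rw [lintegral_finset_sum_measure]
    simp_rw [lintegral_smul_measure]
    calc ∑ j ∈ Finset.range N, e j / c j * ∫⁻ x, g x ∂ν j
        ≤ ∑ j ∈ Finset.range N, ((if j = 0 then Iμ else 0) + M2 * (e j + f j)) := by
          refine Finset.sum_le_sum fun j _ => ?_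
          rcases eq_or_ne j 0 with rfl | hj
          · simp only [if_pos rfl]
            refine le_add_right ?_
            calc e 0 / c 0 * ∫⁻ x, g x ∂ν 0 ≤ 1 * Iμ := by
                  refine mul_le_mul' (ENNReal.div_le_of_le_mul (by rw [one_mul]; exact he_le 0)) le_rfl
              _ = Iμ := one_mul _
          · simp only [if_neg hj, zero_add]
            have hbound : ∫⁻ x, g x ∂ν j ≤ M2 * c j := by
              show ∫⁻ x in A j, g x ∂μ ≤ M2 * c j
              calc ∫⁻ x in A j, g x ∂μ ≤ ∫⁻ _ in A j, M2 ∂μ :=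
                    lintegral_mono_ae ((ae_restrict_iff' (hAm j)).2
                      (ae_of_all _ fun x hx => hbdd j hj x hx))
                _ = M2 * c j := setLIntegral_const _ _
            calc e j / c j * ∫⁻ x, g x ∂ν j ≤ e j / c j * (M2 * c j) :=
                  mul_le_mul_right hbound _
              _ = M2 * (e j / c j * c j) := by ring
              _ = M2 * e j := by rw [hecj j]
              _ ≤ M2 * (e j + f j) := mul_le_mul_right le_self_add _
      _ = (∑ j ∈ Finset.range N, (if j = 0 then Iμ else 0)) + M2 * S := by
          rw [Finset.sum_add_distrib, Finset.mul_sum]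
      _ ≤ Iμ + M2 * S := by
          refine add_le_add ?_ le_rfl
          rw [Finset.sum_ite_eq' (Finset.range N) 0 (fun _ => Iμ)]
          split_ifs
          · exact le_rfl
          · exact zero_le
  have hG'η : ∫⁻ x, g x ∂η' ≤ Iη + M2 * S := by
    show ∫⁻ x, g x ∂(∑ j ∈ Finset.range N, (f j / d j) • ρ j) ≤ Iη + M2 * S
    rw [lintegral_finset_sum_measure]
    simp_rw [lintegral_smul_measure]
    calc ∑ j ∈ Finset.range N, f j / d j * ∫⁻ x, g x ∂ρ j
        ≤ ∑ j ∈ Finset.range N, ((if j = 0 then Iη else 0) + M2 * (e j + f j)) := by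
          refine Finset.sum_le_sum fun j _ => ?_
          rcases eq_or_ne j 0 with rfl | hj
          · simp only [if_pos rfl]
            refine le_add_right ?_
            calc f 0 / d 0 * ∫⁻ x, g x ∂ρ 0 ≤ 1 * Iη := by
                  refine mul_le_mul' (ENNReal.div_le_of_le_mul (by rw [one_mul]; exact hf_le 0)) le_rfl
              _ = Iη := one_mul _
          · simp only [if_neg hj, zero_add]
            have hbound : ∫⁻ x, g x ∂ρ j ≤ M2 * d j := by
              show ∫⁻ x in A j, g x ∂η ≤ M2 * d j
              calc ∫⁻ x in A j, g x ∂η ≤ ∫⁻ _ in A j, M2 ∂η :=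
                    lintegral_mono_ae ((ae_restrict_iff' (hAm j)).2
                      (ae_of_all _ fun x hx => hbdd j hj x hx))
                _ = M2 * d j := setLIntegral_const _ _
            calc f j / d j * ∫⁻ x, g x ∂ρ j ≤ f j / d j * (M2 * d j) :=
                  mul_le_mul_right hbound _
              _ = M2 * (f j / d j * d j) := by ring
              _ = M2 * f j := by rw [hfdj j]
              _ ≤ M2 * (e j + f j) := mul_le_mul_right le_add_self _
      _ = (∑ j ∈ Finset.range N, (if j = 0 then Iη else 0)) + M2 * S := by
          rw [Finset.sum_add_distrib, Finset.mul_sum]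
      _ ≤ Iη + M2 * S := by
          refine add_le_add ?_ le_rfl
          rw [Finset.sum_ite_eq' (Finset.range N) 0 (fun _ => Iη)]
          split_ifs
          · exact le_rfl
          · exact zero_le
  have hB2 : r⁻¹ * ∫⁻ p : E × E, ENNReal.ofReal (‖φ p.1 - φ p.2‖ ^ 2) ∂μ'.prod η'
      ≤ 2 * (Iμ + M2 * S) + 2 * (Iη + M2 * S) := by
    have hb := lintegral_cost_prod_le φ hg μ' η'
    rw [hμ'_univ, hη'_univ] at hb
    calc r⁻¹ * ∫⁻ p : E × E, ENNReal.ofReal (‖φ p.1 - φ p.2‖ ^ 2) ∂μ'.prod η'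
        ≤ r⁻¹ * (2 * (∫⁻ x, g x ∂μ') * r + 2 * (r * ∫⁻ x, g x ∂η')) := mul_le_mul_right hb _
      _ = 2 * (∫⁻ x, g x ∂μ') * (r * r⁻¹) + 2 * (∫⁻ x, g x ∂η') * (r * r⁻¹) := by ring
      _ ≤ 2 * (∫⁻ x, g x ∂μ') * 1 + 2 * (∫⁻ x, g x ∂η') * 1 :=
          add_le_add (mul_le_mul_right (ENNReal.mul_inv_le_one r) _)
            (mul_le_mul_right (ENNReal.mul_inv_le_one r) _)
      _ = 2 * (∫⁻ x, g x ∂μ') + 2 * (∫⁻ x, g x ∂η') := by rw [mul_one, mul_one]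
      _ ≤ 2 * (Iμ + M2 * S) + 2 * (Iη + M2 * S) :=
          add_le_add (mul_le_mul_right hG'μ _) (mul_le_mul_right hG'η _)
  calc ∫⁻ p : E × E, ENNReal.ofReal (‖φ p.1 - φ p.2‖ ^ 2) ∂π
      ≤ ((2 * Iμ + 2 * Iη) + ε2) + (2 * (Iμ + M2 * S) + 2 * (Iη + M2 * S)) := by
        rw [hπint]; exact add_le_add hB1 hB2
    _ = ε2 + 4 * Iμ + 4 * Iη + 4 * M2 * S := by ring
    _ = ε2 + 4 * (∫⁻ x in A 0, g x ∂μ) + 4 * (∫⁻ x in A 0, g x ∂η) + 4 * M2 * S := rfl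

lemma exists_partition {E : Type*} [MetricSpace E] [TopologicalSpace.SeparableSpace E]
    [MeasurableSpace E] [BorelSpace E] {H : Type*} [NormedAddCommGroup H]
    (φ : E → H) (hφ : Continuous φ) (μ : Measure E) [IsProbabilityMeasure μ]
    (hint : ∫⁻ x, gg φ x ∂μ ≠ ∞)
    {εr δ : ℝ} (hε : 0 < εr) (hδ : 0 < δ) :
    ∃ (N : ℕ) (A : ℕ → Set E) (M2 : ℝ≥0∞),
      M2 ≠ ∞ ∧ (∀ j, MeasurableSet (A j)) ∧ (∀ i j, i ≠ j → Disjoint (A i) (A j)) ∧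
      (⋃ j ∈ Finset.range N, A j = Set.univ) ∧
      (∀ j, j ≠ 0 → ∀ x ∈ A j, ∀ y ∈ A j,
        ENNReal.ofReal (‖φ x - φ y‖ ^ 2) ≤ ENNReal.ofReal (εr ^ 2)) ∧
      (∀ j, j ≠ 0 → ∀ x ∈ A j, gg φ x ≤ M2) ∧
      ∫⁻ x in A 0, gg φ x ∂μ ≤ ENNReal.ofReal δ := by
  classical
  have hg : Measurable (gg φ) := (ENNReal.continuous_ofReal.comp (hφ.norm.pow 2)).measurable
  rcases isEmpty_or_nonempty E with hE | hE
  · refine ⟨0, fun _ => ∅, 0, by simp, fun _ => MeasurableSet.empty,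
      fun _ _ _ => disjoint_bot_left, ?_, by simp, by simp, by simp⟩
    simp [Set.eq_empty_of_isEmpty (Set.univ : Set E)]
  obtain ⟨u, hu⟩ := TopologicalSpace.exists_dense_seq E
  set B : ℕ → Set E := fun k => φ ⁻¹' Metric.ball (φ (u k)) (εr / 2) with hB
  have hBm : ∀ k, MeasurableSet (B k) := fun k => (Metric.isOpen_ball.preimage hφ).measurableSet
  have hBcover : ∀ x : E, ∃ k, x ∈ B k := by
    intro x
    have hopen : IsOpen (φ ⁻¹' Metric.ball (φ x) (εr / 2)) := Metric.isOpen_ball.preimage hφ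
    have hne : (φ ⁻¹' Metric.ball (φ x) (εr / 2)).Nonempty :=
      ⟨x, by simp [Metric.mem_ball, half_pos hε]⟩
    obtain ⟨k, hk⟩ := hu.exists_mem_open hopen hne
    refine ⟨k, ?_⟩
    simp only [hB, Set.mem_preimage, Metric.mem_ball] at hk ⊢
    rw [dist_comm]
    exact hk
  set S : ℕ → Set E := fun n => ⋃ k ∈ Finset.range n, B k with hS
  have hSm : ∀ n, MeasurableSet (S n) := fun n => Finset.measurableSet_biUnion _ fun k _ => hBm k
  set κ : Measure E := μ.withDensity (gg φ) with hκ
  haveI : IsFiniteMeasure κ := by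
    constructor
    rw [hκ, withDensity_apply _ MeasurableSet.univ, Measure.restrict_univ]
    exact lt_top_iff_ne_top.2 hint
  have hmono : Antitone fun n => (S n)ᶜ := by
    intro a b hab
    refine Set.compl_subset_compl.2 ?_
    intro x hx
    simp only [hS, Set.mem_iUnion] at hx ⊢
    obtain ⟨k, hk, hxk⟩ := hx
    exact ⟨k, Finset.mem_range.2 (lt_of_lt_of_le (Finset.mem_range.1 hk) hab), hxk⟩
  have hInter : ⋂ n, (S n)ᶜ = ∅ := by
    rw [← Set.compl_iUnion, Set.compl_empty_iff]
    ext x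
    simp only [Set.mem_iUnion, Set.mem_univ, iff_true]
    obtain ⟨k, hk⟩ := hBcover x
    exact ⟨k + 1, Set.mem_biUnion (Finset.self_mem_range_succ k) hk⟩
  have htend : Tendsto (fun n => κ ((S n)ᶜ)) atTop (nhds 0) := by
    have h := tendsto_measure_iInter_atTop (μ := κ)
      (fun n => (hSm n).compl.nullMeasurableSet) hmono ⟨0, measure_ne_top _ _⟩
    rw [hInter] at h
    simpa [Function.comp_def] using h
  have hev : ∀ᶠ n in atTop, κ ((S n)ᶜ) < ENNReal.ofReal δ :=
    htend.eventually_lt_const (by simpa using ENNReal.ofReal_pos.2 hδ)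
  obtain ⟨n₀, hn₀⟩ := hev.exists
  set A : ℕ → Set E := fun j =>
    if j = 0 then (S n₀)ᶜ else if j ≤ n₀ then B (j - 1) \ S (j - 1) else ∅ with hA
  have hAm : ∀ j, MeasurableSet (A j) := by
    intro j
    rw [hA]
    dsimp only
    split_ifs
    · exact (hSm n₀).compl
    · exact (hBm _).diff (hSm _)
    · exact MeasurableSet.empty
  have hA0 : A 0 = (S n₀)ᶜ := by simp [hA]
  have hAj : ∀ j, j ≠ 0 → j ≤ n₀ → A j = B (j - 1) \ S (j - 1) := by
    intro j h1 h2; rw [hA]; simp [h1, h2]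
  have hAj' : ∀ j, j ≠ 0 → ¬(j ≤ n₀) → A j = ∅ := by
    intro j h1 h2; rw [hA]; simp [h1, h2]
  have hBS : ∀ k n, k < n → B k ⊆ S n := by
    intro k n hkn
    exact Set.subset_biUnion_of_mem (Finset.mem_range.2 hkn)
  have hdisj : ∀ i j, i ≠ j → Disjoint (A i) (A j) := by
    have key : ∀ i j, i < j → Disjoint (A i) (A j) := by
      intro i j hij
      by_cases hj0 : j = 0
      · omega
      by_cases hjn : j ≤ n₀
      · rw [hAj j hj0 hjn]
        by_cases hi0 : i = 0
        · rw [hi0, hA0]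
          refine Set.disjoint_left.2 fun x hx hxj => ?_
          exact hx (hBS (j-1) n₀ (by omega) hxj.1)
        · rw [hAj i hi0 (by omega)]
          refine Set.disjoint_left.2 fun x hx hxj => ?_
          exact hxj.2 (hBS (i-1) (j-1) (by omega) hx.1)
      · rw [hAj' j hj0 hjn]
        exact disjoint_bot_right
    intro i j hij
    rcases lt_or_gt_of_ne hij with h | h
    · exact key i j h
    · exact (key j i h).symm
  have hcover : ⋃ j ∈ Finset.range (n₀ + 1), A j = Set.univ := by
    rw [Set.eq_univ_iff_forall]
    intro x
    by_cases hx : x ∈ S n₀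
    · obtain ⟨k0, hk0⟩ := hBcover x
      have hex : ∃ k, x ∈ B k := ⟨k0, hk0⟩
      set k := Nat.find hex with hk
      have hxk : x ∈ B k := Nat.find_spec hex
      have hmin : ∀ i, i < k → x ∉ B i := fun i hi => Nat.find_min hex hi
      have hkn : k < n₀ := by
        simp only [hS, Set.mem_iUnion] at hx
        obtain ⟨k', hk'r, hk'⟩ := hx
        have := Nat.find_min' hex hk'
        rw [Finset.mem_range] at hk'r
        omega
      refine Set.mem_biUnion (Finset.mem_range.2 (by omega : k + 1 < n₀ + 1)) ?_
      rw [hAj (k + 1) (by omega) (by omega)]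
      refine ⟨by simpa using hxk, ?_⟩
      simp only [hS, Set.mem_iUnion, not_exists]
      intro i hir hxi
      exact hmin i (by simpa using Finset.mem_range.1 hir) hxi
    · refine Set.mem_biUnion (x := (0:ℕ)) (Finset.mem_range.2 (Nat.succ_pos n₀)) ?_
      rw [hA0]; exact hx
  set M : ℝ := ∑ k ∈ Finset.range n₀, (‖φ (u k)‖ + εr / 2) ^ 2 with hM
  refine ⟨n₀ + 1, A, ENNReal.ofReal M, ENNReal.ofReal_ne_top, hAm, hdisj, hcover, ?_, ?_, ?_⟩
  · intro j hj x hx y hy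
    by_cases hjn : j ≤ n₀
    · rw [hAj j hj hjn] at hx hy
      have hxd : dist (φ x) (φ (u (j-1))) < εr / 2 := by
        have := hx.1; simpa [hB, Metric.mem_ball] using this
      have hyd : dist (φ y) (φ (u (j-1))) < εr / 2 := by
        have := hy.1; simpa [hB, Metric.mem_ball] using this
      have hd : ‖φ x - φ y‖ < εr := by
        rw [← dist_eq_norm]
        calc dist (φ x) (φ y) ≤ dist (φ x) (φ (u (j-1))) + dist (φ (u (j-1))) (φ y) :=
              dist_triangle _ _ _
          _ = dist (φ x) (φ (u (j-1))) + dist (φ y) (φ (u (j-1))) := by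
              rw [dist_comm (φ (u (j-1))) (φ y)]
          _ < εr / 2 + εr / 2 := add_lt_add hxd hyd
          _ = εr := add_halves εr
      exact ENNReal.ofReal_le_ofReal (by nlinarith [norm_nonneg (φ x - φ y)])
    · rw [hAj' j hj hjn] at hx
      exact absurd hx (Set.notMem_empty x)
  · intro j hj x hx
    by_cases hjn : j ≤ n₀
    · rw [hAj j hj hjn] at hx
      have hxd : dist (φ x) (φ (u (j-1))) < εr / 2 := by
        have := hx.1; simpa [hB, Metric.mem_ball] using this
      have hb : ‖φ x‖ ≤ ‖φ (u (j-1))‖ + εr / 2 := by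
        have h1 := norm_sub_norm_le (φ x) (φ (u (j-1)))
        rw [← dist_eq_norm] at h1
        linarith
      show ENNReal.ofReal (‖φ x‖ ^ 2) ≤ ENNReal.ofReal M
      refine ENNReal.ofReal_le_ofReal ?_
      have hsq : ‖φ x‖ ^ 2 ≤ (‖φ (u (j-1))‖ + εr / 2) ^ 2 :=
        sq_le_sq' (by linarith [norm_nonneg (φ x), norm_nonneg (φ (u (j-1)))]) hb
      refine hsq.trans ?_
      have hmem : j - 1 ∈ Finset.range n₀ := Finset.mem_range.2 (by omega)
      exact Finset.single_le_sum (f := fun k => (‖φ (u k)‖ + εr / 2) ^ 2)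
        (fun k _ => sq_nonneg _) hmem
    · rw [hAj' j hj hjn] at hx
      exact absurd hx (Set.notMem_empty x)
  · rw [hA0, ← withDensity_apply _ (hSm n₀).compl]
    exact hn₀.le


end A

section B
variable {E : Type*} [MeasurableSpace E] {Ω : Type*} [MeasurableSpace Ω]

lemma empMeasure_apply (X : ℕ → Ω → E) (n : ℕ) (ω : Ω) {s : Set E} (hs : MeasurableSet s) :
    empMeasure X n ω s =
      (n : ℝ≥0∞)⁻¹ * ∑ i ∈ Finset.range n, s.indicator (fun _ => (1:ℝ≥0∞)) (X i ω) := by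
  rw [empMeasure, Measure.smul_apply, smul_eq_mul, Measure.finset_sum_apply]
  congr 1
  refine Finset.sum_congr rfl fun i _ => ?_
  rw [Measure.dirac_apply' _ hs]
  rfl

lemma emp_isProb (X : ℕ → Ω → E) {n : ℕ} (hn : n ≠ 0) (ω : Ω) :
    IsProbabilityMeasure (empMeasure X n ω) := by
  constructor
  rw [empMeasure_apply X n ω MeasurableSet.univ]
  simp only [Set.indicator_univ, Finset.sum_const, Finset.card_range, nsmul_eq_mul, mul_one]
  exact ENNReal.inv_mul_cancel (Nat.cast_ne_zero.2 hn) (ENNReal.natCast_ne_top n)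

lemma lintegral_empMeasure (X : ℕ → Ω → E) (n : ℕ) (ω : Ω) {h : E → ℝ≥0∞}
    (hh : Measurable h) :
    ∫⁻ x, h x ∂(empMeasure X n ω) = (n : ℝ≥0∞)⁻¹ * ∑ i ∈ Finset.range n, h (X i ω) := by
  rw [empMeasure, lintegral_smul_measure, lintegral_finset_sum_measure]
  simp_rw [lintegral_dirac' _ hh, smul_eq_mul]

lemma lintegral_lintegral_empMeasure (P : Measure Ω) [IsProbabilityMeasure P]
    (μ : Measure E) (X : ℕ → Ω → E) (hXm : ∀ i, Measurable (X i))
    (hident : ∀ i, P.map (X i) = μ) {h : E → ℝ≥0∞} (hh : Measurable h)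
    {n : ℕ} (hn : n ≠ 0) :
    ∫⁻ ω, (∫⁻ x, h x ∂(empMeasure X n ω)) ∂P = ∫⁻ x, h x ∂μ := by
  have hmeas : ∀ i : ℕ, Measurable fun ω => h (X i ω) := fun i => hh.comp (hXm i)
  calc ∫⁻ ω, (∫⁻ x, h x ∂(empMeasure X n ω)) ∂P
      = ∫⁻ ω, (n : ℝ≥0∞)⁻¹ * ∑ i ∈ Finset.range n, h (X i ω) ∂P := by
        simp_rw [lintegral_empMeasure X n _ hh]
    _ = (n : ℝ≥0∞)⁻¹ * ∑ i ∈ Finset.range n, ∫⁻ ω, h (X i ω) ∂P := by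
        rw [lintegral_const_mul _ (Finset.measurable_sum _ fun i _ => hmeas i),
          lintegral_finset_sum _ fun i _ => hmeas i]
    _ = (n : ℝ≥0∞)⁻¹ * ∑ i ∈ Finset.range n, ∫⁻ x, h x ∂μ := by
        congr 1
        refine Finset.sum_congr rfl fun i _ => ?_
        rw [← hident i, lintegral_map hh (hXm i)]
    _ = ∫⁻ x, h x ∂μ := by
        rw [Finset.sum_const, Finset.card_range, nsmul_eq_mul, ← mul_assoc,
          ENNReal.inv_mul_cancel (Nat.cast_ne_zero.2 hn) (ENNReal.natCast_ne_top n), one_mul]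

lemma ofReal_absdiff (a b : ℝ≥0∞) (ha : a ≠ ∞) (hb : b ≠ ∞) :
    (a - b) + (b - a) = ENNReal.ofReal |a.toReal - b.toReal| := by
  rcases le_total a b with h | h
  · rw [tsub_eq_zero_of_le h, zero_add, abs_of_nonpos (by
      simp [sub_nonpos, ENNReal.toReal_le_toReal ha hb, h]), neg_sub,
      ← ENNReal.ofReal_toReal ha, ← ENNReal.ofReal_toReal hb, ← ENNReal.ofReal_sub _ ENNReal.toReal_nonneg]
    rw [ENNReal.ofReal_toReal ha, ENNReal.ofReal_toReal hb]
  · rw [tsub_eq_zero_of_le h, add_zero, abs_of_nonneg (by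
      simp [sub_nonneg, ENNReal.toReal_le_toReal hb ha, h]),
      ← ENNReal.ofReal_toReal ha, ← ENNReal.ofReal_toReal hb, ← ENNReal.ofReal_sub _ ENNReal.toReal_nonneg]
    rw [ENNReal.ofReal_toReal ha, ENNReal.ofReal_toReal hb]

lemma lintegral_absdiff_le (P : Measure Ω) [IsProbabilityMeasure P]
    (μ : Measure E) [IsProbabilityMeasure μ]
    (X : ℕ → Ω → E) (hXm : ∀ i, Measurable (X i))
    (hindep : ProbabilityTheory.iIndepFun (m := fun _ : ℕ => ‹MeasurableSpace E›) X P)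
    (hident : ∀ i, P.map (X i) = μ)
    {A : Set E} (hA : MeasurableSet A) {n : ℕ} (hn : n ≠ 0) :
    ∫⁻ ω, ((μ A - empMeasure X n ω A) + (empMeasure X n ω A - μ A)) ∂P
      ≤ ENNReal.ofReal ((n : ℝ)⁻¹) ^ (1/2 : ℝ) := by
  classical
  set Z : ℕ → Ω → ℝ := fun i ω => A.indicator (fun _ => (1:ℝ)) (X i ω) with hZ
  have hZmeas : ∀ i, Measurable (Z i) :=
    fun i => (measurable_const.indicator hA).comp (hXm i)
  have hZ01 : ∀ i ω, 0 ≤ Z i ω ∧ Z i ω ≤ 1 := by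
    intro i ω
    by_cases h : X i ω ∈ A <;> simp [hZ, Set.indicator_apply, h]
  set p : ℝ := (μ A).toReal with hp
  have hp01 : 0 ≤ p ∧ p ≤ 1 := by
    refine ⟨ENNReal.toReal_nonneg, ?_⟩
    rw [hp]
    calc (μ A).toReal ≤ (1 : ℝ≥0∞).toReal := ENNReal.toReal_mono (by norm_num) prob_le_one
      _ = 1 := by simp
  have hZint : ∀ i, ∫ ω, Z i ω ∂P = p := by
    intro i
    rw [hZ]
    have : ∫ ω, A.indicator (fun _ => (1:ℝ)) (X i ω) ∂P
        = ∫ x, A.indicator (fun _ => (1:ℝ)) x ∂(P.map (X i)) := by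
      rw [integral_map (hXm i).aemeasurable
        ((measurable_const.indicator hA).aestronglyMeasurable)]
    rw [this, hident i]
    have := integral_indicator_one (μ := μ) hA
    exact this
  set W : Ω → ℝ := fun ω => (n : ℝ)⁻¹ * ∑ i ∈ Finset.range n, Z i ω with hW
  have hWmeas : Measurable W :=
    (Finset.measurable_sum _ fun i _ => hZmeas i).const_mul _
  have hW01 : ∀ ω, 0 ≤ W ω ∧ W ω ≤ 1 := by
    intro ω
    constructor
    · exact mul_nonneg (by positivity) (Finset.sum_nonneg fun i _ => (hZ01 i ω).1)
    · have h1 : ∑ i ∈ Finset.range n, Z i ω ≤ n := by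
        calc ∑ i ∈ Finset.range n, Z i ω ≤ ∑ _i ∈ Finset.range n, (1:ℝ) :=
              Finset.sum_le_sum fun i _ => (hZ01 i ω).2
          _ = n := by simp
      calc W ω ≤ (n : ℝ)⁻¹ * n := by
            rw [hW]
            exact mul_le_mul_of_nonneg_left h1 (by positivity)
        _ = 1 := inv_mul_cancel₀ (Nat.cast_ne_zero.2 hn)
  have hWq : ∀ ω, empMeasure X n ω A = ENNReal.ofReal (W ω) := by
    intro ω
    rw [empMeasure_apply X n ω hA, hW, ENNReal.ofReal_mul (by positivity),
      ENNReal.ofReal_inv_of_pos (by exact_mod_cast Nat.pos_of_ne_zero hn),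
      ENNReal.ofReal_natCast, ENNReal.ofReal_sum_of_nonneg (fun i _ => (hZ01 i ω).1)]
    congr 1
    refine Finset.sum_congr rfl fun i _ => ?_
    by_cases h : X i ω ∈ A <;> simp [hZ, Set.indicator_apply, h]
  -- rewrite integrand
  have hrw : ∀ ω, (μ A - empMeasure X n ω A) + (empMeasure X n ω A - μ A)
      = ENNReal.ofReal |p - W ω| := by
    intro ω
    rw [ofReal_absdiff _ _ (measure_ne_top μ A) (by rw [hWq ω]; exact ENNReal.ofReal_ne_top)]
    congr 1
    rw [hWq ω, ENNReal.toReal_ofReal (hW01 ω).1, hp]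
  simp_rw [hrw]
  -- variance computation
  have hZmem : ∀ i ∈ Finset.range n, MemLp (Z i) 2 P := by
    intro i _
    refine MemLp.of_bound (hZmeas i).aestronglyMeasurable 1 (ae_of_all _ fun ω => ?_)
    rw [Real.norm_eq_abs, abs_le]
    constructor <;> linarith [(hZ01 i ω).1, (hZ01 i ω).2]
  have hWmem : MemLp W 2 P := by
    refine MemLp.of_bound hWmeas.aestronglyMeasurable 1 (ae_of_all _ fun ω => ?_)
    rw [Real.norm_eq_abs, abs_le]
    constructor <;> linarith [(hW01 ω).1, (hW01 ω).2]
  have hEW : ∫ ω, W ω ∂P = p := by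
    rw [hW]
    have hZint' : ∀ i ∈ Finset.range n, Integrable (Z i) P :=
      fun i hi => (hZmem i hi).integrable one_le_two
    rw [integral_const_mul, integral_finset_sum _ hZint']
    simp_rw [hZint]
    rw [Finset.sum_const, Finset.card_range, nsmul_eq_mul, ← mul_assoc,
      inv_mul_cancel₀ (Nat.cast_ne_zero.2 hn), one_mul]
  have hvarZ : ∀ i ∈ Finset.range n, ProbabilityTheory.variance (Z i) P ≤ 1 := by
    intro i hi
    refine le_trans (ProbabilityTheory.variance_le_expectation_sq
      (hZmeas i).aestronglyMeasurable) ?_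
    have hsq : ∀ ω, (Z i ω) ^ 2 ≤ 1 := by
      intro ω
      nlinarith [(hZ01 i ω).1, (hZ01 i ω).2]
    calc ∫ ω, (Z i ^ 2) ω ∂P ≤ ∫ _ω, (1:ℝ) ∂P := by
          exact integral_mono (hZmem i hi).integrable_sq (integrable_const 1) fun ω => hsq ω
      _ = 1 := by simp
  have hvarsum : ProbabilityTheory.variance (fun ω => ∑ i ∈ Finset.range n, Z i ω) P
      ≤ n := by
    have h := ProbabilityTheory.IndepFun.variance_sum (μ := P) hZmem
      (fun i _ j _ hij => (ProbabilityTheory.iIndepFun.indepFun hindep hij).comp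
        (measurable_const.indicator hA) (measurable_const.indicator hA))
    have h2 : (∑ i ∈ Finset.range n, ProbabilityTheory.variance (Z i) P) ≤ n := by
      calc ∑ i ∈ Finset.range n, ProbabilityTheory.variance (Z i) P
          ≤ ∑ _i ∈ Finset.range n, (1:ℝ) := Finset.sum_le_sum hvarZ
        _ = n := by simp
    calc ProbabilityTheory.variance (fun ω => ∑ i ∈ Finset.range n, Z i ω) P
        = ∑ i ∈ Finset.range n, ProbabilityTheory.variance (Z i) P := by
          rw [← h]
          congr 1
          ext ω
          simp
      _ ≤ n := h2
  have hvarW : ProbabilityTheory.variance W P ≤ (n : ℝ)⁻¹ := by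
    have h := ProbabilityTheory.variance_const_mul ((n : ℝ)⁻¹)
      (fun ω => ∑ i ∈ Finset.range n, Z i ω) P
    have hWeq : W = fun ω => (n:ℝ)⁻¹ * (fun ω => ∑ i ∈ Finset.range n, Z i ω) ω := rfl
    rw [hWeq, h]
    calc ((n:ℝ)⁻¹) ^ 2 * ProbabilityTheory.variance (fun ω => ∑ i ∈ Finset.range n, Z i ω) P
        ≤ ((n:ℝ)⁻¹) ^ 2 * n := by
          refine mul_le_mul_of_nonneg_left hvarsum (by positivity)
      _ = (n : ℝ)⁻¹ := by
          rw [pow_two]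
          field_simp
  -- ∫ (p - W)² ≤ 1/n
  have hint2 : ∫ ω, (p - W ω) ^ 2 ∂P ≤ (n : ℝ)⁻¹ := by
    have hvar := ProbabilityTheory.variance_eq_integral hWmem.aemeasurable
    rw [hEW] at hvar
    have heq : ∫ ω, (p - W ω) ^ 2 ∂P = ∫ ω, (W ω - p) ^ 2 ∂P :=
      integral_congr_ae (ae_of_all _ fun ω => by ring)
    rw [heq, ← hvar]
    exact hvarW
  calc ∫⁻ ω, ENNReal.ofReal |p - W ω| ∂P
      = ∫⁻ ω, (ENNReal.ofReal ((p - W ω) ^ 2)) ^ (1/2:ℝ) ∂P := by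
        refine lintegral_congr fun ω => ?_
        rw [← sq_abs, ENNReal.ofReal_pow (abs_nonneg _), rpow_half_sq]
    _ ≤ (∫⁻ ω, ENNReal.ofReal ((p - W ω) ^ 2) ∂P) ^ (1/2:ℝ) :=
        lintegral_rpow_half_le P
          ((measurable_const.sub hWmeas).pow_const 2).ennreal_ofReal.aemeasurable
    _ ≤ (ENNReal.ofReal ((n:ℝ)⁻¹)) ^ (1/2:ℝ) := by
        refine ENNReal.rpow_le_rpow ?_ (by norm_num)
        have hInt : Integrable (fun ω => (p - W ω) ^ 2) P := by
          refine (integrable_const (4:ℝ)).mono'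
            (((measurable_const.sub hWmeas).pow_const 2).aestronglyMeasurable)
            (ae_of_all _ fun ω => ?_)
          rw [Real.norm_eq_abs, abs_of_nonneg (sq_nonneg _)]
          nlinarith [(hW01 ω).1, (hW01 ω).2, hp01.1, hp01.2]
        rw [← ofReal_integral_eq_lintegral_ofReal hInt (ae_of_all _ fun ω => sq_nonneg _)]
        exact ENNReal.ofReal_le_ofReal hint2


end B
end GammaKAux

open GammaKAux

/-- Lemma 3, part 2: for i.i.d. samples from `μ` with `∫‖φ‖² dμ < ∞`, the expectation
`∫ γ_φ(μ, μ_n^ω) dP(ω)` tends to `0`. -/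
theorem lintegral_gammaK_empMeasure_tendsto_zero
    {E : Type*} [MetricSpace E] [CompleteSpace E] [TopologicalSpace.SeparableSpace E]
    [MeasurableSpace E] [BorelSpace E]
    {H : Type*} [NormedAddCommGroup H] [InnerProductSpace ℝ H] [CompleteSpace H]
    (φ : E → H) (hφ : Continuous φ)
    (μ : Measure E) [IsProbabilityMeasure μ]
    (hφ2 : Integrable (fun x => ‖φ x‖ ^ 2) μ)
    {Ω : Type*} [MeasurableSpace Ω] (P : Measure Ω) [IsProbabilityMeasure P]
    (X : ℕ → Ω → E) (hXm : ∀ i, Measurable (X i))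
    (hindep : ProbabilityTheory.iIndepFun
      (m := fun _ : ℕ => (inferInstance : MeasurableSpace E)) X P)
    (hident : ∀ i, P.map (X i) = μ) :
    Tendsto (fun n => ∫⁻ ω, gammaK φ μ (empMeasure X n ω) ∂P) atTop (nhds 0) := by
  classical
  have hg : Measurable (gg φ) := (ENNReal.continuous_ofReal.comp (hφ.norm.pow 2)).measurable
  have hint : ∫⁻ x, gg φ x ∂μ ≠ ∞ := hφ2.lintegral_lt_top.ne
  rw [ENNReal.tendsto_atTop_zero]
  intro ε hε
  set ε' : ℝ≥0∞ := min ε 1 with hε'def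
  have hε'pos : 0 < ε' := lt_min hε one_pos
  have hε'top : ε' ≠ ∞ := (lt_of_le_of_lt (min_le_right _ _) (by norm_num)).ne
  set tR : ℝ := (ε' ^ 2).toReal with htR
  have hε'2top : ε' ^ 2 ≠ ∞ := ENNReal.pow_ne_top hε'top
  have hε'2pos : 0 < ε' ^ 2 := ENNReal.pow_pos hε'pos 2
  have htpos : 0 < tR := ENNReal.toReal_pos hε'2pos.ne' hε'2top
  have hofReal_t : ENNReal.ofReal tR = ε' ^ 2 := ENNReal.ofReal_toReal hε'2top
  obtain ⟨N, A, M2, hM2top, hAm, hdisj, hcover, hdiam, hbdd, htail⟩ :=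
    exists_partition φ hφ μ hint (εr := Real.sqrt (tR/4)) (δ := tR/32)
      (Real.sqrt_pos.2 (by linarith)) (by linarith)
  have hε2 : ENNReal.ofReal (Real.sqrt (tR/4) ^ 2) = ENNReal.ofReal (tR/4) := by
    rw [Real.sq_sqrt (by linarith)]
  set C : ℝ≥0∞ := 4 * M2 * N with hC
  have hCtop : C ≠ ∞ := by
    rw [hC]
    exact ENNReal.mul_ne_top (ENNReal.mul_ne_top (by norm_num) hM2top) (ENNReal.natCast_ne_top N)
  set β : ℕ → ℝ≥0∞ := fun n => ENNReal.ofReal ((n:ℝ)⁻¹) ^ (1/2 : ℝ) with hβ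
  have hβ0 : Tendsto β atTop (nhds 0) := by
    have h1 : Tendsto (fun n : ℕ => ENNReal.ofReal ((n:ℝ)⁻¹)) atTop (nhds 0) := by
      have h2 := (ENNReal.continuous_ofReal.tendsto 0).comp tendsto_inv_atTop_nhds_zero_nat
      simpa [Function.comp_def] using h2
    have h3 := ((ENNReal.continuous_rpow_const (y := (1/2:ℝ))).tendsto 0).comp h1
    simpa [hβ, ENNReal.zero_rpow_of_pos (by norm_num : (0:ℝ) < 1/2), Function.comp_def] using h3
  have hCβ : Tendsto (fun n => C * β n) atTop (nhds 0) := by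
    have := ENNReal.Tendsto.const_mul hβ0 (Or.inr hCtop)
    simpa using this
  have hev : ∀ᶠ n in atTop, C * β n < ENNReal.ofReal (tR/2) :=
    hCβ.eventually_lt_const (ENNReal.ofReal_pos.2 (by linarith))
  obtain ⟨N1, hN1⟩ := eventually_atTop.1 hev
  refine ⟨max N1 1, fun n hn => ?_⟩
  have hn1 : n ≠ 0 := by
    have := le_trans (le_max_right N1 1) hn
    omega
  set Iμ : ℝ≥0∞ := ∫⁻ x in A 0, gg φ x ∂μ with hIμ
  set empint : Ω → ℝ≥0∞ := fun ω => ∫⁻ x in A 0, gg φ x ∂(empMeasure X n ω) with hempint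
  set S : Ω → ℝ≥0∞ := fun ω => ∑ j ∈ Finset.range N,
      ((μ (A j) - empMeasure X n ω (A j)) + (empMeasure X n ω (A j) - μ (A j))) with hSdef
  set U : Ω → ℝ≥0∞ := fun ω =>
    ENNReal.ofReal (Real.sqrt (tR/4) ^ 2) + 4 * Iμ + 4 * empint ω + 4 * M2 * S ω with hU
  have hempint_eq : empint = fun ω =>
      (n : ℝ≥0∞)⁻¹ * ∑ i ∈ Finset.range n, (A 0).indicator (gg φ) (X i ω) := by
    funext ω
    show (∫⁻ x in A 0, gg φ x ∂(empMeasure X n ω)) = _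
    rw [← lintegral_indicator (hAm 0) _, lintegral_empMeasure X n ω (hg.indicator (hAm 0))]
  have hempint_meas : Measurable empint := by
    rw [hempint_eq]
    exact (Finset.measurable_sum _ fun i _ =>
      (hg.indicator (hAm 0)).comp (hXm i)).const_mul _
  have hqmeas : ∀ j, Measurable fun ω => empMeasure X n ω (A j) := by
    intro j
    have : (fun ω => empMeasure X n ω (A j)) = fun ω =>
        (n : ℝ≥0∞)⁻¹ * ∑ i ∈ Finset.range n, (A j).indicator (fun _ => (1:ℝ≥0∞)) (X i ω) := by
      funext ω; exact empMeasure_apply X n ω (hAm j)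
    rw [this]
    exact (Finset.measurable_sum _ fun i _ =>
      (measurable_const.indicator (hAm j)).comp (hXm i)).const_mul _
  have hSmeas : Measurable S := by
    rw [hSdef]
    refine Finset.measurable_sum _ fun j _ => Measurable.add ?_ ?_
    · exact (measurable_const.sub (hqmeas j))
    · exact ((hqmeas j).sub measurable_const)
  have hUmeas : Measurable U := by
    rw [hU]
    exact ((measurable_const.add (hempint_meas.const_mul 4)).add ((hSmeas.const_mul (4 * M2))))
  have hpoint : ∀ ω, gammaK φ μ (empMeasure X n ω) ≤ (U ω) ^ (1/2:ℝ) := by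
    intro ω
    haveI := emp_isProb X hn1 ω
    obtain ⟨π, hπc, hπb⟩ := exists_coupling φ hg μ (empMeasure X n ω) N A hAm hdisj
      hcover (ENNReal.ofReal (Real.sqrt (tR/4) ^ 2)) M2 hdiam hbdd
    rw [gammaK]
    refine ENNReal.rpow_le_rpow ?_ (by norm_num)
    exact le_trans (iInf_le _ ⟨π, hπc⟩) hπb
  have hstep1 : ∫⁻ ω, gammaK φ μ (empMeasure X n ω) ∂P ≤ (∫⁻ ω, U ω ∂P) ^ (1/2:ℝ) :=
    le_trans (lintegral_mono hpoint) (lintegral_rpow_half_le P hUmeas.aemeasurable)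
  have hEempint : ∫⁻ ω, empint ω ∂P = Iμ := by
    rw [hempint_eq]
    have := lintegral_lintegral_empMeasure P μ X hXm hident
      (h := (A 0).indicator (gg φ)) (hg.indicator (hAm 0)) hn1
    simp_rw [lintegral_empMeasure X n _ (hg.indicator (hAm 0))] at this
    rw [this, lintegral_indicator (hAm 0) _]
  have hES : ∫⁻ ω, S ω ∂P ≤ N * β n := by
    simp only [hSdef]
    rw [lintegral_finset_sum (f := fun j ω =>
        (μ (A j) - empMeasure X n ω (A j)) + (empMeasure X n ω (A j) - μ (A j))) _ fun j _ => Measurable.add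
      (measurable_const.sub (hqmeas j)) ((hqmeas j).sub measurable_const)]
    calc ∑ j ∈ Finset.range N, ∫⁻ ω,
          ((μ (A j) - empMeasure X n ω (A j)) + (empMeasure X n ω (A j) - μ (A j))) ∂P
        ≤ ∑ _j ∈ Finset.range N, β n :=
          Finset.sum_le_sum fun j _ =>
            lintegral_absdiff_le P μ X hXm hindep hident (hAm j) hn1
      _ = N * β n := by rw [Finset.sum_const, Finset.card_range, nsmul_eq_mul]
  have hEU : ∫⁻ ω, U ω ∂P ≤ ENNReal.ofReal (tR/2) + C * β n := by
    have hUeq : U = fun ω =>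
        (ENNReal.ofReal (Real.sqrt (tR/4) ^ 2) + 4 * Iμ)
          + (4 * empint ω + 4 * M2 * S ω) := by
      funext ω; rw [hU]; ring
    rw [hUeq, lintegral_add_left measurable_const, lintegral_const, measure_univ, mul_one,
      lintegral_add_left (hempint_meas.const_mul 4), lintegral_const_mul 4 hempint_meas,
      lintegral_const_mul (4 * M2) hSmeas]
    rw [hEempint]
    have hIμle : Iμ ≤ ENNReal.ofReal (tR/32) := htail
    have h4 : (4:ℝ≥0∞) * Iμ ≤ ENNReal.ofReal (tR/8) := by
      calc (4:ℝ≥0∞) * Iμ ≤ 4 * ENNReal.ofReal (tR/32) := mul_le_mul_right hIμle _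
        _ = ENNReal.ofReal (4 * (tR/32)) := by
            rw [ENNReal.ofReal_mul (by norm_num : (0:ℝ) ≤ 4), ENNReal.ofReal_ofNat]
        _ = ENNReal.ofReal (tR/8) := by rw [show (4:ℝ) * (tR/32) = tR/8 by ring]
    have hM2S : 4 * M2 * ∫⁻ ω, S ω ∂P ≤ C * β n := by
      calc 4 * M2 * ∫⁻ ω, S ω ∂P ≤ 4 * M2 * (N * β n) := mul_le_mul_right hES _
        _ = C * β n := by rw [hC]; ring
    calc ENNReal.ofReal (Real.sqrt (tR/4) ^ 2) + 4 * Iμ + (4 * Iμ + 4 * M2 * ∫⁻ ω, S ω ∂P)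
        ≤ (ENNReal.ofReal (tR/4) + ENNReal.ofReal (tR/8)) + (ENNReal.ofReal (tR/8) + C * β n) := by
          rw [hε2]
          exact add_le_add (add_le_add le_rfl h4) (add_le_add h4 hM2S)
      _ = ENNReal.ofReal (tR/4) + ENNReal.ofReal (tR/8) + ENNReal.ofReal (tR/8) + C * β n := by
          ring
      _ = ENNReal.ofReal (tR/2) + C * β n := by
          rw [← ENNReal.ofReal_add (by linarith) (by linarith),
            ← ENNReal.ofReal_add (by linarith) (by linarith),
            show tR/4 + tR/8 + tR/8 = tR/2 by ring]
  calc ∫⁻ ω, gammaK φ μ (empMeasure X n ω) ∂P ≤ (∫⁻ ω, U ω ∂P) ^ (1/2:ℝ) := hstep1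
    _ ≤ (ENNReal.ofReal (tR/2) + C * β n) ^ (1/2:ℝ) :=
        ENNReal.rpow_le_rpow hEU (by norm_num)
    _ ≤ (ENNReal.ofReal (tR/2) + ENNReal.ofReal (tR/2)) ^ (1/2:ℝ) := by
        refine ENNReal.rpow_le_rpow (add_le_add le_rfl ?_) (by norm_num)
        exact (hN1 n (le_trans (le_max_left N1 1) hn)).le
    _ = (ε' ^ 2) ^ (1/2:ℝ) := by
        rw [← ENNReal.ofReal_add (by linarith) (by linarith),
          show tR/2 + tR/2 = tR by ring, hofReal_t]
    _ = ε' := rpow_half_sq ε'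
    _ ≤ ε := min_le_left _ _
end
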